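/- arXiv:1504.01774 — 7 statements merged into one kernel-verified Lean document; each statement's English description precedes it below -/
import Mathlib

section
/- Let X and Y be metric spaces and f : X → Y a K-Lipschitz function. Then for every subset A of X and every k ≥ 0, the integral over Y (with respect to k-dimensional Hausdorff measure) of the counting function y ↦ #(f⁻¹(y) ∩ A) is at most K^k times the k-dimensional Hausdorff measure of A. In particular, if f is 1-Lipschitz then H^k(f(A)) ≤ H^k(A). -/
open MeasureTheory Set
open scoped ENNReal NNReal

open Filter EMetric in
private lemma aux_tsum_measure_inter_le {α ι : Type*} [MeasurableSpace α] (μ : Measure α)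
    [Countable ι] {B : ι → Set α} (hB : ∀ i, MeasurableSet (B i))
    (hd : Pairwise (Function.onFun Disjoint B)) (A : Set α) :
    ∑' i, μ (A ∩ B i) ≤ μ A := by
  classical
  rw [ENNReal.tsum_eq_iSup_sum]
  refine iSup_le fun s => ?_
  induction s using Finset.induction_on generalizing A with
  | empty => simp
  | @insert a s ha ih =>
    rw [Finset.sum_insert ha]
    have hsum : ∑ j ∈ s, μ (A ∩ B j) = ∑ j ∈ s, μ ((A \ B a) ∩ B j) := by
      refine Finset.sum_congr rfl fun j hj => ?_
      have hdisj : Disjoint (B j) (B a) := hd (fun h => ha (h ▸ hj))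
      congr 1
      ext x
      simp only [Set.mem_inter_iff, Set.mem_diff]
      exact ⟨fun ⟨hxA, hxB⟩ => ⟨⟨hxA, fun hxa => hdisj.le_bot ⟨hxB, hxa⟩⟩, hxB⟩,
        fun ⟨⟨hxA, _⟩, hxB⟩ => ⟨hxA, hxB⟩⟩
    calc μ (A ∩ B a) + ∑ j ∈ s, μ (A ∩ B j)
        = μ (A ∩ B a) + ∑ j ∈ s, μ ((A \ B a) ∩ B j) := by rw [hsum]
      _ ≤ μ (A ∩ B a) + μ (A \ B a) := add_le_add le_rfl (ih _)
      _ = μ A := measure_inter_add_diff A (hB a)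

/-- **Lipschitz maps and Hausdorff measure.**
If `f : X → Y` is `K`-Lipschitz, then for every `A ⊆ X` and every `k ≥ 0`, the integral over
`Y` (w.r.t. `k`-dimensional Hausdorff measure) of the counting function
`y ↦ #(f⁻¹(y) ∩ A)` is at most `K ^ k` times the `k`-dimensional Hausdorff measure of `A`.
In particular, if `f` is `1`-Lipschitz then `H^k(f(A)) ≤ H^k(A)`. -/
theorem lipschitz_counting_hausdorff
    {X Y : Type*} [MetricSpace X] [MeasurableSpace X] [BorelSpace X]
    [MetricSpace Y] [MeasurableSpace Y] [BorelSpace Y]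
    (K : ℝ≥0) (f : X → Y) (hf : LipschitzWith K f) (A : Set X) (k : ℝ) (hk : 0 ≤ k) :
    (∫⁻ y, ((f ⁻¹' {y} ∩ A).encard : ℝ≥0∞) ∂(μH[k]) ≤ (K : ℝ≥0∞) ^ k * μH[k] A) ∧
    (K = 1 → μH[k] (f '' A) ≤ μH[k] A) := by
  constructor
  · -- main inequality
    by_cases hfin : μH[k] A = ⊤
    · by_cases hKk : (K : ℝ≥0∞) ^ k = 0
      · -- then K = 0 and 0 < k
        have hK0' : K = 0 ∧ 0 < k := by
          rcases ENNReal.rpow_eq_zero_iff.mp hKk with ⟨h1, h2⟩ | ⟨h1, h2⟩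
          · exact ⟨by exact_mod_cast h1, h2⟩
          · exact absurd h1 ENNReal.coe_ne_top
        obtain ⟨hK0, hk0⟩ := hK0'
        rcases A.eq_empty_or_nonempty with rfl | ⟨x₀, hx₀⟩
        · simp
        · have hconst : ∀ x, f x = f x₀ := fun x => by
            have h := hf x x₀
            rw [hK0] at h
            simpa [edist_eq_zero] using h
          haveI := MeasureTheory.Measure.noAtoms_hausdorff Y hk0
          have hbound : ∀ y, ((f ⁻¹' {y} ∩ A).encard : ℝ≥0∞) ≤
              ({f x₀} : Set Y).indicator (fun _ => (⊤ : ℝ≥0∞)) y := by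
            intro y
            by_cases hy : y = f x₀
            · subst hy
              rw [Set.indicator_of_mem (Set.mem_singleton _)]
              exact le_top
            · have hempty : f ⁻¹' {y} ∩ A = ∅ := by
                ext x
                simp only [Set.mem_inter_iff, Set.mem_preimage, Set.mem_singleton_iff,
                  Set.mem_empty_iff_false, iff_false, not_and]
                intro hfx _
                exact hy (((hconst x).symm.trans hfx).symm)
              simp [hempty]
          calc ∫⁻ y, ((f ⁻¹' {y} ∩ A).encard : ℝ≥0∞) ∂μH[k]
              ≤ ∫⁻ y, ({f x₀} : Set Y).indicator (fun _ => (⊤ : ℝ≥0∞)) y ∂μH[k] :=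
                lintegral_mono hbound
            _ = 0 := by
                rw [lintegral_indicator (measurableSet_singleton _), setLIntegral_const]
                simp [measure_singleton]
            _ ≤ (K : ℝ≥0∞) ^ k * μH[k] A := zero_le
      · rw [hfin, ENNReal.mul_top hKk]
        exact le_top
    · -- main case : finite measure
      have key : ∀ m : ℕ, ∃ t : ℕ → Set X, (A ⊆ ⋃ n, t n) ∧
          ∀ n, EMetric.diam (t n) ≤ ((m : ℝ≥0∞) + 1)⁻¹ := by
        intro m
        by_contra hcon
        push_neg at hcon
        apply hfin
        rw [MeasureTheory.Measure.hausdorffMeasure_apply]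
        refine top_unique ?_
        have hrpos : (0 : ℝ≥0∞) < ((m : ℝ≥0∞) + 1)⁻¹ := by
          rw [ENNReal.inv_pos]
          exact ENNReal.add_ne_top.mpr ⟨ENNReal.natCast_ne_top m, ENNReal.one_ne_top⟩
        refine le_trans ?_ (le_iSup₂ (((m : ℝ≥0∞) + 1)⁻¹) hrpos)
        refine le_iInf fun u => le_iInf fun h1 => le_iInf fun h2 => ?_
        obtain ⟨n, hn⟩ := hcon u h1
        exact absurd (h2 n) (not_le.mpr hn)
      choose t ht1 ht2 using key
      set D : ℕ → ℕ → Set X := fun m => disjointed (fun n => closure (t m n)) with hDdef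
      have hDmeas : ∀ m n, MeasurableSet (D m n) := fun m n =>
        MeasurableSet.disjointed (fun j => isClosed_closure.measurableSet) n
      have hDdisj : ∀ m, Pairwise (Function.onFun Disjoint (D m)) := fun m =>
        disjoint_disjointed _
      have hDsub : ∀ m n, D m n ⊆ closure (t m n) := fun m n => disjointed_subset _ n
      have hDdiam : ∀ m n, EMetric.diam (D m n) ≤ ((m : ℝ≥0∞) + 1)⁻¹ := fun m n =>
        le_trans (EMetric.diam_mono (hDsub m n)) (by rw [EMetric.diam_closure]; exact ht2 m n)
      have hDcover : ∀ m, A ⊆ ⋃ n, D m n := fun m => by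
        rw [hDdef]
        rw [iUnion_disjointed]
        exact (ht1 m).trans (Set.iUnion_mono fun n => subset_closure)
      have haex : ∀ x ∈ A, ∀ m, ∃ n, x ∈ D m n := fun x hx m => Set.mem_iUnion.mp (hDcover m hx)
      classical
      set a : X → ℕ → ℕ := fun x m => if h : ∃ n, x ∈ D m n then h.choose else 0 with hadef
      have ha : ∀ x ∈ A, ∀ m, x ∈ D m (a x m) := by
        intro x hx m
        have h := haex x hx m
        rw [hadef]
        simp only [dif_pos h]
        exact h.choose_spec
      set B : (m : ℕ) → (Fin m → ℕ) → Set X := fun m p => ⋂ l : Fin m, D l (p l) with hBdef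
      have hBmeas : ∀ m p, MeasurableSet (B m p) := fun m p =>
        MeasurableSet.iInter fun l => hDmeas l (p l)
      have hBdisj : ∀ m, Pairwise (Function.onFun Disjoint (B m)) := by
        intro m p q hpq
        obtain ⟨l, hl⟩ := Function.ne_iff.mp hpq
        exact Disjoint.mono (Set.iInter_subset _ l) (Set.iInter_subset _ l) (hDdisj l hl)
      choose T hT1 hT2 hT3 using fun (m : ℕ) (p : Fin m → ℕ) =>
        MeasureTheory.exists_measurable_superset (μH[k] : Measure Y) (f '' (A ∩ B m p))
      set c : ℕ → Y → ℝ≥0∞ := fun m y => ∑' p : Fin m → ℕ, (T m p).indicator 1 y with hcdef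
      have hcmeas : ∀ m, Measurable (c m) := fun m =>
        Measurable.ennreal_tsum fun p => measurable_one.indicator (hT2 m p)
      have claim : ∀ y (F : Finset X), ↑F ⊆ f ⁻¹' {y} ∩ A →
          (F.card : ℝ≥0∞) ≤ Filter.liminf (fun m => c m y) Filter.atTop := by
        intro y F hF
        have hMex : ∃ M : ℕ, ∀ x ∈ F, ∀ x' ∈ F, x ≠ x' → ((M : ℝ≥0∞))⁻¹ < edist x x' := by
          set P : Finset (X × X) := (F ×ˢ F).filter (fun q => q.1 ≠ q.2) with hP
          have hb0 : (0 : ℝ≥0∞) < P.inf fun q => edist q.1 q.2 := by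
            rw [Finset.lt_inf_iff (by simp : (0 : ℝ≥0∞) < ⊤)]
            intro q hq
            simp only [hP, Finset.mem_filter] at hq
            exact edist_pos.mpr hq.2
          obtain ⟨M, hM⟩ := ENNReal.exists_inv_nat_lt hb0.ne'
          refine ⟨M, fun x hx x' hx' hne => ?_⟩
          have hmem : (x, x') ∈ P := by
            simp only [hP, Finset.mem_filter, Finset.mem_product]
            exact ⟨⟨hx, hx'⟩, hne⟩
          exact lt_of_lt_of_le hM (Finset.inf_le hmem)
        obtain ⟨M, hM⟩ := hMex
        refine Filter.le_liminf_of_le (by isBoundedDefault) ?_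
        filter_upwards [Filter.eventually_ge_atTop (M + 1)] with m hm
        have hMm : M < m := hm
        have hxA : ∀ x ∈ F, x ∈ A := fun x hx => (hF hx).2
        have hmemT : ∀ x ∈ F, y ∈ T m (fun l : Fin m => a x l) := by
          intro x hx
          refine hT1 m _ ⟨x, ⟨hxA x hx, Set.mem_iInter.mpr fun l => ha x (hxA x hx) l⟩, ?_⟩
          exact (hF hx).1
        have hinj : Set.InjOn (fun x => (fun l : Fin m => a x l)) ↑F := by
          intro x hx x' hx' he
          by_contra hne
          have h1 : x ∈ D M (a x M) := ha x (hxA x hx) M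
          have h2 : x' ∈ D M (a x' M) := ha x' (hxA x' hx') M
          have heq : a x M = a x' M := congrFun he ⟨M, hMm⟩
          have hle : edist x x' ≤ ((M : ℝ≥0∞) + 1)⁻¹ :=
            le_trans (EMetric.edist_le_diam_of_mem h1 (heq ▸ h2)) (hDdiam M (a x M))
          have hle2 : ((M : ℝ≥0∞) + 1)⁻¹ ≤ ((M : ℝ≥0∞))⁻¹ :=
            ENNReal.inv_le_inv' (le_add_right le_rfl)
          exact absurd (hM x hx x' hx' hne) (not_lt.mpr (hle.trans hle2))
        calc (F.card : ℝ≥0∞)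
            = ((F.image (fun x => (fun l : Fin m => a x l))).card : ℝ≥0∞) := by
              rw [Finset.card_image_of_injOn hinj]
          _ = ∑ p ∈ F.image (fun x => (fun l : Fin m => a x l)), (1 : ℝ≥0∞) := by simp
          _ = ∑ p ∈ F.image (fun x => (fun l : Fin m => a x l)), (T m p).indicator 1 y := by
              refine Finset.sum_congr rfl fun p hp => ?_
              obtain ⟨x, hx, rfl⟩ := Finset.mem_image.mp hp
              rw [Set.indicator_of_mem (hmemT x hx)]
              rfl
          _ ≤ c m y := ENNReal.sum_le_tsum _
      have hpt : ∀ y, ((f ⁻¹' {y} ∩ A).encard : ℝ≥0∞) ≤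
          Filter.liminf (fun m => c m y) Filter.atTop := by
        intro y
        rcases (f ⁻¹' {y} ∩ A).finite_or_infinite with hfin' | hinf
        · rw [hfin'.encard_eq_coe_toFinset_card, ENat.toENNReal_coe]
          exact claim y hfin'.toFinset (by simp)
        · rw [Set.encard_eq_top hinf, ENat.toENNReal_top, ← ENNReal.iSup_natCast]
          refine iSup_le fun n => ?_
          obtain ⟨s, hs, hsfin, hcard⟩ := hinf.exists_subset_ncard_eq n
          have h := claim y hsfin.toFinset (by simpa using hs)
          have hc2 : hsfin.toFinset.card = n := by
            rw [← Set.ncard_eq_toFinset_card s hsfin, hcard]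
          rwa [hc2] at h
      have hbound : ∀ m, ∫⁻ y, c m y ∂μH[k] ≤ (K : ℝ≥0∞) ^ k * μH[k] A := by
        intro m
        have heq : ∫⁻ y, c m y ∂μH[k] = ∑' p : Fin m → ℕ, μH[k] (T m p) := by
          rw [hcdef]
          rw [MeasureTheory.lintegral_tsum fun p =>
            (measurable_one.indicator (hT2 m p)).aemeasurable]
          exact tsum_congr fun p => lintegral_indicator_one (hT2 m p)
        rw [heq]
        calc ∑' p : Fin m → ℕ, μH[k] (T m p)
            = ∑' p : Fin m → ℕ, μH[k] (f '' (A ∩ B m p)) := tsum_congr fun p => hT3 m p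
          _ ≤ ∑' p : Fin m → ℕ, (K : ℝ≥0∞) ^ k * μH[k] (A ∩ B m p) :=
              ENNReal.tsum_le_tsum fun p => hf.hausdorffMeasure_image_le hk _
          _ = (K : ℝ≥0∞) ^ k * ∑' p : Fin m → ℕ, μH[k] (A ∩ B m p) := ENNReal.tsum_mul_left
          _ ≤ (K : ℝ≥0∞) ^ k * μH[k] A := by
              gcongr
              exact aux_tsum_measure_inter_le _ (hBmeas m) (hBdisj m) A
      calc ∫⁻ y, ((f ⁻¹' {y} ∩ A).encard : ℝ≥0∞) ∂μH[k]
          ≤ ∫⁻ y, Filter.liminf (fun m => c m y) Filter.atTop ∂μH[k] := lintegral_mono hpt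
        _ ≤ Filter.liminf (fun m => ∫⁻ y, c m y ∂μH[k]) Filter.atTop :=
            lintegral_liminf_le hcmeas
        _ ≤ (K : ℝ≥0∞) ^ k * μH[k] A := by
            refine le_trans (Filter.liminf_le_liminf (Filter.Eventually.of_forall hbound)) ?_
            simp [Filter.liminf_const]
  · intro hK1
    have := hf.hausdorffMeasure_image_le hk A
    rw [hK1] at this
    simpa using this
end

section
/- Fix ε ∈ (0,1) and two finite-dimensional subspaces V₁, V₂ of a Hilbert space L. There exists a finite-dimensional subspace V of L such that V ⊆ {x : dist(x, Vᵢ) ≤ ε‖x‖} for i = 1, 2, and for all w ∈ L, dist(w, V) ≤ (3/ε)·max(dist(w, V₁), dist(w, V₂)). -/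
/-!
With `Pᵢ` the orthogonal projection onto `Vᵢ`, the operator `S x = P₁ (x - P₂ x)` on `V₁` is
positive with quadratic form `⟪S x, x⟫ = dist(x, V₂)²`; take for `V` the span of its eigenvectors
with eigenvalue `≤ ε²`.
Points of `V` are then `ε`-close to `V₂`. For `w ∈ L` with `d = max(dist(w, V₁), dist(w, V₂))`,
the projection `v = P₁ w` has `dist(v, V₂) ≤ 2d`; as the eigenvalues off `V` exceed `ε²`, the
component of `v` orthogonal to `V` has norm `≤ 2d/ε`, so `dist(w, V) ≤ d + 2d/ε ≤ 3d/ε`.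
-/

open Metric
open scoped RealInnerProductSpace

theorem Submodule.infDist_eq_norm_sub_starProjection {E : Type*} [NormedAddCommGroup E]
    [InnerProductSpace ℝ E] (K : Submodule ℝ E) [K.HasOrthogonalProjection] (w : E) :
    infDist w (K : Set E) = ‖w - K.starProjection w‖ := by
  refine le_antisymm ?_ ?_
  · simpa [dist_eq_norm] using infDist_le_dist_of_mem (K.starProjection_apply_mem w)
  · simp_rw [infDist_eq_iInf, dist_eq_norm, K.starProjection_minimal]
    exact le_rfl

namespace OrthonormalBasis

variable {ι E : Type*} [Fintype ι] [NormedAddCommGroup E] [InnerProductSpace ℝ E]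
  {S : E →ₗ[ℝ] E} (b : OrthonormalBasis ι ℝ E) {μ : ι → ℝ}

theorem inner_map_self_eq_sum_of_apply_eq_smul (hb : ∀ i, S (b i) = μ i • b i) (x : E) :
    ⟪S x, x⟫ = ∑ i, μ i * ⟪b i, x⟫ ^ 2 := by
  have hSx : S x = ∑ i, (μ i * ⟪b i, x⟫) • b i := by
    conv_lhs => rw [← b.sum_repr' x]
    simp only [map_sum, map_smul, hb, smul_smul, mul_comm]
  simp only [hSx, sum_inner, real_inner_smul_left]
  exact Finset.sum_congr rfl fun i _ => by ring

/-- `W` is the span of the eigenvectors with eigenvalue `≤ δ`. -/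
theorem exists_spectral_submodule_of_apply_eq_smul (hb : ∀ i, S (b i) = μ i • b i)
    (hμ : ∀ i, 0 ≤ μ i) (δ : ℝ) :
    ∃ W : Submodule ℝ E, (∀ x ∈ W, ⟪S x, x⟫ ≤ δ * ‖x‖ ^ 2) ∧
      ∀ x, ∃ y ∈ W, δ * ‖x - y‖ ^ 2 ≤ ⟪S x, x⟫ := by
  classical
  set I := Finset.univ.filter fun i => μ i ≤ δ
  refine ⟨Submodule.span ℝ (b '' I), fun x hx => ?_, fun x => ?_⟩
  · have hcoord : ∀ j ∉ I, ⟪b j, x⟫ = 0 := by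
      intro j hj
      refine (Submodule.isOrtho_span.mpr ?_).inner_eq (Submodule.mem_span_singleton_self (b j)) hx
      rintro _ rfl _ ⟨i, hi, rfl⟩
      exact b.orthonormal.inner_eq_zero (ne_of_mem_of_not_mem hi hj).symm
    rw [b.inner_map_self_eq_sum_of_apply_eq_smul hb, ← b.sum_sq_inner_right, Finset.mul_sum]
    refine Finset.sum_le_sum fun i _ => ?_
    by_cases hi : i ∈ I
    · exact mul_le_mul_of_nonneg_right (Finset.mem_filter.mp hi).2 (sq_nonneg _)
    · simp [hcoord i hi]
  · refine ⟨∑ i ∈ I, ⟪b i, x⟫ • b i,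
      Submodule.sum_mem _ fun i hi => Submodule.smul_mem _ _ (Submodule.subset_span ⟨i, hi, rfl⟩),
      ?_⟩
    rw [b.inner_map_self_eq_sum_of_apply_eq_smul hb, ← b.sum_sq_inner_right, Finset.mul_sum]
    refine Finset.sum_le_sum fun i _ => ?_
    by_cases hi : i ∈ I
    · rw [inner_sub_right, b.orthonormal.inner_right_sum _ hi, sub_self]
      simpa using mul_nonneg (hμ i) (sq_nonneg ⟪b i, x⟫)
    · have hδ : δ < μ i := by simpa [I] using hi
      rw [inner_sub_right, inner_sum, Finset.sum_eq_zero, sub_zero]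
      · exact mul_le_mul_of_nonneg_right hδ.le (sq_nonneg _)
      · intro j hj
        rw [inner_smul_right, b.orthonormal.inner_eq_zero (ne_of_mem_of_not_mem hj hi).symm,
          mul_zero]

end OrthonormalBasis

section Compression

variable {L : Type*} [NormedAddCommGroup L] [InnerProductSpace ℝ L]

theorem Submodule.isPositive_starProjection (U : Submodule ℝ L) [U.HasOrthogonalProjection] :
    U.starProjection.IsPositive :=
  (ContinuousLinearMap.isPositive_iff _).mpr
    ⟨U.starProjection_isSymmetric, U.re_inner_starProjection_nonneg⟩

theorem Submodule.inner_starProjection_orthogonal_self_eq_infDist_sq (U : Submodule ℝ L)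
    [U.HasOrthogonalProjection] (x : L) :
    ⟪Uᗮ.starProjection x, x⟫ = infDist x (U : Set L) ^ 2 := by
  have h := Uᗮ.re_inner_starProjection_eq_normSq x
  simp only [RCLike.re_to_real, Submodule.coe_norm] at h
  rw [h, ← Submodule.starProjection_apply, U.starProjection_orthogonal_val,
    U.infDist_eq_norm_sub_starProjection]

theorem exists_submodule_infDist_le_and_le_infDist (V₁ V₂ : Submodule ℝ L)
    [FiniteDimensional ℝ V₁] [V₂.HasOrthogonalProjection] {ε : ℝ} (hε : 0 ≤ ε) :
    ∃ W : Submodule ℝ V₁, (∀ x ∈ W, infDist (x : L) V₂ ≤ ε * ‖x‖) ∧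
      ∀ x : V₁, ∃ y ∈ W, ε * ‖x - y‖ ≤ infDist (x : L) V₂ := by
  set S := V₁.orthogonalProjectionOnto ∘L V₂ᗮ.starProjection ∘L V₁.subtypeL
  have hS : S.toLinearMap.IsPositive :=
    (V₂ᗮ.isPositive_starProjection.orthogonalProjectionOnto_comp V₁).toLinearMap
  have hSx (x : V₁) : ⟪S x, x⟫ = infDist (x : L) V₂ ^ 2 := by
    simp only [S, ContinuousLinearMap.comp_apply, Submodule.subtypeL_apply,
      Submodule.inner_orthogonalProjectionOnto_eq_of_mem_right]
    exact V₂.inner_starProjection_orthogonal_self_eq_infDist_sq x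
  have hbasis := hS.isSymmetric.apply_eigenvectorBasis rfl
  simp only [RCLike.ofReal_real_eq_id, id] at hbasis
  obtain ⟨W, hW, hcut⟩ := OrthonormalBasis.exists_spectral_submodule_of_apply_eq_smul _ hbasis
    (hS.nonneg_eigenvalues rfl) (ε ^ 2)
  refine ⟨W, fun x hx => ?_, fun x => ?_⟩
  · rw [← sq_le_sq₀ infDist_nonneg (by positivity), mul_pow, ← hSx]
    exact hW x hx
  · obtain ⟨y, hy, h⟩ := hcut x
    refine ⟨y, hy, ?_⟩
    rw [← sq_le_sq₀ (by positivity) infDist_nonneg, mul_pow, ← hSx]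
    exact h

end Compression

theorem exists_epsilon_intersection_general
    {L : Type*} [NormedAddCommGroup L] [InnerProductSpace ℝ L]
    (ε : ℝ) (hε : ε ∈ Set.Ioo (0 : ℝ) 1)
    (V₁ V₂ : Submodule ℝ L) (h₁ : FiniteDimensional ℝ V₁) (h₂ : FiniteDimensional ℝ V₂) :
    ∃ V : Submodule ℝ L, FiniteDimensional ℝ V ∧
      (∀ x ∈ V, infDist x (V₁ : Set L) ≤ ε * ‖x‖) ∧
      (∀ x ∈ V, infDist x (V₂ : Set L) ≤ ε * ‖x‖) ∧
      ∀ w : L, infDist w (V : Set L) ≤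
        (3 / ε) * max (infDist w (V₁ : Set L)) (infDist w (V₂ : Set L)) := by
  obtain ⟨hε0, hε1⟩ := hε
  have := FiniteDimensional.complete ℝ V₂
  obtain ⟨W, hW, hcut⟩ := exists_submodule_infDist_le_and_le_infDist V₁ V₂ hε0.le
  refine ⟨W.map V₁.subtype, inferInstance, ?_, ?_, fun w => ?_⟩
  · rintro _ ⟨x, -, rfl⟩
    exact (infDist_zero_of_mem x.2).trans_le (by positivity)
  · rintro _ ⟨x, hx, rfl⟩
    exact hW x hx
  set d := max (infDist w (V₁ : Set L)) (infDist w (V₂ : Set L))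
  set v := V₁.orthogonalProjectionOnto w
  have hwv : dist w v ≤ d := by
    rw [dist_eq_norm, ← Submodule.starProjection_apply, ← V₁.infDist_eq_norm_sub_starProjection]
    exact le_max_left _ _
  have hvV₂ : infDist (v : L) V₂ ≤ 2 * d := by
    calc infDist (v : L) V₂ ≤ infDist w V₂ + dist (v : L) w := infDist_le_infDist_add_dist
      _ ≤ d + d := add_le_add (le_max_right _ _) (dist_comm w (v : L) ▸ hwv)
      _ = 2 * d := by ring
  obtain ⟨y, hy, hvy⟩ := hcut v
  have hvy' : dist (v : L) y ≤ 2 * d / ε := by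
    rw [le_div_iff₀ hε0, mul_comm, ← Subtype.dist_eq, dist_eq_norm]
    exact hvy.trans hvV₂
  have hd : 0 ≤ d := infDist_nonneg.trans (le_max_left _ _)
  calc infDist w (W.map V₁.subtype : Set L)
      ≤ dist w y := infDist_le_dist_of_mem ⟨y, hy, rfl⟩
    _ ≤ dist w v + dist (v : L) y := dist_triangle _ _ _
    _ ≤ d / ε + 2 * d / ε := add_le_add (hwv.trans (le_div_self hd hε0 hε1.le)) hvy'
    _ = 3 / ε * d := by ring

/-- **ε-intersections of finite-dimensional subspaces of a Hilbert space.**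
Given `ε ∈ (0,1)` and finite-dimensional subspaces `V₁, V₂` of a Hilbert space `L`, there is a
finite-dimensional subspace `V` contained in the projective `ε`-thickening of each `Vᵢ`, such
that `dist(w, V) ≤ (3/ε) · max(dist(w, V₁), dist(w, V₂))` for every `w ∈ L`. -/
theorem exists_epsilon_intersection
    {L : Type*} [NormedAddCommGroup L] [InnerProductSpace ℝ L] [CompleteSpace L]
    (ε : ℝ) (hε : ε ∈ Set.Ioo (0 : ℝ) 1)
    (V₁ V₂ : Submodule ℝ L) (h₁ : FiniteDimensional ℝ V₁) (h₂ : FiniteDimensional ℝ V₂) :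
    ∃ V : Submodule ℝ L, FiniteDimensional ℝ V ∧
      (∀ x ∈ V, infDist x (V₁ : Set L) ≤ ε * ‖x‖) ∧
      (∀ x ∈ V, infDist x (V₂ : Set L) ≤ ε * ‖x‖) ∧
      ∀ w : L, infDist w (V : Set L) ≤
        (3 / ε) * max (infDist w (V₁ : Set L)) (infDist w (V₂ : Set L)) :=
  exists_epsilon_intersection_general ε hε V₁ V₂ h₁ h₂
end

section
/- Let μ₁, μ₂ be two σ-finite measures on a measurable space X and let T₁, T₂ : X → G_k(H) be measurable functions into the Grassmannian of k-dimensional subspaces of a separable Hilbert space H. Suppose that for every k-dimensional subspace V of H and every measurable A ⊆ X, ∫_A det(π_V restricted to T₁(x)) dμ₁(x) = ∫_A det(π_V restricted to T₂(x)) dμ₂(x). Then μ₁ = μ₂ and μ₁({x : T₁(x) ≠ T₂(x)}) = 0. -/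
open MeasureTheory Module Set
open scoped ENNReal RealInnerProductSpace

noncomputable section

/-- The Grassmannian of `k`-dimensional subspaces of a real inner product space. -/
structure Grassmannian (k : ℕ) (H : Type*) [NormedAddCommGroup H]
    [InnerProductSpace ℝ H] where
  toSubmodule : Submodule ℝ H
  fin : FiniteDimensional ℝ toSubmodule
  rank : Module.finrank ℝ toSubmodule = k

variable {H : Type*} [NormedAddCommGroup H] [InnerProductSpace ℝ H]

/-- Orthogonal projection onto an element of the Grassmannian, as a map `H → H`. -/
def Grassmannian.proj {k : ℕ} (V : Grassmannian k H) : H →L[ℝ] H :=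
  letI := V.fin
  V.toSubmodule.subtypeL.comp (Submodule.orthogonalProjectionOnto V.toSubmodule)

/-- The Borel measurable structure on the Grassmannian, induced by the map sending a
subspace to the orthogonal projection onto it. -/
instance {k : ℕ} : MeasurableSpace (Grassmannian k H) :=
  MeasurableSpace.comap (fun V : Grassmannian k H => V.proj) (borel (H →L[ℝ] H))

/-- The metric determinant of the restriction of a bounded linear map `L` to a
finite-dimensional subspace `W`: the square root of the Gram determinant of the images of
an orthonormal basis of `W`. -/
def mdet {H₁ H₂ : Type*} [NormedAddCommGroup H₁] [InnerProductSpace ℝ H₁]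
    [NormedAddCommGroup H₂] [InnerProductSpace ℝ H₂]
    {k : ℕ} (L : H₁ →L[ℝ] H₂) (W : Grassmannian k H₁) : ℝ :=
  letI := W.fin
  Real.sqrt (Matrix.det (Matrix.of fun i j : Fin (Module.finrank ℝ W.toSubmodule) =>
    ⟪L ((stdOrthonormalBasis ℝ W.toSubmodule) i : H₁),
      L ((stdOrthonormalBasis ℝ W.toSubmodule) j : H₁)⟫))

namespace TPU

variable {H : Type*} [NormedAddCommGroup H] [InnerProductSpace ℝ H] {k : ℕ}

lemma Grassmannian.ext' {V W : Grassmannian k H} (h : V.toSubmodule = W.toSubmodule) :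
    V = W := by
  cases V; cases W; cases h; rfl

section proj
variable [CompleteSpace H]

lemma proj_apply (V : Grassmannian k H) (x : H) :
    V.proj x = (letI := V.fin; (Submodule.orthogonalProjectionOnto V.toSubmodule x : H)) := rfl

lemma proj_mem (V : Grassmannian k H) (x : H) : V.proj x ∈ V.toSubmodule := by
  letI := V.fin
  exact (Submodule.orthogonalProjectionOnto V.toSubmodule x).2

lemma proj_eq_self (V : Grassmannian k H) {x : H} (hx : x ∈ V.toSubmodule) :
    V.proj x = x := by
  letI := V.fin
  exact (Submodule.starProjection_eq_self_iff (K := V.toSubmodule)).2 hx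

lemma inner_proj_proj (V : Grassmannian k H) (x y : H) :
    ⟪V.proj x, V.proj y⟫ = ⟪x, V.proj y⟫ := by
  letI := V.fin
  have horth : x - V.proj x ∈ V.toSubmoduleᗮ :=
    Submodule.sub_starProjection_mem_orthogonal (K := V.toSubmodule) x
  have h0 : ⟪x - V.proj x, V.proj y⟫ = 0 := by
    rw [real_inner_comm]
    exact (Submodule.mem_orthogonal _ _).1 horth _ (proj_mem V y)
  rw [inner_sub_left] at h0
  linarith

lemma norm_proj_le (V : Grassmannian k H) (x : H) : ‖V.proj x‖ ≤ ‖x‖ := by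
  have h := inner_proj_proj V x x
  rw [real_inner_self_eq_norm_sq] at h
  rcases eq_or_lt_of_le (norm_nonneg (V.proj x)) with h0 | h0
  · rw [← h0]; exact norm_nonneg x
  · have := real_inner_le_norm x (V.proj x)
    nlinarith
lemma proj_eq_self_of_norm_eq (V : Grassmannian k H) {x : H}
    (hx : ‖V.proj x‖ = ‖x‖) : V.proj x = x := by
  have h : ⟪x, V.proj x⟫ = ‖V.proj x‖ ^ 2 := by
    rw [← real_inner_self_eq_norm_sq, inner_proj_proj V x x]
  have : ‖x - V.proj x‖ ^ 2 = 0 := by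
    rw [norm_sub_sq_real, h, hx]; ring
  have h2 : ‖x - V.proj x‖ = 0 := by
    have hn := norm_nonneg (x - V.proj x)
    nlinarith
  rw [norm_eq_zero, sub_eq_zero] at h2
  exact h2.symm

end proj

/-- Gram matrix of a finite family of vectors. -/
def gram {n : ℕ} (v : Fin n → H) : Matrix (Fin n) (Fin n) ℝ :=
  Matrix.of fun i j => ⟪v i, v j⟫

lemma gram_orthonormal {n : ℕ} {v : Fin n → H} (hv : Orthonormal ℝ v) :
    gram v = 1 := by
  ext i j
  rw [gram, Matrix.of_apply, Matrix.one_apply]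
  rcases eq_or_ne i j with rfl | hij
  · simp [real_inner_self_eq_norm_sq, hv.1 i]
  · simp [hij, hv.2 hij]

lemma gram_posSemidef {n : ℕ} (v : Fin n → H) : (gram v).PosSemidef := by
  rw [Matrix.posSemidef_iff_dotProduct_mulVec]
  constructor
  · ext i j
    simp [Matrix.conjTranspose_apply, gram, real_inner_comm]
  · intro x
    have key : dotProduct (star x) ((gram v).mulVec x)
        = ⟪∑ i, x i • v i, ∑ j, x j • v j⟫ := by
      simp only [dotProduct, Matrix.mulVec, gram, Matrix.of_apply, star,
        Pi.star_apply, star_trivial]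
      rw [sum_inner]
      refine Finset.sum_congr rfl fun i _ => ?_
      rw [inner_sum, Finset.mul_sum]
      refine Finset.sum_congr rfl fun j _ => ?_
      rw [real_inner_smul_left, real_inner_smul_right]
      ring
    rw [key]
    exact real_inner_self_nonneg

lemma gram_det_nonneg {n : ℕ} (v : Fin n → H) : 0 ≤ (gram v).det := by
  have h := (gram_posSemidef v).isHermitian.det_eq_prod_eigenvalues
  rw [h]
  exact Finset.prod_nonneg fun i _ => (gram_posSemidef v).eigenvalues_nonneg i

lemma gram_basis_change {n m : ℕ} (L : H →L[ℝ] H) (v : Fin m → H)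
    (C : Matrix (Fin m) (Fin n) ℝ) :
    gram (fun j => L (∑ a, C a j • v a))
      = Matrix.transpose C * gram (fun a => L (v a)) * C := by
  ext i j
  simp only [gram, Matrix.of_apply, Matrix.mul_apply, Matrix.transpose_apply]
  have hmap : ∀ jj, L (∑ a, C a jj • v a) = ∑ a, C a jj • L (v a) := fun jj => by
    rw [map_sum]; exact Finset.sum_congr rfl fun a _ => L.map_smul _ _
  rw [hmap, hmap, sum_inner]
  simp only [inner_sum, real_inner_smul_left, real_inner_smul_right, Finset.sum_mul]
  rw [Finset.sum_comm]
  exact Finset.sum_congr rfl fun b _ => Finset.sum_congr rfl fun a _ => by ring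

end TPU
namespace TPU

variable {H : Type*} [NormedAddCommGroup H] [InnerProductSpace ℝ H] {k : ℕ}

instance (W : Grassmannian k H) : FiniteDimensional ℝ W.toSubmodule := W.fin

lemma trace_eq_sum_eigenvalues {n : ℕ} {M : Matrix (Fin n) (Fin n) ℝ}
    (hM : M.IsHermitian) : M.trace = ∑ i, hM.eigenvalues i := by
  nth_rewrite 1 [hM.spectral_theorem]
  rw [Unitary.conjStarAlgAut_apply]
  rw [Matrix.trace_mul_cycle]
  rw [show (star (Matrix.IsHermitian.eigenvectorUnitary hM : Matrix (Fin n) (Fin n) ℝ)) *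
      (Matrix.IsHermitian.eigenvectorUnitary hM : Matrix (Fin n) (Fin n) ℝ) = 1 from
    Matrix.mem_unitaryGroup_iff'.mp (Matrix.IsHermitian.eigenvectorUnitary hM).2]
  rw [one_mul, Matrix.trace_diagonal]
  simp

lemma prod_le_one_of_sum_le {n : ℕ} {lam : Fin n → ℝ} (h0 : ∀ i, 0 ≤ lam i)
    (hs : ∑ i, lam i ≤ n) : ∏ i, lam i ≤ 1 := by
  rcases Nat.eq_zero_or_pos n with rfl | hn
  · simp
  have hn' : (0:ℝ) < n := by exact_mod_cast hn
  have hgm := Real.geom_mean_le_arith_mean_weighted Finset.univ (fun _ => (n:ℝ)⁻¹) lam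
    (fun i _ => by positivity)
    (by simp [Finset.sum_const, Finset.card_univ]; field_simp)
    (fun i _ => h0 i)
  have hP : (∏ i, lam i ^ ((n:ℝ)⁻¹)) ^ (n:ℕ) = ∏ i, lam i := by
    rw [← Finset.prod_pow]
    refine Finset.prod_congr rfl fun i _ => ?_
    rw [← Real.rpow_natCast (lam i ^ ((n:ℝ)⁻¹)) n, ← Real.rpow_mul (h0 i)]
    rw [inv_mul_cancel₀ (by exact_mod_cast hn.ne')]
    exact Real.rpow_one _
  have harith : ∑ i, (n:ℝ)⁻¹ * lam i ≤ 1 := by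
    rw [← Finset.mul_sum]
    rw [inv_mul_le_iff₀ hn', mul_one]
    exact hs
  have hPnn : 0 ≤ ∏ i, lam i ^ ((n:ℝ)⁻¹) :=
    Finset.prod_nonneg fun i _ => Real.rpow_nonneg (h0 i) _
  rw [← hP]
  exact pow_le_one₀ hPnn (hgm.trans harith)

lemma prod_lt_one_of_sum_lt {n : ℕ} {lam : Fin n → ℝ} (h0 : ∀ i, 0 ≤ lam i)
    (hs : ∑ i, lam i < n) : ∏ i, lam i < 1 := by
  have hn : 0 < n := by
    by_contra hc
    push_neg at hc
    interval_cases n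
    · simp at hs
  have hn' : (0:ℝ) < n := by exact_mod_cast hn
  have hgm := Real.geom_mean_le_arith_mean_weighted Finset.univ (fun _ => (n:ℝ)⁻¹) lam
    (fun i _ => by positivity)
    (by simp [Finset.sum_const, Finset.card_univ]; field_simp)
    (fun i _ => h0 i)
  have hP : (∏ i, lam i ^ ((n:ℝ)⁻¹)) ^ (n:ℕ) = ∏ i, lam i := by
    rw [← Finset.prod_pow]
    refine Finset.prod_congr rfl fun i _ => ?_
    rw [← Real.rpow_natCast (lam i ^ ((n:ℝ)⁻¹)) n, ← Real.rpow_mul (h0 i)]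
    rw [inv_mul_cancel₀ (by exact_mod_cast hn.ne')]
    exact Real.rpow_one _
  have harith : ∑ i, (n:ℝ)⁻¹ * lam i < 1 := by
    rw [← Finset.mul_sum]
    rw [inv_mul_lt_one₀ hn']
    simpa using hs
  have hPnn : 0 ≤ ∏ i, lam i ^ ((n:ℝ)⁻¹) :=
    Finset.prod_nonneg fun i _ => Real.rpow_nonneg (h0 i) _
  rw [← hP]
  exact pow_lt_one₀ hPnn (lt_of_le_of_lt hgm harith) hn.ne'

section core
variable [CompleteSpace H]

lemma det_gram_proj (V : Grassmannian k H) {n : ℕ} {v : Fin n → H}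
    (hv : Orthonormal ℝ v) :
    (gram fun i => V.proj (v i)).det ≤ 1 ∧
      ((gram fun i => V.proj (v i)).det = 1 → ∀ i, V.proj (v i) = v i) := by
  set M := gram fun i => V.proj (v i) with hM
  have hPSD : M.PosSemidef := gram_posSemidef _
  have hH : M.IsHermitian := hPSD.1
  have h0 : ∀ i, 0 ≤ hH.eigenvalues i := fun i => hPSD.eigenvalues_nonneg i
  have hdet : M.det = ∏ i, hH.eigenvalues i := by
    simpa using hH.det_eq_prod_eigenvalues
  have htr2 : M.trace = ∑ i, ‖V.proj (v i)‖ ^ 2 := by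
    rw [Matrix.trace]
    refine Finset.sum_congr rfl fun i _ => ?_
    simp only [Matrix.diag_apply, hM, gram, Matrix.of_apply]
    rw [real_inner_self_eq_norm_sq]
  have hterm : ∀ i, ‖V.proj (v i)‖ ^ 2 ≤ 1 := fun i => by
    have h1 : ‖V.proj (v i)‖ ≤ 1 := by
      have := norm_proj_le V (v i)
      rwa [hv.1 i] at this
    nlinarith [norm_nonneg (V.proj (v i))]
  have htrn : M.trace ≤ (n : ℝ) := by
    rw [htr2]
    calc ∑ i, ‖V.proj (v i)‖ ^ 2 ≤ ∑ _i : Fin n, (1:ℝ) :=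
          Finset.sum_le_sum fun i _ => hterm i
      _ = n := by simp
  have hsum : ∑ i, hH.eigenvalues i ≤ (n:ℝ) := by
    rw [← trace_eq_sum_eigenvalues hH]; exact htrn
  constructor
  · rw [hdet]; exact prod_le_one_of_sum_le h0 hsum
  · intro hdet1 i
    have hsum_eq : M.trace = (n:ℝ) := by
      by_contra hne
      have hlt : ∑ j, hH.eigenvalues j < n :=
        lt_of_le_of_ne hsum (fun hc => hne (by rw [trace_eq_sum_eigenvalues hH, hc]))
      have := prod_lt_one_of_sum_lt h0 hlt
      rw [← hdet, hdet1] at this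
      exact lt_irrefl _ this
    have hone : ‖V.proj (v i)‖ ^ 2 = 1 := by
      by_contra hne
      have hlt : ‖V.proj (v i)‖ ^ 2 < 1 := lt_of_le_of_ne (hterm i) hne
      have : ∑ j, ‖V.proj (v j)‖ ^ 2 < ∑ _j : Fin n, (1:ℝ) :=
        Finset.sum_lt_sum (fun j _ => hterm j) ⟨i, Finset.mem_univ i, hlt⟩
      rw [← htr2, hsum_eq] at this
      simp at this
    apply proj_eq_self_of_norm_eq
    rw [hv.1 i]
    nlinarith [norm_nonneg (V.proj (v i))]

/-- The coercion to `H` of the standard orthonormal basis of `W`, reindexed by `Fin k`. -/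
def obasis (W : Grassmannian k H) : Fin k → H :=
  fun a => ((stdOrthonormalBasis ℝ W.toSubmodule) ((finCongr W.rank).symm a) : H)

lemma obasis_mem (W : Grassmannian k H) (a : Fin k) : obasis W a ∈ W.toSubmodule :=
  ((stdOrthonormalBasis ℝ W.toSubmodule) ((finCongr W.rank).symm a)).2

lemma obasis_orthonormal (W : Grassmannian k H) : Orthonormal ℝ (obasis W) := by
  rw [orthonormal_iff_ite]
  intro i j
  have hb := (stdOrthonormalBasis ℝ W.toSubmodule).orthonormal
  rw [orthonormal_iff_ite] at hb
  have : ⟪obasis W i, obasis W j⟫ =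
      ⟪(stdOrthonormalBasis ℝ W.toSubmodule) ((finCongr W.rank).symm i),
        (stdOrthonormalBasis ℝ W.toSubmodule) ((finCongr W.rank).symm j)⟫ :=
    (Submodule.coe_inner _ _ _).symm
  rw [this, hb]
  simp [Fin.ext_iff]

lemma mdet_sq_eq (L : H →L[ℝ] H) (W : Grassmannian k H) :
    (mdet L W) ^ 2 = (gram fun i => L (obasis W i)).det := by
  have h1 : mdet L W = Real.sqrt ((gram fun i =>
      L ((stdOrthonormalBasis ℝ W.toSubmodule) i : H)).det) := rfl
  have h2 : (gram fun a => L (obasis W a)).det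
      = (gram fun i => L ((stdOrthonormalBasis ℝ W.toSubmodule) i : H)).det := by
    have : (gram fun a => L (obasis W a)) = Matrix.reindex (finCongr W.rank)
        (finCongr W.rank) (gram fun i => L ((stdOrthonormalBasis ℝ W.toSubmodule) i : H)) := by
      ext i j
      rfl
    rw [this, Matrix.det_reindex_self]
  rw [h1, ← h2, Real.sq_sqrt (gram_det_nonneg _)]

lemma mdet_nonneg (L : H →L[ℝ] H) (W : Grassmannian k H) : 0 ≤ mdet L W :=
  Real.sqrt_nonneg _

/-- Change of (possibly non-orthonormal) generating family under `mdet`. -/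
lemma gram_det_eq_mdet (L : H →L[ℝ] H) (W : Grassmannian k H) (u : Fin k → H)
    (hu : ∀ i, u i ∈ W.toSubmodule) :
    ∃ c : ℝ, (gram u).det = c ^ 2 ∧
      (gram fun i => L (u i)).det = c ^ 2 * (mdet L W) ^ 2 := by
  set v := obasis W with hv
  set C : Matrix (Fin k) (Fin k) ℝ := Matrix.of fun a j => ⟪v a, u j⟫ with hC
  have hexp : ∀ j, u j = ∑ a, C a j • v a := by
    intro j
    have hrepr := (stdOrthonormalBasis ℝ W.toSubmodule).sum_repr' ⟨u j, hu j⟩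
    have hcoe := congrArg (Subtype.val : W.toSubmodule → H) hrepr
    rw [show ((⟨u j, hu j⟩ : W.toSubmodule) : H) = u j from rfl] at hcoe
    rw [← hcoe]
    rw [AddSubmonoidClass.coe_finset_sum]
    rw [← Equiv.sum_comp (finCongr W.rank).symm
      (fun i => ((⟪(stdOrthonormalBasis ℝ W.toSubmodule) i, (⟨u j, hu j⟩ : W.toSubmodule)⟫
        • (stdOrthonormalBasis ℝ W.toSubmodule) i : W.toSubmodule) : H))]
    refine Finset.sum_congr rfl fun a _ => ?_
    rw [Submodule.coe_smul, Submodule.coe_inner]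
    rfl
  have hgu : gram u = Matrix.transpose C * gram (fun a =>
      (ContinuousLinearMap.id ℝ H) (v a)) * C := by
    have : u = fun j => (ContinuousLinearMap.id ℝ H) (∑ a, C a j • v a) := by
      funext j
      simpa using hexp j
    rw [show gram u = gram (fun j => (ContinuousLinearMap.id ℝ H) (∑ a, C a j • v a)) by
      rw [← this]]
    exact gram_basis_change _ _ _
  have hgv : gram (fun a => (ContinuousLinearMap.id ℝ H) (v a)) = 1 := by
    have : (fun a => (ContinuousLinearMap.id ℝ H) (v a)) = v := by funext a; simp
    rw [this]
    exact gram_orthonormal (obasis_orthonormal W)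
  refine ⟨C.det, ?_, ?_⟩
  · rw [hgu, hgv, mul_one, Matrix.det_mul, Matrix.det_transpose]
    ring
  · have hgLu : gram (fun j => L (u j)) = Matrix.transpose C
        * gram (fun a => L (v a)) * C := by
      have : (fun j => L (u j)) = fun j => L (∑ a, C a j • v a) := by
        funext j; rw [← hexp j]
      rw [show gram (fun j => L (u j)) = gram (fun j => L (∑ a, C a j • v a)) by rw [← this]]
      exact gram_basis_change _ _ _
    rw [hgLu, Matrix.det_mul, Matrix.det_mul, Matrix.det_transpose, mdet_sq_eq]
    ring

lemma mdet_le_one (V W : Grassmannian k H) : mdet V.proj W ≤ 1 := by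
  have h := (det_gram_proj V (obasis_orthonormal W)).1
  have hsq := mdet_sq_eq V.proj W
  nlinarith [mdet_nonneg V.proj W]

lemma mdet_self (W : Grassmannian k H) : mdet W.proj W = 1 := by
  have hsq := mdet_sq_eq W.proj W
  have : (fun i => W.proj (obasis W i)) = obasis W := by
    funext i
    exact proj_eq_self W (obasis_mem W i)
  rw [this, gram_orthonormal (obasis_orthonormal W), Matrix.det_one] at hsq
  nlinarith [mdet_nonneg W.proj W]

lemma mdet_lt_one (V W : Grassmannian k H) (hVW : V ≠ W) : mdet V.proj W < 1 := by
  rcases lt_or_eq_of_le (mdet_le_one V W) with h | h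
  · exact h
  exfalso
  have hsq := mdet_sq_eq V.proj W
  rw [h] at hsq
  have hdet1 : (gram fun i => V.proj (obasis W i)).det = 1 := by
    rw [← hsq]; norm_num
  have hfix := (det_gram_proj V (obasis_orthonormal W)).2 hdet1
  have hmem : ∀ i, obasis W i ∈ V.toSubmodule := fun i => by
    rw [← hfix i]; exact proj_mem V _
  have hspan : W.toSubmodule ≤ V.toSubmodule := by
    have hWspan : W.toSubmodule = Submodule.span ℝ (Set.range (obasis W)) := by
      apply le_antisymm
      · intro x hx
        have hrepr := (stdOrthonormalBasis ℝ W.toSubmodule).sum_repr' ⟨x, hx⟩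
        have hcoe := congrArg (Subtype.val : W.toSubmodule → H) hrepr
        rw [show ((⟨x, hx⟩ : W.toSubmodule) : H) = x from rfl] at hcoe
        rw [← hcoe, AddSubmonoidClass.coe_finset_sum]
        refine Submodule.sum_mem _ fun i _ => ?_
        rw [Submodule.coe_smul]
        refine Submodule.smul_mem _ _ (Submodule.subset_span ?_)
        exact ⟨finCongr W.rank i, by simp [obasis]⟩
      · rw [Submodule.span_le]
        rintro x ⟨i, rfl⟩
        exact obasis_mem W i
    rw [hWspan, Submodule.span_le]
    rintro x ⟨i, rfl⟩
    exact hmem i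
  have : W.toSubmodule = V.toSubmodule :=
    Submodule.eq_of_le_of_finrank_eq hspan (by rw [W.rank, V.rank])
  exact hVW (Grassmannian.ext' this.symm)

end core
end TPU
namespace TPU

variable {H : Type*} [NormedAddCommGroup H] [InnerProductSpace ℝ H] {k : ℕ}
  [CompleteSpace H]

lemma mdet_continuity (V₀ W₀ : Grassmannian k H) {ε : ℝ} (hε : 0 < ε) :
    ∃ r > 0, ∀ (P : H →L[ℝ] H) (W : Grassmannian k H),
      ‖P - V₀.proj‖ < r → ‖W.proj - W₀.proj‖ < r →
      |mdet P W - mdet V₀.proj W₀| < ε := by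
  set v : Fin k → H := obasis W₀ with hv
  have hterm : ∀ i : Fin k, Continuous fun p : (H →L[ℝ] H) × (H →L[ℝ] H) =>
      p.1 (p.2 (v i)) := by
    intro i
    exact isBoundedBilinearMap_apply.continuous.comp
      (continuous_fst.prodMk
        ((ContinuousLinearMap.apply ℝ H (v i)).continuous.comp continuous_snd))
  set g : (H →L[ℝ] H) × (H →L[ℝ] H) → ℝ :=
    fun p => (gram fun i => p.1 (p.2 (v i))).det with hgdef
  set gd : (H →L[ℝ] H) → ℝ := fun Q => (gram fun i => Q (v i)).det with hgddef
  have hg : Continuous g := by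
    apply Continuous.matrix_det
    apply continuous_matrix
    intro i j
    simp only [gram, Matrix.of_apply]
    exact (hterm i).inner (hterm j)
  have hgd : Continuous gd := by
    apply Continuous.matrix_det
    apply continuous_matrix
    intro i j
    simp only [gram, Matrix.of_apply]
    have h1 : Continuous fun Q : H →L[ℝ] H => Q (v i) :=
      (ContinuousLinearMap.apply ℝ H (v i)).continuous
    have h2 : Continuous fun Q : H →L[ℝ] H => Q (v j) :=
      (ContinuousLinearMap.apply ℝ H (v j)).continuous
    exact h1.inner h2
  have hWfix : (fun i => W₀.proj (v i)) = v := by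
    funext i; exact proj_eq_self W₀ (obasis_mem W₀ i)
  have hgd0 : gd W₀.proj = 1 := by
    simp only [hgddef]
    rw [hWfix, gram_orthonormal (obasis_orthonormal W₀), Matrix.det_one]
  set φ : (H →L[ℝ] H) × (H →L[ℝ] H) → ℝ := fun p => Real.sqrt (g p / gd p.2) with hφdef
  have hφval : φ (V₀.proj, W₀.proj) = mdet V₀.proj W₀ := by
    simp only [hφdef, hgdef]
    rw [hgd0, div_one]
    rw [show (fun i => V₀.proj (W₀.proj (v i))) = (fun i => V₀.proj (v i)) from
      funext fun i => by rw [proj_eq_self W₀ (obasis_mem W₀ i)]]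
    rw [← mdet_sq_eq V₀.proj W₀]
    exact Real.sqrt_sq (mdet_nonneg _ _)
  have hident : ∀ (P : H →L[ℝ] H) (W : Grassmannian k H), gd W.proj ≠ 0 →
      φ (P, W.proj) = mdet P W := by
    intro P W h0
    obtain ⟨c, hc1, hc2⟩ := gram_det_eq_mdet P W (fun i => W.proj (v i))
      (fun i => proj_mem W (v i))
    have hgdW : gd W.proj = c ^ 2 := hc1
    have hgPW : g (P, W.proj) = c ^ 2 * (mdet P W) ^ 2 := hc2
    have hc0 : c ^ 2 ≠ 0 := by rw [← hgdW]; exact h0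
    simp only [hφdef]
    rw [hgPW, hgdW, mul_comm, mul_div_assoc, div_self hc0, mul_one]
    exact Real.sqrt_sq (mdet_nonneg _ _)
  have hφc : ContinuousAt φ (V₀.proj, W₀.proj) := by
    apply Real.continuous_sqrt.continuousAt.comp
    apply ContinuousAt.div hg.continuousAt (hgd.comp continuous_snd).continuousAt
    show gd W₀.proj ≠ 0
    rw [hgd0]; norm_num
  obtain ⟨δ₁, hδ₁, hδ₁'⟩ := Metric.continuousAt_iff.1 hφc ε hε
  have hgdc : ContinuousAt gd W₀.proj := hgd.continuousAt
  obtain ⟨δ₂, hδ₂, hδ₂'⟩ := Metric.continuousAt_iff.1 hgdc (1/2) (by norm_num)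
  refine ⟨min δ₁ δ₂, lt_min hδ₁ hδ₂, ?_⟩
  intro P W hP hW
  have hdist : dist (P, W.proj) (V₀.proj, W₀.proj) < δ₁ := by
    rw [Prod.dist_eq]
    apply max_lt
    · rw [dist_eq_norm]; exact lt_of_lt_of_le hP (min_le_left _ _)
    · rw [dist_eq_norm]; exact lt_of_lt_of_le hW (min_le_left _ _)
  have hgdW : gd W.proj ≠ 0 := by
    have : dist W.proj W₀.proj < δ₂ := by
      rw [dist_eq_norm]; exact lt_of_lt_of_le hW (min_le_right _ _)
    have := hδ₂' this
    rw [Real.dist_eq, hgd0] at this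
    intro hc
    rw [hc] at this
    norm_num at this
  have := hδ₁' hdist
  rw [Real.dist_eq, hφval, hident P W hgdW] at this
  exact this

end TPU
namespace TPU

variable {H : Type*} [NormedAddCommGroup H] [InnerProductSpace ℝ H] {k : ℕ}
  [CompleteSpace H]

lemma proj_eq_sum_obasis (V : Grassmannian k H) (x : H) :
    V.proj x = ∑ i, ⟪obasis V i, x⟫ • obasis V i := by
  have hb := (stdOrthonormalBasis ℝ V.toSubmodule).orthogonalProjectionOnto_apply_eq_sum x
  have hcoe := congrArg (Subtype.val : V.toSubmodule → H) hb
  rw [AddSubmonoidClass.coe_finset_sum] at hcoe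
  rw [proj_apply, hcoe]
  rw [← Equiv.sum_comp (finCongr V.rank).symm
    (fun i => ((⟪((stdOrthonormalBasis ℝ V.toSubmodule) i : H), x⟫
      • (stdOrthonormalBasis ℝ V.toSubmodule) i : V.toSubmodule) : H))]
  refine Finset.sum_congr rfl fun a _ => ?_
  rw [Submodule.coe_smul]
  rfl

lemma dense_family [SecondCountableTopology H] (hne : Nonempty (Grassmannian k H)) :
    ∃ f : ℕ → Grassmannian k H, ∀ (W : Grassmannian k H) (δ : ℝ), 0 < δ →
      ∃ n, ‖(f n).proj - W.proj‖ < δ := by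
  classical
  set f₀ : (Fin k → H) → (H →L[ℝ] H) :=
    fun u => ∑ i, (innerSL ℝ (u i)).smulRight (u i) with hf₀
  have hf₀c : Continuous f₀ := by
    apply continuous_finset_sum
    intro i _
    have h1 : Continuous fun u : Fin k → H => (innerSL ℝ (u i), u i) :=
      ((innerSL ℝ).continuous.comp (continuous_apply i)).prodMk (continuous_apply i)
    exact isBoundedBilinearMap_smulRight.continuous.comp h1
  have hrange : Set.range (fun V : Grassmannian k H => V.proj) ⊆ Set.range f₀ := by
    rintro _ ⟨V, rfl⟩
    refine ⟨obasis V, ?_⟩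
    ext x
    rw [proj_eq_sum_obasis V x, hf₀]
    simp only [ContinuousLinearMap.sum_apply, ContinuousLinearMap.smulRight_apply,
      innerSL_apply_apply]
  have hsep : TopologicalSpace.IsSeparable
      (Set.range (fun V : Grassmannian k H => V.proj)) :=
    (TopologicalSpace.isSeparable_range hf₀c).mono hrange
  obtain ⟨c, hcc, hcs⟩ := hsep
  have hcne : c.Nonempty := by
    obtain ⟨V₀⟩ := hne
    by_contra hcemp
    rw [Set.not_nonempty_iff_eq_empty] at hcemp
    rw [hcemp, closure_empty] at hcs
    exact hcs ⟨V₀, rfl⟩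
  obtain ⟨g, hg⟩ := (Set.countable_iff_exists_surjective hcne).1 hcc
  have hch : ∀ n m : ℕ, ∃ V : Grassmannian k H,
      (∃ V' : Grassmannian k H, ‖V'.proj - g n‖ < 1/(m+1)) →
        ‖V.proj - g n‖ < 1/(m+1) := by
    intro n m
    by_cases hex : ∃ V' : Grassmannian k H, ‖V'.proj - g n‖ < 1/(m+1)
    · exact ⟨hex.choose, fun _ => hex.choose_spec⟩
    · exact ⟨hne.some, fun hcon => absurd hcon hex⟩
  choose F hF using hch
  refine ⟨fun n => F n.unpair.1 n.unpair.2, ?_⟩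
  intro W δ hδ
  obtain ⟨m, hm⟩ := exists_nat_one_div_lt (show (0:ℝ) < δ/2 by linarith)
  have hWc : W.proj ∈ closure c := hcs ⟨W, rfl⟩
  obtain ⟨b, hbc, hbd⟩ := Metric.mem_closure_iff.1 hWc (1/(m+1))
    (by positivity)
  obtain ⟨n, hn0⟩ := hg ⟨b, hbc⟩
  have hn : (g n : H →L[ℝ] H) = b := congrArg Subtype.val hn0
  have hex : ∃ V' : Grassmannian k H, ‖V'.proj - g n‖ < 1/(m+1) := by
    refine ⟨W, ?_⟩
    rw [hn, ← dist_eq_norm]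
    exact hbd
  have hFnm := hF n m hex
  refine ⟨Nat.pair n m, ?_⟩
  simp only [Nat.unpair_pair]
  have h1 : dist (F n m).proj W.proj ≤ dist (F n m).proj b + dist b W.proj :=
    dist_triangle _ _ _
  rw [← dist_eq_norm]
  have h2 : dist (F n m).proj b < 1/(m+1) := by rw [dist_eq_norm, ← hn]; exact hFnm
  have h3 : dist b W.proj < 1/(m+1) := by rw [dist_comm]; exact hbd
  linarith

end TPU
namespace TPU

variable {H : Type*} [NormedAddCommGroup H] [InnerProductSpace ℝ H] {k : ℕ}
  [CompleteSpace H]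

lemma measurableSet_ball (p : H →L[ℝ] H) (r : ℝ) :
    MeasurableSet {W : Grassmannian k H | ‖W.proj - p‖ < r} := by
  refine ⟨{q : H →L[ℝ] H | ‖q - p‖ < r}, ?_, rfl⟩
  have hopen : IsOpen {q : H →L[ℝ] H | ‖q - p‖ < r} := by
    have : {q : H →L[ℝ] H | ‖q - p‖ < r} = Metric.ball p r := by
      ext q; simp [Metric.mem_ball, dist_eq_norm]
    rw [this]; exact Metric.isOpen_ball
  exact MeasurableSpace.measurableSet_generateFrom hopen

lemma lint_lower {X : Type*} [MeasurableSpace X] (μ : Measure X) {A : Set X}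
    (hA : MeasurableSet A) (f : X → ℝ) {c : ℝ} (hc : ∀ x ∈ A, c ≤ f x) :
    ENNReal.ofReal c * μ A ≤ ∫⁻ x in A, ENNReal.ofReal (f x) ∂μ := by
  rw [← setLIntegral_const A (ENNReal.ofReal c)]
  exact lintegral_mono_ae ((ae_restrict_iff' hA).2
    (ae_of_all _ fun x hx => ENNReal.ofReal_le_ofReal (hc x hx)))

lemma lint_upper {X : Type*} [MeasurableSpace X] (μ : Measure X) {A : Set X}
    (hA : MeasurableSet A) (f : X → ℝ) {c : ℝ} (hc : ∀ x ∈ A, f x ≤ c) :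
    ∫⁻ x in A, ENNReal.ofReal (f x) ∂μ ≤ ENNReal.ofReal c * μ A := by
  rw [← setLIntegral_const A (ENNReal.ofReal c)]
  exact lintegral_mono_ae ((ae_restrict_iff' hA).2
    (ae_of_all _ fun x hx => ENNReal.ofReal_le_ofReal (hc x hx)))

lemma measure_le_of_h [SecondCountableTopology H]
    {X : Type*} [MeasurableSpace X] (μ₁ μ₂ : Measure X)
    (T₁ T₂ : X → Grassmannian k H) (hT₂ : Measurable T₂)
    (h : ∀ (V : Grassmannian k H) (A : Set X), MeasurableSet A →
      ∫⁻ x in A, ENNReal.ofReal (mdet V.proj (T₁ x)) ∂μ₁ =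
      ∫⁻ x in A, ENNReal.ofReal (mdet V.proj (T₂ x)) ∂μ₂)
    {A : Set X} (hA : MeasurableSet A) : μ₂ A ≤ μ₁ A := by
  classical
  by_cases hne : Nonempty (Grassmannian k H)
  swap
  · have hAe : A = ∅ := by
      rw [eq_empty_iff_forall_notMem]
      exact fun x _ => hne ⟨T₁ x⟩
    simp [hAe]
  obtain ⟨f, hf⟩ := dense_family hne
  have key : ∀ ε : ℝ, 0 < ε → ε < 1 → ENNReal.ofReal (1-ε) * μ₂ A ≤ μ₁ A := by
    intro ε hε hε1
    set good : ℕ → ℕ → Prop := fun n m => ∀ W' : Grassmannian k H,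
      ‖W'.proj - (f n).proj‖ < 1/(m+1) → 1 - ε ≤ mdet (f n).proj W' with hgood
    set E : ℕ → Set X := fun t => if good t.unpair.1 t.unpair.2
      then T₂ ⁻¹' {W : Grassmannian k H | ‖W.proj - (f t.unpair.1).proj‖ < 1/(t.unpair.2+1)}
      else ∅ with hE
    have hEmeas : ∀ t, MeasurableSet (E t) := fun t => by
      by_cases hg : good t.unpair.1 t.unpair.2
      · simp only [hE, if_pos hg]; exact hT₂ (measurableSet_ball _ _)
      · simp only [hE, if_neg hg]; exact MeasurableSet.empty
    have hcover : ⋃ t, E t = univ := by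
      rw [eq_univ_iff_forall]
      intro x
      set W := T₂ x with hW
      obtain ⟨r, hr, hrP⟩ := mdet_continuity W W hε
      obtain ⟨m, hm⟩ := exists_nat_one_div_lt (show (0:ℝ) < r/2 by linarith)
      obtain ⟨n, hn⟩ := hf W (1/(m+1)) (by positivity)
      have hgnm : good n m := by
        intro W' hW'
        have h1 : ‖(f n).proj - W.proj‖ < r := by
          calc ‖(f n).proj - W.proj‖ < 1/(m+1) := hn
            _ < r/2 := hm
            _ < r := by linarith
        have h2 : ‖W'.proj - W.proj‖ < r := by
          calc ‖W'.proj - W.proj‖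
              ≤ ‖W'.proj - (f n).proj‖ + ‖(f n).proj - W.proj‖ := by
                have := dist_triangle W'.proj (f n).proj W.proj
                simpa [dist_eq_norm] using this
            _ < 1/(m+1) + 1/(m+1) := by exact add_lt_add hW' hn
            _ < r := by linarith
        have habs := hrP (f n).proj W' h1 h2
        rw [mdet_self W] at habs
        have := abs_lt.1 habs
        linarith
      refine mem_iUnion.2 ⟨Nat.pair n m, ?_⟩
      simp only [hE, Nat.unpair_pair, if_pos hgnm]
      show ‖(T₂ x).proj - (f n).proj‖ < 1/((m:ℝ)+1)
      rw [← hW, ← norm_neg]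
      simpa using hn
    set F := disjointed E with hF
    have hFmeas : ∀ t, MeasurableSet (F t) := MeasurableSet.disjointed hEmeas
    have hFdisj := disjoint_disjointed E
    have hFsub : ∀ t, F t ⊆ E t := fun t => disjointed_subset E t
    have hFU : ⋃ t, F t = univ := by rw [hF, iUnion_disjointed]; exact hcover
    have hA2 : A = ⋃ t, A ∩ F t := by rw [← inter_iUnion, hFU, inter_univ]
    have hdisjAF : Pairwise (Function.onFun Disjoint fun t => A ∩ F t) := fun i j hij =>
      ((hFdisj hij).mono inter_subset_right inter_subset_right)
    have hmeasAF : ∀ t, MeasurableSet (A ∩ F t) := fun t => hA.inter (hFmeas t)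
    have hterm : ∀ t, ENNReal.ofReal (1-ε) * μ₂ (A ∩ F t) ≤ μ₁ (A ∩ F t) := by
      intro t
      by_cases hg : good t.unpair.1 t.unpair.2
      · have hball : A ∩ F t ⊆ T₂ ⁻¹' {W : Grassmannian k H |
            ‖W.proj - (f t.unpair.1).proj‖ < 1/(t.unpair.2+1)} := by
          intro x hx
          have := hFsub t hx.2
          rw [hE] at this
          simp only [if_pos hg] at this
          exact this
        calc ENNReal.ofReal (1-ε) * μ₂ (A ∩ F t)
            ≤ ∫⁻ x in A ∩ F t, ENNReal.ofReal (mdet (f t.unpair.1).proj (T₂ x)) ∂μ₂ :=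
              lint_lower μ₂ (hmeasAF t) _ (fun x hx => hg (T₂ x) (hball hx))
          _ = ∫⁻ x in A ∩ F t, ENNReal.ofReal (mdet (f t.unpair.1).proj (T₁ x)) ∂μ₁ :=
              (h (f t.unpair.1) _ (hmeasAF t)).symm
          _ ≤ ENNReal.ofReal 1 * μ₁ (A ∩ F t) :=
              lint_upper μ₁ (hmeasAF t) _ (fun x _ => mdet_le_one (f t.unpair.1) (T₁ x))
          _ = μ₁ (A ∩ F t) := by rw [ENNReal.ofReal_one, one_mul]
      · have : F t ⊆ (∅ : Set X) := by
          intro x hx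
          have := hFsub t hx
          rw [hE] at this
          simpa [if_neg hg] using this
        have hz : μ₂ (A ∩ F t) = 0 :=
          measure_mono_null (subset_trans inter_subset_right this) (measure_empty)
        rw [hz, mul_zero]
        exact zero_le
    calc ENNReal.ofReal (1-ε) * μ₂ A
        = ENNReal.ofReal (1-ε) * ∑' t, μ₂ (A ∩ F t) := by
          conv_lhs => rw [hA2]
          rw [measure_iUnion hdisjAF hmeasAF]
      _ = ∑' t, ENNReal.ofReal (1-ε) * μ₂ (A ∩ F t) := ENNReal.tsum_mul_left.symm
      _ ≤ ∑' t, μ₁ (A ∩ F t) := ENNReal.tsum_le_tsum hterm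
      _ = μ₁ (⋃ t, A ∩ F t) := (measure_iUnion hdisjAF hmeasAF).symm
      _ = μ₁ A := by rw [← hA2]
  apply ENNReal.le_of_forall_lt_one_mul_le
  intro a ha
  have hane : a ≠ ⊤ := (lt_of_lt_of_le ha le_top).ne
  set ε : ℝ := (1 - a.toReal)/2 with hεdef
  have hat1 : a.toReal < 1 := by
    have := (ENNReal.toReal_lt_toReal hane (by norm_num)).2 ha
    simpa using this
  have hε : 0 < ε := by rw [hεdef]; linarith
  have hε1 : ε < 1 := by
    have := ENNReal.toReal_nonneg (a := a)
    rw [hεdef]; linarith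
  have ha' : a ≤ ENNReal.ofReal (1-ε) := by
    rw [← ENNReal.ofReal_toReal hane]
    apply ENNReal.ofReal_le_ofReal
    rw [hεdef]; linarith
  exact le_trans (mul_le_mul_left ha' _) (key ε hε hε1)

end TPU

/-- **Uniqueness of tangent-plane data.**
If `μ₁, μ₂` are σ-finite measures on `X` and `T₁, T₂ : X → G_k(H)` are measurable functions
such that for every `k`-dimensional subspace `V ≤ H` and measurable `A ⊆ X`,
`∫_A det(π_V | T₁(x)) dμ₁ = ∫_A det(π_V | T₂(x)) dμ₂`, then `μ₁ = μ₂` and `T₁ = T₂`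
`μ₁`-almost everywhere. -/
theorem tangent_plane_unique
    [CompleteSpace H] [SecondCountableTopology H]
    {X : Type*} [MeasurableSpace X] (k : ℕ)
    (μ₁ μ₂ : Measure X) (hσ₁ : SigmaFinite μ₁) (hσ₂ : SigmaFinite μ₂)
    (T₁ T₂ : X → Grassmannian k H) (hT₁ : Measurable T₁) (hT₂ : Measurable T₂)
    (h : ∀ (V : Grassmannian k H) (A : Set X), MeasurableSet A →
      ∫⁻ x in A, ENNReal.ofReal (mdet V.proj (T₁ x)) ∂μ₁ =
      ∫⁻ x in A, ENNReal.ofReal (mdet V.proj (T₂ x)) ∂μ₂) :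
    μ₁ = μ₂ ∧ μ₁ {x | T₁ x ≠ T₂ x} = 0 := by
  classical
  have hμ : μ₁ = μ₂ := Measure.ext fun A hA => le_antisymm
    (TPU.measure_le_of_h μ₂ μ₁ T₂ T₁ hT₁ (fun V A hA => (h V A hA).symm) hA)
    (TPU.measure_le_of_h μ₁ μ₂ T₁ T₂ hT₂ h hA)
  refine ⟨hμ, ?_⟩
  by_cases hne : Nonempty (Grassmannian k H)
  swap
  · have hempty : {x | T₁ x ≠ T₂ x} = ∅ :=
      eq_empty_iff_forall_notMem.2 fun x _ => hne ⟨T₁ x⟩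
    simp [hempty]
  obtain ⟨f, hf⟩ := TPU.dense_family hne
  haveI := hσ₁
  set good2 : ℕ → ℕ → ℕ → Prop := fun i j m => ∃ c c' : ℝ, 0 < c' ∧ c < c' ∧
    (∀ W' : Grassmannian k H, ‖W'.proj - (f j).proj‖ < 1/(m+1) →
      mdet (f i).proj W' ≤ c) ∧
    (∀ V' : Grassmannian k H, ‖V'.proj - (f i).proj‖ < 1/(m+1) →
      c' ≤ mdet (f i).proj V') with hg2
  set N : ℕ × ℕ × ℕ → Set X := fun t => if good2 t.1 t.2.1 t.2.2 then
    (T₁ ⁻¹' {V' : Grassmannian k H | ‖V'.proj - (f t.1).proj‖ < 1/(t.2.2+1)}) ∩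
    (T₂ ⁻¹' {W' : Grassmannian k H | ‖W'.proj - (f t.2.1).proj‖ < 1/(t.2.2+1)}) else ∅
    with hN
  have hNmeas : ∀ t, MeasurableSet (N t) := by
    intro t
    by_cases hg : good2 t.1 t.2.1 t.2.2
    · rw [hN]; simp only [if_pos hg]
      exact (hT₁ (TPU.measurableSet_ball _ _)).inter (hT₂ (TPU.measurableSet_ball _ _))
    · rw [hN]; simp only [if_neg hg]; exact MeasurableSet.empty
  have claim0 : ∀ t (s : ℕ), μ₁ (N t ∩ spanningSets μ₁ s) = 0 := by
    intro t s
    by_cases hg : good2 t.1 t.2.1 t.2.2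
    swap
    · rw [hN]; simp [if_neg hg]
    have hgg := hg
    simp only [hg2] at hgg
    obtain ⟨c, c', hc'pos, hcc', hcW, hcV⟩ := hgg
    have hNt : N t =
        (T₁ ⁻¹' {V' : Grassmannian k H | ‖V'.proj - (f t.1).proj‖ < 1/(t.2.2+1)}) ∩
        (T₂ ⁻¹' {W' : Grassmannian k H | ‖W'.proj - (f t.2.1).proj‖ < 1/(t.2.2+1)}) := by
      rw [hN]; simp only [if_pos hg]
    set S := N t ∩ spanningSets μ₁ s with hS
    have hSmeas : MeasurableSet S := (hNmeas t).inter (measurableSet_spanningSets μ₁ s)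
    have hSfin : μ₁ S ≠ ⊤ :=
      (lt_of_le_of_lt (measure_mono inter_subset_right)
        (measure_spanningSets_lt_top μ₁ s)).ne
    have hmem1 : ∀ x ∈ S, ‖(T₁ x).proj - (f t.1).proj‖ < 1/(t.2.2+1) := by
      intro x hx
      have := hx.1
      rw [hNt] at this
      exact this.1
    have hmem2 : ∀ x ∈ S, ‖(T₂ x).proj - (f t.2.1).proj‖ < 1/(t.2.2+1) := by
      intro x hx
      have := hx.1
      rw [hNt] at this
      exact this.2
    have h1 : ENNReal.ofReal c' * μ₁ S ≤
        ∫⁻ x in S, ENNReal.ofReal (mdet (f t.1).proj (T₁ x)) ∂μ₁ :=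
      TPU.lint_lower μ₁ hSmeas _ (fun x hx => hcV (T₁ x) (hmem1 x hx))
    have h2 := h (f t.1) S hSmeas
    have h3 : ∫⁻ x in S, ENNReal.ofReal (mdet (f t.1).proj (T₂ x)) ∂μ₂ ≤
        ENNReal.ofReal c * μ₂ S :=
      TPU.lint_upper μ₂ hSmeas _ (fun x hx => hcW (T₂ x) (hmem2 x hx))
    have hμS : μ₂ S = μ₁ S := by rw [hμ]
    rw [hμS] at h3
    have hchain : ENNReal.ofReal c' * μ₁ S ≤ ENNReal.ofReal c * μ₁ S :=
      le_trans h1 (le_trans (le_of_eq h2) h3)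
    by_contra h0
    have hle := (ENNReal.mul_le_mul_iff_left h0 hSfin).1 hchain
    have hcpos : 0 < c := by
      have h4 : (0:ℝ≥0∞) < ENNReal.ofReal c' := ENNReal.ofReal_pos.2 hc'pos
      exact ENNReal.ofReal_pos.1 (lt_of_lt_of_le h4 hle)
    have : c' ≤ c := (ENNReal.ofReal_le_ofReal_iff hcpos.le).1 hle
    linarith
  have claim1 : {x | T₁ x ≠ T₂ x} ⊆ ⋃ t, N t := by
    intro x hx
    simp only [mem_setOf_eq] at hx
    have hd1 : mdet (T₁ x).proj (T₂ x) < 1 := TPU.mdet_lt_one _ _ hx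
    have hd0 : 0 ≤ mdet (T₁ x).proj (T₂ x) := TPU.mdet_nonneg _ _
    set d := mdet (T₁ x).proj (T₂ x) with hd
    set ε := (1 - d)/4 with hεd
    have hε : 0 < ε := by rw [hεd]; linarith
    obtain ⟨r₁, hr₁, hP₁⟩ := TPU.mdet_continuity (T₁ x) (T₂ x) hε
    obtain ⟨r₂, hr₂, hP₂⟩ := TPU.mdet_continuity (T₁ x) (T₁ x) hε
    obtain ⟨m, hm⟩ := exists_nat_one_div_lt
      (show (0:ℝ) < (min r₁ r₂)/2 by positivity)
    obtain ⟨i, hi⟩ := hf (T₁ x) (1/(m+1)) (by positivity)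
    obtain ⟨j, hj⟩ := hf (T₂ x) (1/(m+1)) (by positivity)
    have hm1 : (1:ℝ)/(m+1) < r₁/2 :=
      lt_of_lt_of_le hm (by have := min_le_left r₁ r₂; linarith)
    have hm2 : (1:ℝ)/(m+1) < r₂/2 :=
      lt_of_lt_of_le hm (by have := min_le_right r₁ r₂; linarith)
    have hgood : good2 i j m := by
      simp only [hg2]
      refine ⟨d + ε, 1 - ε, ?_, ?_, ?_, ?_⟩
      · rw [hεd]; linarith
      · rw [hεd]; linarith
      · intro W' hW'
        have hWd : ‖W'.proj - (T₂ x).proj‖ < r₁ := by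
          calc ‖W'.proj - (T₂ x).proj‖
              ≤ ‖W'.proj - (f j).proj‖ + ‖(f j).proj - (T₂ x).proj‖ := by
                have := dist_triangle W'.proj (f j).proj (T₂ x).proj
                simpa [dist_eq_norm] using this
            _ < 1/(m+1) + 1/(m+1) := add_lt_add hW' hj
            _ < r₁ := by linarith
        have hPd : ‖(f i).proj - (T₁ x).proj‖ < r₁ := by
          calc ‖(f i).proj - (T₁ x).proj‖ < 1/(m+1) := hi
            _ < r₁ := by linarith
        have habs := hP₁ (f i).proj W' hPd hWd
        rw [← hd] at habs
        have := abs_lt.1 habs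
        linarith
      · intro V' hV'
        have hVd : ‖V'.proj - (T₁ x).proj‖ < r₂ := by
          calc ‖V'.proj - (T₁ x).proj‖
              ≤ ‖V'.proj - (f i).proj‖ + ‖(f i).proj - (T₁ x).proj‖ := by
                have := dist_triangle V'.proj (f i).proj (T₁ x).proj
                simpa [dist_eq_norm] using this
            _ < 1/(m+1) + 1/(m+1) := add_lt_add hV' hi
            _ < r₂ := by linarith
        have hPd : ‖(f i).proj - (T₁ x).proj‖ < r₂ := by
          calc ‖(f i).proj - (T₁ x).proj‖ < 1/(m+1) := hi
            _ < r₂ := by linarith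
        have habs := hP₂ (f i).proj V' hPd hVd
        rw [TPU.mdet_self (T₁ x)] at habs
        have := abs_lt.1 habs
        linarith
    refine mem_iUnion.2 ⟨(i, j, m), ?_⟩
    rw [hN]
    simp only [if_pos hgood]
    constructor
    · show ‖(T₁ x).proj - (f i).proj‖ < 1/((m:ℝ)+1)
      rw [← norm_neg]
      simpa using hi
    · show ‖(T₂ x).proj - (f j).proj‖ < 1/((m:ℝ)+1)
      rw [← norm_neg]
      simpa using hj
  have hcover : {x | T₁ x ≠ T₂ x} ⊆ ⋃ s : ℕ, ⋃ t, (N t ∩ spanningSets μ₁ s) := by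
    intro x hx
    obtain ⟨t, ht⟩ := mem_iUnion.1 (claim1 hx)
    have hx3 : x ∈ ⋃ s, spanningSets μ₁ s := by
      rw [iUnion_spanningSets]; trivial
    obtain ⟨s, hs⟩ := mem_iUnion.1 hx3
    exact mem_iUnion.2 ⟨s, mem_iUnion.2 ⟨t, ⟨ht, hs⟩⟩⟩
  have hzero : μ₁ (⋃ s : ℕ, ⋃ t, (N t ∩ spanningSets μ₁ s)) = 0 :=
    measure_iUnion_null fun s => measure_iUnion_null fun t => claim0 t s
  exact measure_mono_null hcover hzero

end
end

section
/- Let R be a subset of a separable Hilbert space H, and suppose there exist a measure μ on R and a measurable map T : R → G_k(H) such that for every k-dimensional subspace V ≤ H and every Borel A ⊆ R, ∫ #(π_V⁻¹(y) ∩ A) dH^k(y) = ∫_A det(π_V | T(x)) dμ(x). Then μ(A) ≤ H^k(A) for every Borel A ⊆ R. -/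
open MeasureTheory Module Set
open scoped ENNReal RealInnerProductSpace

noncomputable section

variable {H : Type*} [NormedAddCommGroup H] [InnerProductSpace ℝ H]

variable [MeasurableSpace H] [BorelSpace H]

/-- The integral over the `k`-plane `V` of the fiber-counting function of the orthogonal
projection onto `V`, intersected with `A`, w.r.t. `k`-dimensional Hausdorff measure. -/
def projCount (k : ℕ) (V : Grassmannian k H) (A : Set H) : ℝ≥0∞ :=
  ∫⁻ y in (V.toSubmodule : Set H), ((V.proj ⁻¹' {y} ∩ A).encard : ℝ≥0∞) ∂(μH[(k : ℝ)])

/-!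
Fix `a < 1`. The map `V ↦ π_V` has separable range in operator norm, so `A` splits into countably
many measurable pieces `B` on each of which `T x` stays close to one plane `W`; there the Gram
determinant `det(π_W | T x)` exceeds `a`, and the identity gives
`a μ(B) ≤ ∫ #(π_W⁻¹ y ∩ B) dH^k(y) ≤ H^k(B)`. The last step is Eilenberg's inequality for the
1-Lipschitz map `π_W`: count fibre points through finer and finer countable measurable partitions,
apply Fatou's lemma, and use that a `K`-Lipschitz map scales `H^d` by at most `K^d` on each piece.
-/

attribute [local instance] Grassmannian.fin

open Filter Function Topology
open scoped NNReal

section Eilenberg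

variable {X Y : Type*}

theorem card_le_tsum_indicator_image {E : ℕ → Set X} (hE : ⋃ j, E j = univ) {f : X → Y}
    {s : Set X} {y : Y} {F : Finset X} (hF : ↑F ⊆ f ⁻¹' {y} ∩ s)
    (hsep : ∀ j, ∀ x ∈ F, ∀ x' ∈ F, x ∈ E j → x' ∈ E j → x = x') :
    (F.card : ℝ≥0∞) ≤ ∑' j, (f '' (s ∩ E j)).indicator 1 y := by
  choose idx hidx using fun x => mem_iUnion.1 (hE ▸ mem_univ x)
  have hinj : InjOn idx F := fun x hx x' hx' h => hsep _ x hx x' hx' (hidx x) (h ▸ hidx x')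
  calc (F.card : ℝ≥0∞) = ∑ _ ∈ F.image idx, 1 := by simp [Finset.card_image_of_injOn hinj]
    _ ≤ ∑ j ∈ F.image idx, (f '' (s ∩ E j)).indicator 1 y := by
      refine Finset.sum_le_sum fun j hj => ?_
      obtain ⟨x, hx, rfl⟩ := Finset.mem_image.1 hj
      obtain ⟨hxy, hxs⟩ := hF hx
      rw [indicator_of_mem (show y ∈ f '' (s ∩ E (idx x)) from ⟨x, ⟨hxs, hidx x⟩, hxy⟩),
        Pi.one_apply]
    _ ≤ ∑' j, (f '' (s ∩ E j)).indicator 1 y := ENNReal.sum_le_tsum _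

theorem encard_preimage_inter_le_liminf [EMetricSpace X] {E : ℕ → ℕ → Set X}
    (hE : ∀ m, ⋃ j, E m j = univ) {r : ℕ → ℝ≥0∞} (hr : Tendsto r atTop (𝓝 0))
    (hdiam : ∀ m j, Metric.ediam (E m j) ≤ r m) (f : X → Y) (s : Set X) (y : Y) :
    ((f ⁻¹' {y} ∩ s).encard : ℝ≥0∞) ≤
      liminf (fun m => ∑' j, (f '' (s ∩ E m j)).indicator 1 y) atTop := by
  rw [← ENNReal.tsum_set_one, ENNReal.tsum_eq_iSup_sum]
  refine iSup_le fun F => ?_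
  set F' := F.map (Embedding.subtype _)
  have hF' : ↑F' ⊆ f ⁻¹' {y} ∩ s := by
    simp only [F', Finset.coe_map, Embedding.coe_subtype]
    exact image_subset_iff.2 fun x _ => x.2
  rw [Finset.sum_const, nsmul_one, ← Finset.card_map (Embedding.subtype _)]
  refine le_liminf_of_le (by isBoundedDefault) ?_
  filter_upwards [(eventually_all_finset F'.offDiag).2 fun p hp =>
    hr.eventually (gt_mem_nhds (edist_pos.2 (Finset.mem_offDiag.1 hp).2.2))] with m hm
  refine card_le_tsum_indicator_image (hE m) hF' fun j x hx x' hx' hxj hx'j => ?_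
  by_contra hne
  exact (hm (x, x') (Finset.mem_offDiag.2 ⟨hx, hx', hne⟩)).not_ge
    ((Metric.edist_le_ediam_of_mem hxj hx'j).trans (hdiam m j))

variable [EMetricSpace X] [MeasurableSpace X] [BorelSpace X]

theorem exists_measurable_partition_ediam_le [SecondCountableTopology X] {r : ℝ≥0∞}
    (hr : 0 < r) :
    ∃ E : ℕ → Set X, (∀ j, MeasurableSet (E j)) ∧ Pairwise (Disjoint on E) ∧
      ⋃ j, E j = univ ∧ ∀ j, Metric.ediam (E j) ≤ r := by
  rcases isEmpty_or_nonempty X with hX | hX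
  · exact ⟨fun _ => ∅, fun _ => .empty, fun _ _ _ => disjoint_bot_left,
      by simp [univ_eq_empty_iff.2 hX], by simp⟩
  obtain ⟨u, hu⟩ := TopologicalSpace.exists_dense_seq X
  refine ⟨disjointed fun j => Metric.eball (u j) (r / 2),
    .disjointed fun j => Metric.isOpen_eball.measurableSet, disjoint_disjointed _, ?_, fun j => ?_⟩
  · refine iUnion_disjointed.trans (eq_univ_of_forall fun x => ?_)
    obtain ⟨j, hj⟩ := hu.exists_mem_open Metric.isOpen_eball
      ⟨x, Metric.mem_eball_self (ENNReal.half_pos hr.ne')⟩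
    exact mem_iUnion.2 ⟨j, Metric.mem_eball_comm.1 hj⟩
  · calc Metric.ediam (disjointed (fun j => Metric.eball (u j) (r / 2)) j)
        ≤ Metric.ediam (Metric.eball (u j) (r / 2)) := Metric.ediam_mono (disjointed_subset _ j)
      _ ≤ 2 * (r / 2) := Metric.ediam_eball_le
      _ = r := ENNReal.mul_div_cancel two_ne_zero ENNReal.ofNat_ne_top

variable [EMetricSpace Y] [MeasurableSpace Y] [BorelSpace Y]

theorem lintegral_tsum_indicator_toMeasurable_image_le {K : ℝ≥0} {f : X → Y}
    (hf : LipschitzWith K f) {d : ℝ} (hd : 0 ≤ d) {E : ℕ → Set X} (hEm : ∀ j, MeasurableSet (E j))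
    (hEd : Pairwise (Disjoint on E)) (hE : ⋃ j, E j = univ) (s : Set X) :
    ∫⁻ y, ∑' j, (toMeasurable μH[d] (f '' (s ∩ E j))).indicator 1 y ∂μH[d] ≤
      (K : ℝ≥0∞) ^ d * μH[d] s := by
  rw [lintegral_tsum fun j =>
    (measurable_one.indicator (measurableSet_toMeasurable _ _)).aemeasurable]
  have hs : μH[d] s = ∑' j, μH[d] (s ∩ E j) := calc
    μH[d] s = μH[d].restrict (⋃ j, E j) s := by rw [hE, Measure.restrict_univ]
    _ = ∑' j, μH[d].restrict (E j) s := by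
      rw [Measure.restrict_iUnion hEd hEm, Measure.sum_apply_of_countable]
    _ = ∑' j, μH[d] (s ∩ E j) := by simp only [Measure.restrict_apply' (hEm _)]
  calc ∑' j, ∫⁻ y, (toMeasurable μH[d] (f '' (s ∩ E j))).indicator 1 y ∂μH[d]
      = ∑' j, μH[d] (f '' (s ∩ E j)) := by
        simp only [lintegral_indicator_one (measurableSet_toMeasurable _ _), measure_toMeasurable]
    _ ≤ ∑' j, (K : ℝ≥0∞) ^ d * μH[d] (s ∩ E j) :=
        ENNReal.tsum_le_tsum fun j => hf.hausdorffMeasure_image_le hd _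
    _ = (K : ℝ≥0∞) ^ d * μH[d] s := by rw [ENNReal.tsum_mul_left, hs]

theorem lintegral_encard_preimage_inter_le [SecondCountableTopology X] {K : ℝ≥0} {f : X → Y}
    (hf : LipschitzWith K f) {d : ℝ} (hd : 0 ≤ d) (s : Set X) :
    ∫⁻ y, ((f ⁻¹' {y} ∩ s).encard : ℝ≥0∞) ∂μH[d] ≤ (K : ℝ≥0∞) ^ d * μH[d] s := by
  choose E hEm hEd hE hdiam using fun m : ℕ =>
    exists_measurable_partition_ediam_le (X := X) (ENNReal.inv_pos.2 (ENNReal.natCast_ne_top m))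
  set g : ℕ → Y → ℝ≥0∞ := fun m y =>
    ∑' j, (toMeasurable μH[d] (f '' (s ∩ E m j))).indicator 1 y
  have hg : ∀ m, Measurable (g m) := fun m =>
    .tsum fun j => measurable_one.indicator (measurableSet_toMeasurable _ _)
  have hfiber : ∀ y, ((f ⁻¹' {y} ∩ s).encard : ℝ≥0∞) ≤ liminf (fun m => g m y) atTop := fun y =>
    (encard_preimage_inter_le_liminf hE ENNReal.tendsto_inv_nat_nhds_zero hdiam f s y).trans <|
      liminf_le_liminf <| .of_forall fun m => ENNReal.tsum_le_tsum fun j =>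
        indicator_le_indicator_of_subset (subset_toMeasurable _ _) (fun _ => zero_le_one) y
  calc ∫⁻ y, ((f ⁻¹' {y} ∩ s).encard : ℝ≥0∞) ∂μH[d]
      ≤ ∫⁻ y, liminf (fun m => g m y) atTop ∂μH[d] := lintegral_mono hfiber
    _ ≤ liminf (fun m => ∫⁻ y, g m y ∂μH[d]) atTop := lintegral_liminf_le hg
    _ ≤ (K : ℝ≥0∞) ^ d * μH[d] s := liminf_le_of_frequently_le' <| .of_forall fun m =>
        lintegral_tsum_indicator_toMeasurable_image_le hf hd (hEm m) (hEd m) (hE m) s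

end Eilenberg

theorem MeasureTheory.measure_le_of_le_on_cover {α : Type*} [MeasurableSpace α]
    {ν₁ ν₂ : Measure α} {s : Set α} (hs : MeasurableSet s) {B : ℕ → Set α}
    (hB : ∀ n, MeasurableSet (B n)) (hsB : s ⊆ ⋃ n, B n)
    (h : ∀ t ⊆ s, MeasurableSet t → (∃ n, t ⊆ B n) → ν₁ t ≤ ν₂ t) : ν₁ s ≤ ν₂ s := by
  set D := disjointed fun n => s ∩ B n
  have hD : ∀ n, MeasurableSet (D n) := .disjointed fun n => hs.inter (hB n)
  have hDs : ∀ n, D n ⊆ s ∩ B n := disjointed_subset _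
  have hsD : ⋃ n, D n = s := by rw [iUnion_disjointed, ← inter_iUnion, inter_eq_left.2 hsB]
  rw [← hsD, measure_iUnion (disjoint_disjointed _) hD, measure_iUnion (disjoint_disjointed _) hD]
  exact ENNReal.tsum_le_tsum fun n =>
    h _ ((hDs n).trans inter_subset_left) (hD n) ⟨n, (hDs n).trans inter_subset_right⟩

theorem abs_inner_sub_inner_le {E : Type*} [NormedAddCommGroup E] [InnerProductSpace ℝ E]
    {x y x' y' : E} {δ : ℝ} (hx : ‖x‖ ≤ 1) (hy : ‖y‖ ≤ 1) (hx' : ‖x' - x‖ ≤ δ)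
    (hy' : ‖y' - y‖ ≤ δ) (hδ : δ ≤ 1) : |⟪x', y'⟫ - ⟪x, y⟫| ≤ 3 * δ := by
  have hδ₀ : 0 ≤ δ := (norm_nonneg _).trans hx'
  have hsplit : ⟪x', y'⟫ - ⟪x, y⟫ = ⟪x' - x, y⟫ + ⟪x, y' - y⟫ + ⟪x' - x, y' - y⟫ := by
    simp only [inner_sub_left, inner_sub_right]; ring
  have h₁ : |⟪x' - x, y⟫| ≤ δ * 1 := (abs_real_inner_le_norm _ _).trans <|
    mul_le_mul hx' hy (norm_nonneg _) hδ₀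
  have h₂ : |⟪x, y' - y⟫| ≤ 1 * δ := (abs_real_inner_le_norm _ _).trans <|
    mul_le_mul hx hy' (norm_nonneg _) zero_le_one
  have h₃ : |⟪x' - x, y' - y⟫| ≤ δ * 1 := (abs_real_inner_le_norm _ _).trans <|
    mul_le_mul hx' (hy'.trans hδ) (norm_nonneg _) hδ₀
  rw [hsplit]
  linarith [abs_add_three ⟪x' - x, y⟫ ⟪x, y' - y⟫ ⟪x' - x, y' - y⟫]

-- Stated for every `n = k` so that it applies to `Fin (finrank ℝ V)`, which is only
-- propositionally equal to `Fin k`.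
theorem exists_pos_forall_lt_sqrt_det {a : ℝ} (ha : a < 1) (k : ℕ) :
    ∃ δ > 0, ∀ {n : ℕ}, n = k → ∀ M : Matrix (Fin n) (Fin n) ℝ,
      (∀ i j, |M i j - (1 : Matrix (Fin n) (Fin n) ℝ) i j| ≤ δ) → a < √M.det := by
  let _ := Matrix.normedAddCommGroup (n := Fin k) (m := Fin k) (α := ℝ)
  have hcont : Continuous fun M : Matrix (Fin k) (Fin k) ℝ => √M.det :=
    continuous_id.matrix_det.sqrt
  obtain ⟨ε, hε, hnear⟩ := Metric.eventually_nhds_iff.1 <|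
    (hcont.tendsto 1).eventually_const_lt (by simpa using ha)
  refine ⟨ε / 2, half_pos hε, ?_⟩
  rintro n rfl M hM
  refine hnear (lt_of_le_of_lt ?_ (half_lt_self hε))
  rw [dist_eq_norm]
  exact (Matrix.norm_le_iff (half_pos hε).le).2 fun i j => hM i j

namespace Grassmannian

variable {E : Type*} [NormedAddCommGroup E] [InnerProductSpace ℝ E] {k : ℕ}

theorem lipschitzWith_proj (V : Grassmannian k E) : LipschitzWith 1 V.proj :=
  V.toSubmodule.lipschitzWith_starProjection

theorem proj_apply_of_mem {V : Grassmannian k E} {v : E} (hv : v ∈ V.toSubmodule) :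
    V.proj v = v :=
  Submodule.starProjection_eq_self_iff.2 hv

theorem isSeparable_range_proj [TopologicalSpace.SeparableSpace E] :
    TopologicalSpace.IsSeparable (range fun V : Grassmannian k E => V.proj) := by
  let Φ : (Fin k → E) → (E →L[ℝ] E) := fun b => ∑ i, InnerProductSpace.rankOne ℝ (b i) (b i)
  have hΦ : Continuous Φ := continuous_finsetSum _ fun i _ =>
    ((InnerProductSpace.rankOne ℝ).continuous.comp (continuous_apply i)).clm_apply
      (continuous_apply i)
  refine (TopologicalSpace.isSeparable_range hΦ).mono ?_
  rintro _ ⟨V, rfl⟩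
  let b := (stdOrthonormalBasis ℝ V.toSubmodule).reindex (finCongr V.rank)
  exact ⟨fun i => b i, (b.starProjection_eq_sum_rankOne).symm⟩

theorem exists_seq_dist_proj_lt [TopologicalSpace.SeparableSpace E] [Nonempty (Grassmannian k E)]
    {δ : ℝ} (hδ : 0 < δ) :
    ∃ W : ℕ → Grassmannian k E, ∀ V : Grassmannian k E, ∃ n, dist V.proj (W n).proj < δ := by
  have := isSeparable_range_proj (E := E) (k := k) |>.separableSpace
  have : Nonempty (range fun V : Grassmannian k E => V.proj) := .map (fun V => ⟨_, V, rfl⟩) ‹_›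
  obtain ⟨u, hu⟩ := TopologicalSpace.exists_dense_seq (range fun V : Grassmannian k E => V.proj)
  choose W hW using fun n => (u n).2
  refine ⟨W, fun V => ?_⟩
  obtain ⟨n, hn⟩ := hu.exists_dist_lt ⟨V.proj, V, rfl⟩ hδ
  rw [Subtype.dist_eq, ← hW] at hn
  exact ⟨n, hn⟩

theorem exists_pos_forall_lt_mdet {a : ℝ} (ha : a < 1) :
    ∃ δ > 0, ∀ V W : Grassmannian k E, dist W.proj V.proj < δ → a < mdet W.proj V := by
  obtain ⟨δ, hδ, hdet⟩ := exists_pos_forall_lt_sqrt_det ha k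
  refine ⟨min (δ / 3) 1, by positivity, fun V W hVW => hdet V.rank _ fun i j => ?_⟩
  set e := stdOrthonormalBasis ℝ V.toSubmodule
  have hunit : ∀ i, ‖(e i : E)‖ = 1 := fun i => e.orthonormal.1 i
  have he : ∀ i, ‖W.proj (e i) - e i‖ ≤ min (δ / 3) 1 := fun i => calc
    ‖W.proj (e i) - e i‖ = ‖(W.proj - V.proj) (e i)‖ := by
      rw [sub_apply, proj_apply_of_mem (e i).2]
    _ ≤ ‖W.proj - V.proj‖ * ‖(e i : E)‖ := ContinuousLinearMap.le_opNorm _ _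
    _ = dist W.proj V.proj := by rw [hunit, mul_one, dist_eq_norm]
    _ ≤ min (δ / 3) 1 := hVW.le
  have hone : (1 : Matrix _ _ ℝ) i j = ⟪(e i : E), e j⟫ := by
    rw [Matrix.one_apply, ← orthonormal_iff_ite.1 e.orthonormal i j, Submodule.coe_inner]
  rw [Matrix.of_apply, hone]
  linarith [abs_inner_sub_inner_le (hunit i).le (hunit j).le (he i) (he j) (min_le_right _ _),
    min_le_left (δ / 3) 1]

end Grassmannian

theorem projCount_le_hausdorffMeasure {E : Type*} [NormedAddCommGroup E] [InnerProductSpace ℝ E]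
    [MeasurableSpace E] [BorelSpace E] [SecondCountableTopology E] {k : ℕ}
    (V : Grassmannian k E) (A : Set E) : projCount k V A ≤ μH[(k : ℝ)] A := by
  have := lintegral_encard_preimage_inter_le V.lipschitzWith_proj (Nat.cast_nonneg k) A
  rw [ENNReal.coe_one, ENNReal.one_rpow, one_mul] at this
  exact (setLIntegral_le_lintegral _ _).trans this

theorem mu_le_hausdorff_general
    [SecondCountableTopology H]
    (k : ℕ) (R : Set H) (μ : Measure H) (T : H → Grassmannian k H) (hT : Measurable T)
    (h : ∀ V : Grassmannian k H, ∀ A ⊆ R, MeasurableSet A →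
      projCount k V A = ∫⁻ x in A, ENNReal.ofReal (mdet V.proj (T x)) ∂μ) :
    ∀ A ⊆ R, MeasurableSet A → μ A ≤ μH[(k : ℝ)] A := by
  intro A hAR hA
  refine ENNReal.le_of_forall_lt_one_mul_le fun a ha => ?_
  rcases A.eq_empty_or_nonempty with rfl | ⟨x₀, -⟩
  · simp
  have : Nonempty (Grassmannian k H) := ⟨T x₀⟩
  obtain ⟨δ, hδ, hmdet⟩ := Grassmannian.exists_pos_forall_lt_mdet (E := H) (k := k)
    ((ENNReal.toReal_lt_toReal ha.ne_top ENNReal.one_ne_top).2 ha)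
  obtain ⟨W, hW⟩ := Grassmannian.exists_seq_dist_proj_lt (E := H) (k := k) hδ
  have hB : ∀ n, MeasurableSet {x | dist (T x).proj (W n).proj < δ} := fun n =>
    ((comap_measurable _).comp hT) Metric.isOpen_ball.measurableSet
  refine measure_le_of_le_on_cover (ν₁ := a • μ) hA hB (fun x _ => mem_iUnion.2 (hW (T x)))
    fun t htA ht ⟨n, htn⟩ => ?_
  have hat : ∀ x ∈ t, a ≤ ENNReal.ofReal (mdet (W n).proj (T x)) := fun x hx =>
    (ENNReal.ofReal_toReal ha.ne_top).symm.trans_le <| ENNReal.ofReal_le_ofReal <|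
      (hmdet (T x) (W n) (by rw [dist_comm]; exact htn hx)).le
  calc (a • μ) t = ∫⁻ _ in t, a ∂μ := by simp
    _ ≤ ∫⁻ x in t, ENNReal.ofReal (mdet (W n).proj (T x)) ∂μ := setLIntegral_mono' ht hat
    _ = projCount k (W n) t := (h _ t (htA.trans hAR) ht).symm
    _ ≤ μH[(k : ℝ)] t := projCount_le_hausdorffMeasure _ _

/-- **The candidate measure is dominated by Hausdorff measure.**
If a pair `(μ, T)` satisfies the projection change-of-variables identity on `R ⊆ H`,
then `μ(A) ≤ H^k(A)` for every measurable `A ⊆ R`. -/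
theorem mu_le_hausdorff
    [CompleteSpace H] [SecondCountableTopology H]
    (k : ℕ) (R : Set H) (μ : Measure H) (T : H → Grassmannian k H) (hT : Measurable T)
    (h : ∀ V : Grassmannian k H, ∀ A ⊆ R, MeasurableSet A →
      projCount k V A = ∫⁻ x in A, ENNReal.ofReal (mdet V.proj (T x)) ∂μ) :
    ∀ A ⊆ R, MeasurableSet A → μ A ≤ μH[(k : ℝ)] A :=
  mu_le_hausdorff_general k R μ T hT h

end
end

section
/- Let S be a subset of a Hilbert space H with dem(S) = k (the demension, i.e. dimension of embedding, of S). Then H^k(S) > 0; in particular the Hausdorff dimension of S is at least dem(S). -/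
open Metric Module Set MeasureTheory
open scoped ENNReal NNReal

noncomputable section

variable {H : Type*} [NormedAddCommGroup H] [InnerProductSpace ℝ H] [FiniteDimensional ℝ H]

/-- `P` is a piecewise linear polyhedron of dimension `m`: a finite nonempty union of
`m`-simplices (convex hulls of `m + 1` affinely independent points). -/
def IsPLPolyhedron (m : ℕ) (P : Set H) : Prop :=
  ∃ (n : ℕ) (pts : Fin (n + 1) → Fin (m + 1) → H),
    (∀ i, AffineIndependent ℝ (pts i)) ∧
    P = ⋃ i, convexHull ℝ (Set.range (pts i))

/-- `dem S ≥ k` (Štan'ko's demension): there exist a PL polyhedron `P` of dimension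
`d − k` (`d = dim H`) and `ε > 0` such that every `ε`-small ambient isotopy that fixes the
complement of the `ε`-neighborhood of `P ∩ S` carries `P` onto a set meeting `S`. -/
def DemGE (S : Set H) (k : ℕ) : Prop :=
  ∃ (P : Set H) (ε : ℝ), 0 < ε ∧ IsPLPolyhedron (finrank ℝ H - k) P ∧
    ∀ F : ℝ → H → H, Continuous (fun p : ℝ × H => F p.1 p.2) →
      (∀ t ∈ Set.Icc (0 : ℝ) 1, IsHomeomorph (F t)) → F 0 = id →
      (∀ t ∈ Set.Icc (0 : ℝ) 1, ∀ x, dist x (F t x) ≤ ε) →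
      (∀ t ∈ Set.Icc (0 : ℝ) 1, ∀ x ∉ thickening ε (P ∩ S), F t x = x) →
      (F 1 '' P ∩ S).Nonempty

/-- `dem S = k`: `k` is the largest integer with `dem S ≥ k`. -/
def DemEq (S : Set H) (k : ℕ) : Prop :=
  DemGE S k ∧ ∀ m : ℕ, DemGE S m → m ≤ k

section AuxLemmas


/-- Extract an efficient cover from vanishing Hausdorff measure. -/
lemma exists_cover_of_hausdorffMeasure_zero {Y : Type*} [EMetricSpace Y] [MeasurableSpace Y]
    [BorelSpace Y] {B : Set Y} {k : ℝ} (hk : 0 < k) (hB : μH[k] B = 0)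
    {r η : ℝ≥0∞} (hr : 0 < r) (hη : 0 < η) :
    ∃ t : ℕ → Set Y, (B ⊆ ⋃ j, t j) ∧ (∀ j, EMetric.diam (t j) ≤ r) ∧
      ∑' j, EMetric.diam (t j) ^ k < η := by
  have h := hB
  rw [MeasureTheory.Measure.hausdorffMeasure_apply] at h
  have h2 : (⨅ (t : ℕ → Set Y) (_ : B ⊆ ⋃ n, t n) (_ : ∀ n, EMetric.diam (t n) ≤ r),
      ∑' n, ⨆ _ : (t n).Nonempty, EMetric.diam (t n) ^ k) = 0 := by
    refine le_antisymm ?_ zero_le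
    rw [← h]
    exact le_iSup₂ (f := fun (r' : ℝ≥0∞) (_ : 0 < r') =>
      ⨅ (t : ℕ → Set Y) (_ : B ⊆ ⋃ n, t n) (_ : ∀ n, EMetric.diam (t n) ≤ r'),
        ∑' n, ⨆ _ : (t n).Nonempty, EMetric.diam (t n) ^ k) r hr
  have h3 : (⨅ (t : ℕ → Set Y) (_ : B ⊆ ⋃ n, t n) (_ : ∀ n, EMetric.diam (t n) ≤ r),
      ∑' n, ⨆ _ : (t n).Nonempty, EMetric.diam (t n) ^ k) < η := by rw [h2]; exact hη
  obtain ⟨t, h4⟩ := iInf_lt_iff.1 h3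
  obtain ⟨hcov, h5⟩ := iInf_lt_iff.1 h4
  obtain ⟨hdiam, h6⟩ := iInf_lt_iff.1 h5
  refine ⟨t, hcov, hdiam, lt_of_le_of_lt (ENNReal.tsum_le_tsum fun n => ?_) h6⟩
  by_cases hne : (t n).Nonempty
  · exact le_iSup (fun _ : (t n).Nonempty => EMetric.diam (t n) ^ k) hne
  · rw [Set.not_nonempty_iff_eq_empty] at hne
    simp [hne, EMetric.diam, ENNReal.zero_rpow_of_pos hk]

lemma diam_prod_le {X Y : Type*} [PseudoEMetricSpace X] [PseudoEMetricSpace Y]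
    (A : Set X) (C : Set Y) : EMetric.diam (A ×ˢ C) ≤ max (EMetric.diam A) (EMetric.diam C) := by
  refine EMetric.diam_le fun p hp q hq => ?_
  rw [Prod.edist_eq]
  exact max_le_max (EMetric.edist_le_diam_of_mem hp.1 hq.1) (EMetric.edist_le_diam_of_mem hp.2 hq.2)

open Filter in
/-- If `B` is `H^k`-null then the product of the unit cube (dimension `m`) with `B`
is `H^(m+k)`-null. -/
lemma hausdorff_prod_cube_null {Y : Type*} [MetricSpace Y] [MeasurableSpace Y] [BorelSpace Y]
    (m k : ℕ) (hk : 1 ≤ k) {B : Set Y} (hB : μH[(k : ℝ)] B = 0) :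
    μH[((m : ℝ) + k)] (((univ : Set (Fin m)).pi fun _ => Icc (0:ℝ) 1) ×ˢ B) = 0 := by
  classical
  set d : ℝ := (m : ℝ) + k with hd
  have hk1 : (1:ℝ) ≤ (k:ℝ) := by exact_mod_cast hk
  have hk0 : (0:ℝ) < (k:ℝ) := lt_of_lt_of_le one_pos hk1
  have hd0 : 0 < d := by positivity
  have hhalf : (0:ℝ≥0∞) < (2:ℝ≥0∞)⁻¹ := by simp
  have key : ∀ q : ℕ, ∃ u : ℕ × (Fin m → ℕ) → Set ((Fin m → ℝ) × Y),
      (∀ i, EMetric.diam (u i) ≤ (2:ℝ≥0∞)⁻¹ ^ q) ∧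
      ((((univ : Set (Fin m)).pi fun _ => Icc (0:ℝ) 1) ×ˢ B) ⊆ ⋃ i, u i) ∧
      ∑' i, EMetric.diam (u i) ^ d ≤ 2 ^ m * (3 * (2:ℝ≥0∞)⁻¹ ^ q) := by
    intro q
    set r₁ : ℝ≥0∞ := min ((2:ℝ≥0∞)⁻¹ ^ q) 1 with hr₁
    have hr₁0 : 0 < r₁ := lt_min (ENNReal.pow_pos hhalf q) one_pos
    have hr₁1 : r₁ ≤ 1 := min_le_right _ _
    have hr₁q : r₁ ≤ (2:ℝ≥0∞)⁻¹ ^ q := min_le_left _ _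
    obtain ⟨c, hc0, hcr⟩ := ENNReal.lt_iff_exists_nnreal_btwn.1 hr₁0
    obtain ⟨t, hcov, hdiam, hsum⟩ := exists_cover_of_hausdorffMeasure_zero hk0 hB hr₁0
      (ENNReal.pow_pos hhalf q)
    set s : ℕ → ℝ≥0∞ := fun j => max (EMetric.diam (t j)) ((c:ℝ≥0∞) * (2:ℝ≥0∞)⁻¹ ^ j) with hs
    have hcle : ∀ j, (c:ℝ≥0∞) * (2:ℝ≥0∞)⁻¹ ^ j ≤ (c:ℝ≥0∞) := fun j => by
      calc (c:ℝ≥0∞) * (2:ℝ≥0∞)⁻¹ ^ j ≤ (c:ℝ≥0∞) * 1 := by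
            gcongr
            exact pow_le_one' (by simp [ENNReal.inv_le_one]) j
        _ = c := mul_one _
    have hs_pos : ∀ j, 0 < s j := fun j =>
      lt_max_of_lt_right (ENNReal.mul_pos hc0.ne' (ENNReal.pow_pos hhalf j).ne')
    have hs_le : ∀ j, s j ≤ r₁ := fun j =>
      max_le (hdiam j) ((hcle j).trans hcr.le)
    have hs_top : ∀ j, s j ≠ ⊤ := fun j => ((hs_le j).trans_lt
      (lt_of_le_of_lt hr₁1 (by norm_num))).ne
    set a : ℕ → ℝ := fun j => (s j).toReal with ha
    have ha_pos : ∀ j, 0 < a j := fun j => ENNReal.toReal_pos (hs_pos j).ne' (hs_top j)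
    have ha_le1 : ∀ j, a j ≤ 1 := fun j => by
      have := (hs_le j).trans hr₁1
      simpa [ha] using ENNReal.toReal_mono (by norm_num) this
    have hsa : ∀ j, ENNReal.ofReal (a j) = s j := fun j => ENNReal.ofReal_toReal (hs_top j)
    set N : ℕ → ℕ := fun j => ⌈1 / a j⌉₊ with hN
    have hN1 : ∀ j, 1 ≤ N j := fun j => Nat.one_le_ceil_iff.2 (div_pos one_pos (ha_pos j))
    have hNa : ∀ j, (1:ℝ) ≤ (N j) * a j := fun j => by
      have h1 : (1:ℝ) / a j ≤ N j := Nat.le_ceil _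
      calc (1:ℝ) = (1 / a j) * a j := (div_mul_cancel₀ 1 (ha_pos j).ne').symm
        _ ≤ (N j) * a j := mul_le_mul_of_nonneg_right h1 (ha_pos j).le
    set box : ℕ → (Fin m → ℕ) → Set (Fin m → ℝ) := fun j g =>
      (univ : Set (Fin m)).pi fun i => Icc ((g i : ℝ) * a j) ((g i + 1) * a j) with hbox
    have hboxdiam : ∀ j g, EMetric.diam (box j g) ≤ s j := fun j g => by
      refine (EMetric.diam_pi_le_of_le fun b => ?_)
      rw [Real.ediam_Icc]
      rw [← hsa j]
      exact ENNReal.ofReal_le_ofReal (by ring_nf; exact le_refl _)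
    refine ⟨fun i => if ∀ b, i.2 b < N i.1 then box i.1 i.2 ×ˢ t i.1 else ∅, ?_, ?_, ?_⟩
    · rintro ⟨j, g⟩
      by_cases hg : ∀ b, g b < N j
      · simp only [if_pos hg]
        calc EMetric.diam (box j g ×ˢ t j) ≤ max (EMetric.diam (box j g)) (EMetric.diam (t j)) := diam_prod_le _ _
          _ ≤ s j := max_le (hboxdiam j g) (le_max_left _ _)
          _ ≤ (2:ℝ≥0∞)⁻¹ ^ q := (hs_le j).trans hr₁q
      · simp [hg, EMetric.diam]
    · rintro ⟨x, b⟩ ⟨hx, hb⟩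
      obtain ⟨_, ⟨j, rfl⟩, hbj⟩ := hcov hb
      have hx' : ∀ i, x i ∈ Icc (0:ℝ) 1 := by
        intro i; exact hx i (mem_univ i)
      set g : Fin m → ℕ := fun i => min ⌊x i / a j⌋₊ (N j - 1) with hg
      have hglt : ∀ i, g i < N j := fun i =>
        lt_of_le_of_lt (min_le_right _ _) (Nat.sub_lt (hN1 j) one_pos)
      have hmem : x ∈ box j g := by
        intro i _
        have hxnn : (0:ℝ) ≤ x i := (hx' i).1
        have hfl : (⌊x i / a j⌋₊ : ℝ) ≤ x i / a j :=
          Nat.floor_le (div_nonneg hxnn (ha_pos j).le)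
        have hcancel : x i / a j * a j = x i := div_mul_cancel₀ _ (ha_pos j).ne'
        constructor
        · have h1 : ((g i : ℝ)) ≤ (⌊x i / a j⌋₊ : ℝ) := by exact_mod_cast min_le_left _ _
          calc ((g i : ℝ)) * a j ≤ (x i / a j) * a j :=
                mul_le_mul_of_nonneg_right (h1.trans hfl) (ha_pos j).le
            _ = x i := hcancel
        · rcases min_cases (⌊x i / a j⌋₊) (N j - 1) with ⟨he, _⟩ | ⟨he, hlt⟩
          · have h3 : x i / a j < ⌊x i / a j⌋₊ + 1 := Nat.lt_floor_add_one _
            have h2 : x i ≤ ((⌊x i / a j⌋₊ : ℝ) + 1) * a j := by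
              calc x i = (x i / a j) * a j := hcancel.symm
                _ ≤ ((⌊x i / a j⌋₊ : ℝ) + 1) * a j :=
                    mul_le_mul_of_nonneg_right h3.le (ha_pos j).le
            have hge : g i = ⌊x i / a j⌋₊ := he
            rw [hge]
            exact h2
          · have hge : g i = N j - 1 := he
            have hcast : ((N j - 1 : ℕ) : ℝ) + 1 = (N j : ℝ) := by
              have h5 := hN1 j
              push_cast [Nat.cast_sub h5]
              ring
            rw [hge, hcast]
            exact le_trans (hx' i).2 (hNa j)
      exact mem_iUnion.2 ⟨(j, g), by simp only [if_pos hglt]; exact Set.mk_mem_prod hmem hbj⟩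
    · have hstep : ∀ i : ℕ × (Fin m → ℕ),
          EMetric.diam (if ∀ b, i.2 b < N i.1 then box i.1 i.2 ×ˢ t i.1 else ∅) ^ d
            ≤ (if ∀ b, i.2 b < N i.1 then s i.1 ^ d else 0) := by
        rintro ⟨j, g⟩
        by_cases hg : ∀ b, g b < N j
        · simp only [if_pos hg]
          refine ENNReal.rpow_le_rpow ?_ hd0.le
          calc EMetric.diam (box j g ×ˢ t j) ≤ max (EMetric.diam (box j g)) (EMetric.diam (t j)) := diam_prod_le _ _
            _ ≤ s j := max_le (hboxdiam j g) (le_max_left _ _)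
        · simp [hg, EMetric.diam, ENNReal.zero_rpow_of_pos hd0]
      calc ∑' i : ℕ × (Fin m → ℕ), EMetric.diam (if ∀ b, i.2 b < N i.1 then box i.1 i.2 ×ˢ t i.1 else ∅) ^ d
          ≤ ∑' i : ℕ × (Fin m → ℕ), (if ∀ b, i.2 b < N i.1 then s i.1 ^ d else 0) :=
            ENNReal.tsum_le_tsum hstep
        _ = ∑' (j : ℕ) (g : Fin m → ℕ), (if ∀ b, g b < N j then s j ^ d else 0) := by
            rw [ENNReal.tsum_prod']
        _ ≤ ∑' j : ℕ, 2 ^ m * s j ^ (k:ℝ) := by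
            refine ENNReal.tsum_le_tsum fun j => ?_
            have hcard : ∑' g : Fin m → ℕ, (if ∀ b, g b < N j then s j ^ d else 0)
                = (N j ^ m : ℕ) * s j ^ d := by
              have h7 : ∀ g : Fin m → ℕ,
                  g ∉ Fintype.piFinset (fun _ : Fin m => Finset.range (N j)) →
                  (if ∀ b, g b < N j then s j ^ d else (0:ℝ≥0∞)) = 0 := by
                intro g hg
                rw [if_neg]
                intro hall
                exact hg (by simpa [Fintype.mem_piFinset, Finset.mem_range] using hall)
              rw [tsum_eq_sum h7]
              have h8 : ∀ g ∈ Fintype.piFinset (fun _ : Fin m => Finset.range (N j)),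
                  (if ∀ b, g b < N j then s j ^ d else (0:ℝ≥0∞)) = s j ^ d := by
                intro g hg
                rw [if_pos]
                simpa [Fintype.mem_piFinset, Finset.mem_range] using hg
              rw [Finset.sum_congr rfl h8, Finset.sum_const, Fintype.card_piFinset_const]
              simp [Finset.card_range, nsmul_eq_mul]
            rw [hcard]
            have hNle : ((N j ^ m : ℕ) : ℝ≥0∞) ≤ (2 * (s j)⁻¹) ^ m := by
              push_cast
              gcongr
              have h1 : (N j : ℝ) ≤ 2 / a j := by
                have h1a : (N j : ℝ) < 1 / a j + 1 :=
                  Nat.ceil_lt_add_one (le_of_lt (div_pos one_pos (ha_pos j)))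
                have h1b : (1:ℝ) ≤ 1 / a j := by
                  rw [le_div_iff₀ (ha_pos j)]
                  simpa using ha_le1 j
                have h1c : (2:ℝ) / a j = 1 / a j + 1 / a j := by ring
                linarith
              calc ((N j : ℕ) : ℝ≥0∞) = ENNReal.ofReal (N j : ℝ) := by
                    simp [ENNReal.ofReal_natCast]
                _ ≤ ENNReal.ofReal (2 / a j) := ENNReal.ofReal_le_ofReal h1
                _ = ENNReal.ofReal 2 / ENNReal.ofReal (a j) := by
                    rw [ENNReal.ofReal_div_of_pos (ha_pos j)]
                _ = 2 * (s j)⁻¹ := by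
                    rw [hsa j, div_eq_mul_inv]; norm_num
            calc ((N j ^ m : ℕ) : ℝ≥0∞) * s j ^ d ≤ (2 * (s j)⁻¹) ^ m * s j ^ d := by gcongr
              _ = 2 ^ m * s j ^ (k:ℝ) := by
                  rw [mul_pow, hd, ENNReal.rpow_add _ _ (hs_pos j).ne' (hs_top j)]
                  rw [ENNReal.rpow_natCast]
                  rw [mul_assoc, ← mul_assoc ((s j)⁻¹ ^ m), ← mul_pow,
                    ENNReal.inv_mul_cancel (hs_pos j).ne' (hs_top j), one_pow, one_mul]
        _ = 2 ^ m * ∑' j : ℕ, s j ^ (k:ℝ) := ENNReal.tsum_mul_left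
        _ ≤ 2 ^ m * (3 * (2:ℝ≥0∞)⁻¹ ^ q) := by
            gcongr
            have hsk : ∀ j, s j ^ (k:ℝ) ≤ EMetric.diam (t j) ^ (k:ℝ) + (c:ℝ≥0∞) * (2:ℝ≥0∞)⁻¹ ^ j := by
              intro j
              have hmono : Monotone fun x : ℝ≥0∞ => x ^ (k:ℝ) :=
                fun x y hxy => ENNReal.rpow_le_rpow hxy hk0.le
              have : s j ^ (k:ℝ) = max (EMetric.diam (t j) ^ (k:ℝ)) (((c:ℝ≥0∞) * (2:ℝ≥0∞)⁻¹ ^ j) ^ (k:ℝ)) :=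
                hmono.map_max
              rw [this]
              refine max_le (le_add_of_le_of_nonneg le_rfl zero_le) ?_
              refine le_add_of_le_of_nonneg ?_ zero_le |>.trans (add_comm _ _).le
              calc ((c:ℝ≥0∞) * (2:ℝ≥0∞)⁻¹ ^ j) ^ (k:ℝ)
                  ≤ ((c:ℝ≥0∞) * (2:ℝ≥0∞)⁻¹ ^ j) ^ (1:ℝ) := by
                    refine ENNReal.rpow_le_rpow_of_exponent_ge ?_ hk1
                    exact le_trans (hcle j) (hcr.le.trans hr₁1)
                _ = (c:ℝ≥0∞) * (2:ℝ≥0∞)⁻¹ ^ j := ENNReal.rpow_one _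
            calc ∑' j : ℕ, s j ^ (k:ℝ)
                ≤ ∑' j : ℕ, (EMetric.diam (t j) ^ (k:ℝ) + (c:ℝ≥0∞) * (2:ℝ≥0∞)⁻¹ ^ j) :=
                  ENNReal.tsum_le_tsum hsk
              _ = (∑' j : ℕ, EMetric.diam (t j) ^ (k:ℝ)) + (c:ℝ≥0∞) * ∑' j : ℕ, (2:ℝ≥0∞)⁻¹ ^ j := by
                  rw [ENNReal.tsum_add, ENNReal.tsum_mul_left]
              _ ≤ (2:ℝ≥0∞)⁻¹ ^ q + (c:ℝ≥0∞) * 2 := by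
                  refine add_le_add hsum.le (mul_le_mul_right ?_ _)
                  rw [ENNReal.tsum_geometric, ENNReal.one_sub_inv_two, inv_inv]
              _ ≤ (2:ℝ≥0∞)⁻¹ ^ q + (2:ℝ≥0∞)⁻¹ ^ q * 2 := by
                  gcongr
                  exact (hcr.le.trans hr₁q)
              _ = 3 * (2:ℝ≥0∞)⁻¹ ^ q := by ring
  choose u hud hucov hus using key
  have htend : Tendsto (fun q : ℕ => (2:ℝ≥0∞)⁻¹ ^ q) atTop (nhds 0) :=
    ENNReal.tendsto_pow_atTop_nhds_zero_of_lt_one (by norm_num)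
  have hle := Measure.hausdorffMeasure_le_liminf_tsum d
    ((((univ : Set (Fin m)).pi fun _ => Icc (0:ℝ) 1)) ×ˢ B)
    (fun q : ℕ => (2:ℝ≥0∞)⁻¹ ^ q) htend u
    (Eventually.of_forall hud) (Eventually.of_forall hucov)
  refine le_antisymm (hle.trans ?_) zero_le
  have h0 : Tendsto (fun q : ℕ => 2 ^ m * (3 * (2:ℝ≥0∞)⁻¹ ^ q)) atTop (nhds 0) := by
    have h1 : Tendsto (fun q : ℕ => (2:ℝ≥0∞) ^ m * 3 * (2:ℝ≥0∞)⁻¹ ^ q) atTop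
        (nhds ((2:ℝ≥0∞) ^ m * 3 * 0)) :=
      ENNReal.Tendsto.const_mul htend (Or.inr (ENNReal.mul_ne_top (ENNReal.pow_ne_top (by norm_num)) (by norm_num)))
    rw [mul_zero] at h1
    refine h1.congr fun q => by ring
  calc liminf (fun q => ∑' i, EMetric.diam (u q i) ^ d) atTop
      ≤ liminf (fun q : ℕ => 2 ^ m * (3 * (2:ℝ≥0∞)⁻¹ ^ q)) atTop :=
        liminf_le_liminf (Eventually.of_forall hus)
    _ = 0 := h0.liminf_eq

/-- A simplex is contained in a Lipschitz image of the unit cube. -/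
lemma simplex_subset_lipschitz_cube [FiniteDimensional ℝ H] {m : ℕ} (qp : Fin (m+1) → H) :
    ∃ T : (Fin m → ℝ) → H, (∃ K : ℝ≥0, LipschitzWith K T) ∧
      convexHull ℝ (Set.range qp) ⊆ T '' ((univ : Set (Fin m)).pi fun _ => Icc (0:ℝ) 1) := by
  classical
  set L : (Fin m → ℝ) →ₗ[ℝ] H :=
    { toFun := fun x => ∑ j : Fin m, x j • (qp j.succ - qp 0)
      map_add' := by intro x y; simp [add_smul, Finset.sum_add_distrib]
      map_smul' := by intro c x; simp [smul_smul, Finset.smul_sum] } with hL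
  set T : (Fin m → ℝ) → H := fun x => qp 0 + L x with hT
  have hLcont : Continuous L := L.continuous_of_finiteDimensional
  refine ⟨T, ?_, ?_⟩
  · refine ⟨‖LinearMap.toContinuousLinearMap L‖₊, ?_⟩
    have hL' : LipschitzWith ‖LinearMap.toContinuousLinearMap L‖₊ (⇑L) :=
      (LinearMap.toContinuousLinearMap L).lipschitz
    exact LipschitzWith.of_dist_le_mul fun x y => by
      have := hL'.dist_le_mul x y
      simpa [hT, dist_add_left] using this
  · have hcube : Convex ℝ ((univ : Set (Fin m)).pi fun _ => Icc (0:ℝ) 1) :=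
      convex_pi fun i _ => convex_Icc 0 1
    have himg : Convex ℝ (T '' ((univ : Set (Fin m)).pi fun _ => Icc (0:ℝ) 1)) := by
      have h1 := (hcube.linear_image L).translate (qp 0)
      rwa [← image_comp] at h1
    refine convexHull_min ?_ himg
    rintro _ ⟨i, rfl⟩
    induction i using Fin.cases with
    | zero =>
        refine ⟨0, fun i _ => ⟨le_refl 0, zero_le_one⟩, ?_⟩
        simp [hT]
    | succ j =>
        refine ⟨Pi.single j 1, fun i _ => ?_, ?_⟩
        · rcases eq_or_ne i j with rfl | hij
          · simp
          · simp [Pi.single_apply, hij]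
        · simp only [hT, hL, LinearMap.coe_mk, AddHom.coe_mk, Pi.single_apply, ite_smul, one_smul,
            zero_smul]
          rw [Finset.sum_ite_eq' Finset.univ j]
          simp

lemma hausdorffMeasure_closedBall_ne_zero [MeasurableSpace H] [BorelSpace H]
    (hd1 : 1 ≤ finrank ℝ H) {δ : ℝ} (hδ : 0 < δ) :
    μH[(finrank ℝ H : ℝ)] (Metric.closedBall (0:H) δ) ≠ 0 := by
  classical
  set d := finrank ℝ H with hdd
  set e := (stdOrthonormalBasis ℝ H).repr with he
  have h1 : μH[(d:ℝ)] (e '' Metric.closedBall (0:H) δ) = μH[(d:ℝ)] (Metric.closedBall (0:H) δ) :=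
    e.isometry.hausdorffMeasure_image (Or.inl (by positivity)) _
  have h2 : e '' Metric.closedBall (0:H) δ = Metric.closedBall (0 : EuclideanSpace ℝ (Fin d)) δ := by
    calc ⇑e '' Metric.closedBall (0:H) δ = e.toIsometryEquiv '' Metric.closedBall (0:H) δ := rfl
      _ = Metric.closedBall (e.toIsometryEquiv 0) δ := e.toIsometryEquiv.image_closedBall _ _
      _ = Metric.closedBall (0 : EuclideanSpace ℝ (Fin d)) δ := by simp
  -- the "identity" map to the sup-metric pi space
  set f : EuclideanSpace ℝ (Fin d) → (Fin d → ℝ) := fun x i => x i with hf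
  have hflip : LipschitzWith 1 f := by
    refine LipschitzWith.of_dist_le_mul fun x y => ?_
    rw [NNReal.coe_one, one_mul, dist_pi_le_iff dist_nonneg]
    intro i
    rw [EuclideanSpace.dist_eq]
    have h3 : dist (x i) (y i) = Real.sqrt (dist (x i) (y i) ^ 2) :=
      (Real.sqrt_sq dist_nonneg).symm
    rw [h3]
    apply Real.sqrt_le_sqrt
    exact Finset.single_le_sum (f := fun i => dist (x i) (y i) ^ 2)
      (fun _ _ => sq_nonneg _) (Finset.mem_univ i)
  have h4 : μH[(d:ℝ)] (f '' Metric.closedBall (0 : EuclideanSpace ℝ (Fin d)) δ)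
      ≤ 1 ^ (d:ℝ) * μH[(d:ℝ)] (Metric.closedBall (0 : EuclideanSpace ℝ (Fin d)) δ) :=
    hflip.hausdorffMeasure_image_le (by positivity) _
  rw [ENNReal.one_rpow, one_mul] at h4
  -- lower bound via Lebesgue on the pi space
  have h5 : Metric.closedBall (0 : Fin d → ℝ) (δ / d) ⊆
      f '' Metric.closedBall (0 : EuclideanSpace ℝ (Fin d)) δ := by
    intro y hy
    refine ⟨(EuclideanSpace.equiv (Fin d) ℝ).symm y, ?_, rfl⟩
    rw [mem_closedBall, dist_zero_right] at hy ⊢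
    rw [EuclideanSpace.norm_eq]
    have hyi : ∀ i, |y i| ≤ δ / d := by
      intro i
      have := dist_le_pi_dist y 0 i
      simpa [Real.dist_eq] using this.trans (by simpa [dist_zero_right] using hy)
    have hsum : ∑ i : Fin d, ‖y i‖ ^ 2 ≤ δ ^ 2 := by
      have hd0 : (0:ℝ) < d := by exact_mod_cast hd1
      calc ∑ i : Fin d, ‖y i‖ ^ 2 ≤ ∑ _i : Fin d, (δ / d) ^ 2 :=
            Finset.sum_le_sum fun i _ => by
              have := hyi i
              exact pow_le_pow_left₀ (abs_nonneg _) (by simpa [Real.norm_eq_abs] using this) 2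
        _ = d * (δ / d) ^ 2 := by simp [Finset.sum_const, mul_comm]
        _ = δ ^ 2 / d := by
            have hd0' : (d:ℝ) ≠ 0 := by
              have : (1:ℝ) ≤ d := by exact_mod_cast hd1
              linarith
            field_simp
        _ ≤ δ ^ 2 := div_le_self (by positivity) (by exact_mod_cast hd1)
    calc Real.sqrt (∑ i : Fin d, ‖y i‖ ^ 2) ≤ Real.sqrt (δ ^ 2) := Real.sqrt_le_sqrt hsum
      _ = δ := Real.sqrt_sq hδ.le
  have h6 : (0:ℝ≥0∞) < volume (Metric.closedBall (0 : Fin d → ℝ) (δ / d)) := by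
    rw [Real.volume_pi_closedBall _ (by positivity)]
    apply ENNReal.ofReal_pos.2
    positivity
  have h7 : (μH[(d:ℝ)] : Measure (Fin d → ℝ)) = volume := by
    have := MeasureTheory.hausdorffMeasure_pi_real (ι := Fin d)
    simpa using this
  intro hzero
  rw [← h1, h2] at hzero
  have h8 : μH[(d:ℝ)] (f '' Metric.closedBall (0 : EuclideanSpace ℝ (Fin d)) δ) = 0 :=
    le_antisymm (h4.trans_eq hzero) zero_le
  have h9 : μH[(d:ℝ)] (Metric.closedBall (0 : Fin d → ℝ) (δ / d)) = 0 :=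
    measure_mono_null h5 h8
  rw [h7] at h9
  exact h6.ne' h9

/-- A Lipschitz-small perturbation of the identity is a homeomorphism. -/
lemma isHomeomorph_add_of_lipschitzWith {ψ : H → H} {c : ℝ≥0} (hc : c < 1)
    (hψ : LipschitzWith c ψ) : IsHomeomorph fun x : H => x + ψ x := by
  have happ : ApproximatesLinearOn (fun x : H => x + ψ x)
      ((ContinuousLinearEquiv.refl ℝ H : H ≃L[ℝ] H) : H →L[ℝ] H) univ c := by
    intro x _ y _
    have h1 := hψ.dist_le_mul x y
    rw [dist_eq_norm] at h1
    have h2 : x + ψ x - (y + ψ y) -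
        ((ContinuousLinearEquiv.refl ℝ H : H ≃L[ℝ] H) : H →L[ℝ] H) (x - y) = ψ x - ψ y := by
      simp [ContinuousLinearEquiv.coe_refl']
      abel
    rw [h2, ← dist_eq_norm, ← dist_eq_norm]
    exact hψ.dist_le_mul x y
  have hcN : Subsingleton H ∨
      c < ‖(((ContinuousLinearEquiv.refl ℝ H : H ≃L[ℝ] H).symm :
        H ≃L[ℝ] H) : H →L[ℝ] H)‖₊⁻¹ := by
    rcases subsingleton_or_nontrivial H with h | h
    · exact Or.inl h
    · right
      have hs : (((ContinuousLinearEquiv.refl ℝ H : H ≃L[ℝ] H).symm : H ≃L[ℝ] H) : H →L[ℝ] H) =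
          ContinuousLinearMap.id ℝ H := rfl
      rw [hs, ContinuousLinearMap.nnnorm_id]
      simpa using hc
  have hcoe : ⇑(happ.toHomeomorph _ hcN) = fun x : H => x + ψ x := rfl
  rw [← hcoe]
  exact (happ.toHomeomorph _ hcN).isHomeomorph

/-- Lipschitz estimate for the "recover the translation vector" map. -/
lemma theta_lipschitzOnWith {m : ℕ} (T : (Fin m → ℝ) → H) (K : ℝ≥0) (hT : LipschitzWith K T)
    (φ : H → ℝ) (Lc : ℝ≥0) (hφ : LipschitzWith Lc φ)
    {a M : ℝ} (ha : 0 < a) (hM : 0 ≤ M)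
    {D : Set ((Fin m → ℝ) × H)} (hD : ∀ y ∈ D, a ≤ φ (T y.1) ∧ ‖y.2 - T y.1‖ ≤ M) :
    ∃ K' : ℝ≥0, LipschitzOnWith K'
      (fun y : (Fin m → ℝ) × H => (φ (T y.1))⁻¹ • (y.2 - T y.1)) D := by
  refine ⟨Real.toNNReal (a⁻¹ * (1 + K) + a⁻¹ * a⁻¹ * (Lc * K) * M), ?_⟩
  refine LipschitzOnWith.of_dist_le_mul fun y hy z hz => ?_
  obtain ⟨hya, hyM⟩ := hD y hy
  obtain ⟨hza, hzM⟩ := hD z hz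
  set gy := φ (T y.1) with hgy
  set gz := φ (T z.1) with hgz
  have hy0 : 0 < gy := lt_of_lt_of_le ha hya
  have hz0 : 0 < gz := lt_of_lt_of_le ha hza
  set u := y.2 - T y.1 with hu
  set v := z.2 - T z.1 with hv
  have hd1 : dist y.1 z.1 ≤ dist y z := by rw [Prod.dist_eq]; exact le_max_left _ _
  have hd2 : dist y.2 z.2 ≤ dist y z := by rw [Prod.dist_eq]; exact le_max_right _ _
  have key : dist (gy⁻¹ • u) (gz⁻¹ • v) ≤
      (a⁻¹ * (1 + K) + a⁻¹ * a⁻¹ * (Lc * K) * M) * dist y z := by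
    have hsplit : gy⁻¹ • u - gz⁻¹ • v = gy⁻¹ • (u - v) + (gy⁻¹ - gz⁻¹) • v := by
      module
    rw [dist_eq_norm, hsplit]
    have h1 : ‖gy⁻¹ • (u - v)‖ ≤ a⁻¹ * ((1 + K) * dist y z) := by
      rw [norm_smul, Real.norm_eq_abs, abs_of_pos (inv_pos.2 hy0)]
      have huv : ‖u - v‖ ≤ (1 + K) * dist y z := by
        have : u - v = (y.2 - z.2) - (T y.1 - T z.1) := by rw [hu, hv]; abel
        rw [this]
        calc ‖(y.2 - z.2) - (T y.1 - T z.1)‖ ≤ ‖y.2 - z.2‖ + ‖T y.1 - T z.1‖ := norm_sub_le _ _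
          _ ≤ dist y z + K * dist y z := by
              refine add_le_add ?_ ?_
              · rw [← dist_eq_norm]; exact hd2
              · rw [← dist_eq_norm]
                exact (hT.dist_le_mul _ _).trans
                  (mul_le_mul_of_nonneg_left hd1 K.coe_nonneg)
          _ = (1 + K) * dist y z := by ring
      have hainv : gy⁻¹ ≤ a⁻¹ := inv_anti₀ ha hya
      calc gy⁻¹ * ‖u - v‖ ≤ a⁻¹ * ‖u - v‖ :=
            mul_le_mul_of_nonneg_right hainv (norm_nonneg _)
        _ ≤ a⁻¹ * ((1 + K) * dist y z) :=
            mul_le_mul_of_nonneg_left huv (by positivity)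
    have h2 : ‖(gy⁻¹ - gz⁻¹) • v‖ ≤ a⁻¹ * a⁻¹ * (Lc * K) * M * dist y z := by
      rw [norm_smul, Real.norm_eq_abs]
      have hdiff : |gy⁻¹ - gz⁻¹| ≤ a⁻¹ * a⁻¹ * (Lc * K) * dist y z := by
        have heq : gy⁻¹ - gz⁻¹ = (gz - gy) / (gy * gz) := by
          field_simp
        rw [heq, abs_div, abs_of_pos (by positivity : (0:ℝ) < gy * gz)]
        have hnum : |gz - gy| ≤ (Lc * K) * dist y z := by
          have := hφ.dist_le_mul (T z.1) (T y.1)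
          rw [Real.dist_eq] at this
          calc |gz - gy| ≤ Lc * dist (T z.1) (T y.1) := this
            _ ≤ Lc * (K * dist z.1 y.1) :=
                mul_le_mul_of_nonneg_left (hT.dist_le_mul _ _) Lc.coe_nonneg
            _ = (Lc * K) * dist y.1 z.1 := by rw [dist_comm]; ring
            _ ≤ (Lc * K) * dist y z := mul_le_mul_of_nonneg_left hd1 (by positivity)
        have hden : a * a ≤ gy * gz := mul_le_mul hya hza ha.le hy0.le
        calc |gz - gy| / (gy * gz) ≤ ((Lc * K) * dist y z) / (a * a) := by
              apply div_le_div₀ (by positivity) hnum (by positivity) hden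
          _ = a⁻¹ * a⁻¹ * (Lc * K) * dist y z := by field_simp
      calc |gy⁻¹ - gz⁻¹| * ‖v‖ ≤ (a⁻¹ * a⁻¹ * (Lc * K) * dist y z) * M := by
            apply mul_le_mul hdiff hzM (norm_nonneg _) (by positivity)
        _ = a⁻¹ * a⁻¹ * (Lc * K) * M * dist y z := by ring
    calc ‖gy⁻¹ • (u - v) + (gy⁻¹ - gz⁻¹) • v‖
        ≤ ‖gy⁻¹ • (u - v)‖ + ‖(gy⁻¹ - gz⁻¹) • v‖ := norm_add_le _ _
      _ ≤ a⁻¹ * ((1 + K) * dist y z) + a⁻¹ * a⁻¹ * (Lc * K) * M * dist y z := add_le_add h1 h2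
      _ = (a⁻¹ * (1 + K) + a⁻¹ * a⁻¹ * (Lc * K) * M) * dist y z := by ring
  refine key.trans (mul_le_mul_of_nonneg_right ?_ dist_nonneg)
  exact Real.le_coe_toNNReal _

end AuxLemmas

/-- **Demension bounds Hausdorff measure and dimension from below.**
If `S ⊆ H` has demension `k`, then `H^k(S) > 0`; in particular the Hausdorff dimension of
`S` is at least `dem S = k`. -/
theorem hausdorff_measure_pos_of_demEq
    [MeasurableSpace H] [BorelSpace H]
    (S : Set H) (k : ℕ) (hdem : DemEq S k) :
    0 < μH[(k : ℝ)] S ∧ (k : ℝ≥0∞) ≤ dimH S := by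
  classical
  obtain ⟨hge, hmax⟩ := hdem
  have hkd : k < finrank ℝ H := by
    by_contra hcon
    push_neg at hcon
    have heq : finrank ℝ H - (k+1) = finrank ℝ H - k := by omega
    have h2 : DemGE S (k+1) := by
      unfold DemGE at hge ⊢
      rwa [heq]
    have := hmax _ h2
    omega
  obtain ⟨P, ε, hε, hPL, hprop⟩ := hge
  have hPS : (P ∩ S).Nonempty := by
    have h := hprop (fun _ x => x) (by exact continuous_snd)
      (fun t _ => IsHomeomorph.id) rfl
      (fun t _ x => by simp [hε.le]) (fun t _ x _ => rfl)
    simpa using h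
  have hpos : μH[(k:ℝ)] S ≠ 0 := by
    rcases Nat.eq_zero_or_pos k with hk0 | hk1
    · subst hk0
      have h1 : (1:ℝ≥0∞) ≤ μH[(0:ℝ)] S :=
        Measure.one_le_hausdorffMeasure_zero_of_nonempty ⟨hPS.choose, hPS.choose_spec.2⟩
      intro hzero
      rw [Nat.cast_zero] at hzero
      rw [hzero] at h1
      simp at h1
    · intro hμ
      set d := finrank ℝ H with hd
      set m := d - k with hm
      have hmk : m + k = d := Nat.sub_add_cancel hkd.le
      obtain ⟨n, pts, hind, hPeq⟩ := hPL
      set C := P ∩ S with hC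
      -- the bump function
      set φ : H → ℝ := fun x => max 0 (1 - (2/ε) * infDist x C) with hφ
      have hφ0 : ∀ x, 0 ≤ φ x := fun x => le_max_left _ _
      have hφ1 : ∀ x, φ x ≤ 1 := fun x => by
        apply max_le zero_le_one
        have : 0 ≤ (2/ε) * infDist x C :=
          mul_nonneg (le_of_lt (div_pos two_pos hε)) infDist_nonneg
        linarith
      have hφmem : ∀ x ∈ C, φ x = 1 := fun x hx => by
        rw [hφ]
        simp [infDist_zero_of_mem hx]
      have hφout : ∀ x, x ∉ thickening ε C → φ x = 0 := by
        intro x hx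
        have hinf : ε ≤ infDist x C := by
          by_contra hlt
          push_neg at hlt
          obtain ⟨z, hz, hdz⟩ := (infDist_lt_iff hPS).1 hlt
          exact hx (mem_thickening_iff.2 ⟨z, hz, hdz⟩)
        have h2 : (2:ℝ) ≤ (2/ε) * infDist x C := by
          calc (2:ℝ) = (2/ε) * ε := by field_simp
            _ ≤ (2/ε) * infDist x C := by
                apply mul_le_mul_of_nonneg_left hinf (by positivity)
        rw [hφ]
        apply max_eq_left
        linarith
      have hLc : LipschitzWith (Real.toNNReal (2/ε)) φ := by
        refine LipschitzWith.of_dist_le_mul fun x y => ?_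
        rw [Real.coe_toNNReal _ (by positivity)]
        rw [hφ, Real.dist_eq]
        calc |max 0 (1 - (2/ε) * infDist x C) - max 0 (1 - (2/ε) * infDist y C)|
            = |max (1 - (2/ε) * infDist x C) 0 - max (1 - (2/ε) * infDist y C) 0| := by
              rw [max_comm, max_comm (1 - (2/ε) * infDist y C)]
          _ ≤ |(1 - (2/ε) * infDist x C) - (1 - (2/ε) * infDist y C)| :=
              abs_max_sub_max_le_abs _ _ _
          _ = (2/ε) * |infDist x C - infDist y C| := by
              rw [show (1 - (2/ε) * infDist x C) - (1 - (2/ε) * infDist y C)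
                  = (2/ε) * (infDist y C - infDist x C) by ring, abs_mul,
                abs_of_pos (div_pos two_pos hε), abs_sub_comm (infDist y C)]
          _ ≤ (2/ε) * dist x y := by
              apply mul_le_mul_of_nonneg_left _ (by positivity)
              have := (lipschitz_infDist_pt C).dist_le_mul x y
              simpa [Real.dist_eq] using this
      have hφcont : Continuous φ := hLc.continuous
      -- simplices as Lipschitz images of cubes
      choose T hTlip hTsub using fun i : Fin (n+1) => simplex_subset_lipschitz_cube (pts i)
      choose K hK using hTlip
      -- uniform bound on the simplices
      set R : ℝ := (∑ i : Fin (n+1), (‖T i 0‖ + (K i : ℝ))) + 1 with hR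
      have hRpos : 0 < R := by
        have : 0 ≤ ∑ i : Fin (n+1), (‖T i 0‖ + (K i : ℝ)) :=
          Finset.sum_nonneg fun i _ => by positivity
        linarith
      have hRb : ∀ (i : Fin (n+1)) (x : Fin m → ℝ),
          x ∈ ((univ : Set (Fin m)).pi fun _ => Icc (0:ℝ) 1) → ‖T i x‖ ≤ R := by
        intro i x hx
        have hxle : ‖x‖ ≤ 1 := by
          rw [pi_norm_le_iff_of_nonneg zero_le_one]
          intro b
          have := hx b (mem_univ b)
          rw [Real.norm_eq_abs, abs_le]
          constructor <;> [linarith [this.1]; linarith [this.2]]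
        calc ‖T i x‖ ≤ ‖T i 0‖ + ‖T i x - T i 0‖ := by
              have := norm_sub_le (T i x) (T i 0)
              have h2 : T i x = T i 0 + (T i x - T i 0) := by abel
              calc ‖T i x‖ = ‖T i 0 + (T i x - T i 0)‖ := by rw [← h2]
                _ ≤ ‖T i 0‖ + ‖T i x - T i 0‖ := norm_add_le _ _
          _ ≤ ‖T i 0‖ + (K i : ℝ) * ‖x - 0‖ := by
              have := (hK i).dist_le_mul x 0
              rw [dist_eq_norm, dist_eq_norm] at this
              linarith
          _ ≤ ‖T i 0‖ + (K i : ℝ) * 1 := by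
              simp only [sub_zero]
              have := mul_le_mul_of_nonneg_left hxle (K i).coe_nonneg
              linarith
          _ ≤ R := by
            rw [hR, mul_one]
            have h3 : ‖T i 0‖ + (K i : ℝ) ≤ ∑ j : Fin (n+1), (‖T j 0‖ + (K j : ℝ)) :=
              Finset.single_le_sum (f := fun j => ‖T j 0‖ + (K j : ℝ))
                (fun j _ => by positivity) (Finset.mem_univ i)
            linarith
      set δ : ℝ := ε/4 with hδ
      have hδpos : 0 < δ := by positivity
      set Bad : Set H := {v : H | ∃ p ∈ P, p + φ p • v ∈ S} with hBad
      -- the bad set is null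
      have hBadnull : μH[(d:ℝ)] (Bad ∩ closedBall 0 δ) = 0 := by
        set Sb := S ∩ closedBall (0:H) (R + ε) with hSb
        have hSbnull : μH[(k:ℝ)] Sb = 0 := measure_mono_null inter_subset_left hμ
        have hprodnull : μH[((m:ℝ)+k)]
            ((((univ : Set (Fin m)).pi fun _ => Icc (0:ℝ) 1)) ×ˢ Sb) = 0 :=
          hausdorff_prod_cube_null m k hk1 hSbnull
        have hd_cast : ((m:ℝ)+(k:ℝ)) = (d:ℝ) := by
          rw [← hmk]; push_cast; ring
        set Dom : Fin (n+1) → ℕ → Set ((Fin m → ℝ) × H) := fun i ℓ =>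
          ({x | x ∈ ((univ : Set (Fin m)).pi fun _ => Icc (0:ℝ) 1) ∧
            ((ℓ:ℝ)+1)⁻¹ ≤ φ (T i x)} ×ˢ Sb) with hDom
        set Θ : Fin (n+1) → (Fin m → ℝ) × H → H := fun i y =>
          (φ (T i y.1))⁻¹ • (y.2 - T i y.1) with hΘ
        have hcover : Bad ∩ closedBall 0 δ ⊆ ⋃ (i : Fin (n+1)) (ℓ : ℕ), Θ i '' Dom i ℓ := by
          rintro v ⟨⟨p, hpP, hs⟩, hvb⟩
          have hvnorm : ‖v‖ ≤ δ := by rwa [mem_closedBall, dist_zero_right] at hvb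
          rw [hPeq] at hpP
          obtain ⟨_, ⟨i, rfl⟩, hpi⟩ := hpP
          obtain ⟨x, hxc, hTx⟩ := hTsub i hpi
          have hpP' : p ∈ P := by rw [hPeq]; exact mem_iUnion.2 ⟨i, hpi⟩
          have hφp : 0 < φ p := by
            rcases lt_or_eq_of_le (hφ0 p) with h | h
            · exact h
            · exfalso
              have hp0 : φ p = 0 := h.symm
              rw [hp0, zero_smul, add_zero] at hs
              have : p ∈ C := ⟨hpP', hs⟩
              rw [hφmem p this] at hp0
              norm_num at hp0
          obtain ⟨ℓ, hℓ⟩ := exists_nat_gt (1/φ p)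
          have hℓφ : ((ℓ:ℝ)+1)⁻¹ ≤ φ p := by
            have h1 : 1/φ p ≤ (ℓ:ℝ)+1 := by linarith
            have h2 : ((ℓ:ℝ)+1)⁻¹ ≤ (1/φ p)⁻¹ := by
              apply inv_anti₀ (by positivity) h1
            rwa [one_div, inv_inv] at h2
          set s := p + φ p • v with hsdef
          have hsSb : s ∈ Sb := by
            refine ⟨hs, ?_⟩
            rw [mem_closedBall, dist_zero_right]
            calc ‖s‖ ≤ ‖p‖ + ‖φ p • v‖ := norm_add_le _ _
              _ ≤ R + ε := by
                  refine add_le_add ?_ ?_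
                  · rw [← hTx]; exact hRb i x hxc
                  · rw [norm_smul, Real.norm_eq_abs, abs_of_pos hφp]
                    calc φ p * ‖v‖ ≤ 1 * δ :=
                        mul_le_mul (hφ1 p) hvnorm (norm_nonneg v) zero_le_one
                      _ ≤ ε := by rw [one_mul, hδ]; linarith
          refine mem_iUnion.2 ⟨i, mem_iUnion.2 ⟨ℓ, ⟨(x, s), ⟨⟨hxc, ?_⟩, hsSb⟩, ?_⟩⟩⟩
          · rw [hTx]; exact hℓφ
          · show (φ (T i x))⁻¹ • (s - T i x) = v
            rw [hTx, hsdef]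
            rw [add_sub_cancel_left, smul_smul, inv_mul_cancel₀ hφp.ne', one_smul]
        have himgnull : ∀ (i : Fin (n+1)) (ℓ : ℕ), μH[(d:ℝ)] (Θ i '' Dom i ℓ) = 0 := by
          intro i ℓ
          have haℓ : (0:ℝ) < ((ℓ:ℝ)+1)⁻¹ := by positivity
          have hM : (0:ℝ) ≤ (R + ε) + R := by positivity
          have hDbound : ∀ y ∈ Dom i ℓ,
              ((ℓ:ℝ)+1)⁻¹ ≤ φ (T i y.1) ∧ ‖y.2 - T i y.1‖ ≤ (R + ε) + R := by
            rintro ⟨x, s⟩ ⟨⟨hxc, hxφ⟩, hsSb⟩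
            refine ⟨hxφ, ?_⟩
            calc ‖s - T i x‖ ≤ ‖s‖ + ‖T i x‖ := norm_sub_le _ _
              _ ≤ (R + ε) + R := by
                  refine add_le_add ?_ (hRb i x hxc)
                  have := hsSb.2
                  rwa [mem_closedBall, dist_zero_right] at this
          obtain ⟨K', hK'⟩ := theta_lipschitzOnWith (T i) (K i) (hK i) φ
            (Real.toNNReal (2/ε)) hLc haℓ hM (D := Dom i ℓ) hDbound
          have h1 : μH[(d:ℝ)] (Θ i '' Dom i ℓ) ≤ (K' : ℝ≥0∞) ^ (d:ℝ) * μH[(d:ℝ)] (Dom i ℓ) :=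
            hK'.hausdorffMeasure_image_le (by positivity)
          have h2 : μH[(d:ℝ)] (Dom i ℓ) = 0 := by
            have hsub : Dom i ℓ ⊆
                (((univ : Set (Fin m)).pi fun _ => Icc (0:ℝ) 1)) ×ˢ Sb := by
              rw [hDom]
              exact prod_mono_left fun x hx => hx.1
            have := measure_mono_null hsub (by rwa [hd_cast] at hprodnull)
            exact this
          rw [h2, mul_zero] at h1
          exact le_antisymm h1 zero_le
        refine measure_mono_null hcover ?_
        refine measure_iUnion_null fun i => measure_iUnion_null fun ℓ => himgnull i ℓ
      -- pick a good vector v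
      have hd1 : 1 ≤ d := by omega
      have hvex : ∃ v ∈ closedBall (0:H) δ, v ∉ Bad := by
        by_contra hcon
        push_neg at hcon
        have hsub : closedBall (0:H) δ ⊆ Bad ∩ closedBall 0 δ := fun v hv => ⟨hcon v hv, hv⟩
        exact hausdorffMeasure_closedBall_ne_zero hd1 hδpos (measure_mono_null hsub hBadnull)
      obtain ⟨v, hvball, hvBad⟩ := hvex
      have hvnorm : ‖v‖ ≤ δ := by rwa [mem_closedBall, dist_zero_right] at hvball
      -- the isotopy
      set F : ℝ → H → H := fun t x => x + (t * φ x) • v with hF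
      have happly : (F 1 '' P ∩ S).Nonempty := by
        refine hprop F ?_ ?_ ?_ ?_ ?_
        · exact continuous_snd.add
            (((continuous_fst.mul (hφcont.comp continuous_snd))).smul continuous_const)
        · intro t ht
          have hψ : LipschitzWith (1/2 : ℝ≥0) fun x => (t * φ x) • v := by
            refine LipschitzWith.of_dist_le_mul fun x y => ?_
            rw [dist_eq_norm, ← sub_smul, norm_smul, Real.norm_eq_abs]
            have h1 : |t * φ x - t * φ y| = |t| * |φ x - φ y| := by
              rw [← abs_mul]; congr 1; ring
            rw [h1]
            have ht1 : |t| ≤ 1 := by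
              rw [abs_le]; exact ⟨by linarith [ht.1], ht.2⟩
            have h2 : |φ x - φ y| ≤ (2/ε) * dist x y := by
              have := hLc.dist_le_mul x y
              rwa [Real.dist_eq, Real.coe_toNNReal _ (by positivity)] at this
            calc |t| * |φ x - φ y| * ‖v‖ ≤ 1 * ((2/ε) * dist x y) * δ := by
                  apply mul_le_mul _ hvnorm (norm_nonneg v) (by positivity)
                  apply mul_le_mul ht1 h2 (abs_nonneg _) zero_le_one
              _ = ((1/2) : ℝ≥0) * dist x y := by
                  rw [hδ]
                  push_cast
                  field_simp
                  ring
          have h3 := isHomeomorph_add_of_lipschitzWith (by rw [← NNReal.coe_lt_coe]; norm_num : (1/2 : ℝ≥0) < 1) hψ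
          exact h3
        · funext x; simp [hF]
        · intro t ht x
          rw [hF]
          simp only [dist_eq_norm]
          rw [show x - (x + (t * φ x) • v) = -((t * φ x) • v) by abel]
          rw [norm_neg, norm_smul, Real.norm_eq_abs]
          have h1 : |t * φ x| ≤ 1 := by
            rw [abs_mul]
            have ht1 : |t| ≤ 1 := by rw [abs_le]; exact ⟨by linarith [ht.1], ht.2⟩
            have hp1 : |φ x| ≤ 1 := by rw [abs_of_nonneg (hφ0 x)]; exact hφ1 x
            calc |t| * |φ x| ≤ 1 * 1 := mul_le_mul ht1 hp1 (abs_nonneg _) zero_le_one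
              _ = 1 := one_mul 1
          calc |t * φ x| * ‖v‖ ≤ 1 * δ := mul_le_mul h1 hvnorm (norm_nonneg v) zero_le_one
            _ ≤ ε := by rw [one_mul, hδ]; linarith
        · intro t ht x hx
          rw [hF]
          have := hφout x hx
          simp [this]
      obtain ⟨y, ⟨p, hpP, hpy⟩, hyS⟩ := happly
      apply hvBad
      refine ⟨p, hpP, ?_⟩
      have : p + φ p • v = y := by
        rw [← hpy, hF]; simp
      rw [this]
      exact hyS
  constructor
  · exact lt_of_le_of_ne zero_le (Ne.symm hpos)
  · have h1 : μH[((k:ℝ≥0):ℝ)] S ≠ 0 := by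
      have : ((k:ℝ≥0):ℝ) = (k:ℝ) := by norm_cast
      rwa [this]
    have := le_dimH_of_hausdorffMeasure_ne_zero h1
    exact_mod_cast this

end
end

section
/- If S ⊆ H is a compact set (dim H = d < ∞) such that the fundamental group π₁(H \ S) is nontrivial, then dem(S) ≥ d − 2. -/
/-!
A loop `γ` at `x` in `H \ S` that is not null-homotopic keeps a distance `δ > 0` from the compact
set `S`. Approximate it within `δ` by a polygonal loop `g` with vertices `v i`. Each triangle
spanned by `x` and an edge `[v i, v (i + 1)]` lies in a nondegenerate 2-simplex (as `dim H ≥ 2`),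
and these simplices form a PL 2-polyhedron `P` containing the cone over `g` with apex `x`. The
time-one map of an isotopy that fixes every point `δ`-far from `S` fixes `g` and `x`; if it moved
`P` off `S`, the image of the cone would contract `g`, and with it `γ`, inside `H \ S`.
If `dim H ≤ 1` there is no such loop at all, since connected subsets of a line are convex.
-/

open Metric Module Set MeasureTheory
open scoped ENNReal NNReal

noncomputable section

variable {H : Type*} [NormedAddCommGroup H] [InnerProductSpace ℝ H] [FiniteDimensional ℝ H]

open unitInterval

theorem FundamentalGroup.exists_not_homotopic_refl {X : Type*} [TopologicalSpace X] {x : X}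
    [Nontrivial (FundamentalGroup X x)] : ∃ γ : Path x x, ¬ γ.Homotopic (Path.refl x) := by
  obtain ⟨a, ha⟩ := exists_ne (1 : FundamentalGroup X x)
  obtain ⟨γ, hγ⟩ := Path.Homotopic.Quotient.mk_surjective (toPath a)
  refine ⟨γ, fun h => ha ?_⟩
  change toPath a = toPath 1
  rw [← hγ, Path.Homotopic.Quotient.eq.2 h]
  rfl

def Path.codRestrict {X : Type*} [TopologicalSpace X] {x y : X} (γ : Path x y) {s : Set X}
    (hs : ∀ t, γ t ∈ s) : Path (⟨x, γ.source ▸ hs 0⟩ : s) ⟨y, γ.target ▸ hs 1⟩ where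
  toFun t := ⟨γ t, hs t⟩
  source' := Subtype.ext γ.source
  target' := Subtype.ext γ.target

section NormedSpace

variable {E : Type*} [NormedAddCommGroup E] [NormedSpace ℝ E]

theorem Path.Homotopic.of_mapsTo_segment {U : Set E} {a b : U} {p q : Path a b} (φ : E → E)
    (hφ : Continuous φ) (hp : ∀ t, φ (p t) = p t) (hq : ∀ t, φ (q t) = q t)
    (hU : ∀ t, MapsTo φ (segment ℝ (p t : E) (q t)) U) : p.Homotopic q := by
  have hseg (st : I × I) : AffineMap.lineMap (p st.2 : E) (q st.2) (st.1 : ℝ) ∈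
      segment ℝ (p st.2 : E) (q st.2) :=
    lineMap_mem_segment ℝ _ _ st.1.2
  refine ⟨{ toFun st := ⟨φ (AffineMap.lineMap (p st.2 : E) (q st.2) (st.1 : ℝ)), hU _ (hseg st)⟩
            continuous_toFun := by fun_prop
            map_zero_left t := Subtype.ext (by simp [hp])
            map_one_left t := Subtype.ext (by simp [hq])
            prop' := ?_ }⟩
  rintro s t (rfl | rfl)
  · exact Subtype.ext (by simpa using hp 0)
  · exact Subtype.ext (by simpa using hp 1)

theorem Path.Homotopic.of_segment_subset {U : Set E} {a b : U} {p q : Path a b}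
    (hU : ∀ t, segment ℝ (p t : E) (q t) ⊆ U) : p.Homotopic q :=
  of_mapsTo_segment id continuous_id (fun _ => rfl) (fun _ => rfl) hU

/-- `γ ≃ g` along straight segments, which stay `δ`-close to `γ`; then `g ≃ refl` through the
`φ`-image of the cone over `g` with apex `x`. -/
theorem Path.homotopic_refl_of_mapsTo_cone {S : Set E} {x : E} {hx : x ∈ Sᶜ}
    (γ : Path (⟨x, hx⟩ : (Sᶜ : Set E)) ⟨x, hx⟩) {δ : ℝ}
    (hδ : Disjoint (thickening δ (range fun t => (γ t : E))) (thickening δ S)) (g : Path x x)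
    (hg : ∀ t, dist (γ t : E) (g t) < δ) (φ : E → E) (hφ : Continuous φ)
    (hfix : ∀ y ∉ thickening δ S, φ y = y) (hcone : ∀ t, MapsTo φ (segment ℝ (g t) x) Sᶜ) :
    γ.Homotopic (Path.refl _) := by
  have hδ0 : 0 < δ := dist_nonneg.trans_lt (hg 0)
  have hfar (t : I) : segment ℝ (γ t : E) (g t) ⊆ (thickening δ S)ᶜ :=
    (((convex_ball _ δ).segment_subset (mem_ball_self hδ0) (mem_ball'.2 (hg t))).trans
      (ball_subset_thickening (mem_range_self (f := fun t => (γ t : E)) t) δ)).trans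
      hδ.subset_compl_right
  have hfarS (t : I) : segment ℝ (γ t : E) (g t) ⊆ Sᶜ :=
    (hfar t).trans (compl_subset_compl.2 (self_subset_thickening hδ0 S))
  have hx' : x ∉ thickening δ S := by simpa using hfar 0 (left_mem_segment ℝ _ _)
  refine (Path.Homotopic.of_segment_subset
    (q := g.codRestrict fun t => hfarS t (right_mem_segment ℝ _ _)) hfarS).trans ?_
  exact .of_mapsTo_segment φ hφ (fun t => hfix _ (hfar t (right_mem_segment ℝ _ _)))
    (fun _ => hfix _ hx') hcone

theorem IsPreconnected.convex_of_finrank_le_one [FiniteDimensional ℝ E] (hd : finrank ℝ E ≤ 1)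
    {A : Set E} (hA : IsPreconnected A) : Convex ℝ A := by
  rcases Nat.le_one_iff_eq_zero_or_eq_one.1 hd with h0 | h1
  · have : Subsingleton E := finrank_zero_iff.1 h0
    exact A.subsingleton_of_subsingleton.convex
  · let e : E ≃L[ℝ] ℝ := ContinuousLinearEquiv.ofFinrankEq (by rw [h1, finrank_self])
    rw [← e.preimage_image A]
    exact ((hA.image e e.continuous.continuousOn).ordConnected.convex).linear_preimage
      (e : E →ₗ[ℝ] ℝ)

theorem Path.homotopic_refl_of_finrank_le_one [FiniteDimensional ℝ E] (hd : finrank ℝ E ≤ 1)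
    {U : Set E} {x : U} (γ : Path x x) : γ.Homotopic (Path.refl x) := by
  have hconv : Convex ℝ (range fun t => (γ t : E)) :=
    (isPreconnected_range (by fun_prop)).convex_of_finrank_le_one hd
  refine .of_segment_subset fun t => ?_
  exact (hconv.segment_subset (mem_range_self t) ⟨0, by simp⟩).trans
    (range_subset_iff.2 fun s => (γ s).2)

/-- The piecewise affine map `ℝ → E` through the points `(j, v j)`, `j ≤ n`, constant outside
`[0, n]`. -/
def polygonalInterp (v : ℕ → E) (n : ℕ) (u : ℝ) : E :=
  v 0 + ∑ j ∈ Finset.range n, (projIcc (0 : ℝ) 1 zero_le_one (u - j) : ℝ) • (v (j + 1) - v j)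

theorem continuous_polygonalInterp (v : ℕ → E) (n : ℕ) : Continuous (polygonalInterp v n) := by
  unfold polygonalInterp
  fun_prop

theorem polygonalInterp_zero (v : ℕ → E) (n : ℕ) : polygonalInterp v n 0 = v 0 := by
  rw [polygonalInterp, Finset.sum_eq_zero fun j _ => ?_, add_zero]
  rw [projIcc_of_le_left _ (by simp), Subtype.coe_mk, zero_smul]

theorem polygonalInterp_self (v : ℕ → E) (n : ℕ) : polygonalInterp v n n = v n := by
  rw [polygonalInterp, Finset.sum_congr rfl fun j hj => ?_, Finset.sum_range_sub, add_sub_cancel]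
  have : (j : ℝ) + 1 ≤ n := by exact_mod_cast Finset.mem_range.1 hj
  rw [projIcc_of_right_le _ (by linarith), Subtype.coe_mk, one_smul]

theorem polygonalInterp_eq_lineMap (v : ℕ → E) {n i : ℕ} (hi : i < n) {u : ℝ}
    (hu : u ∈ Icc (i : ℝ) (i + 1)) :
    polygonalInterp v n u = AffineMap.lineMap (v i) (v (i + 1)) (u - i) := by
  have hlow : ∀ j ∈ Finset.range i,
      (projIcc (0 : ℝ) 1 zero_le_one (u - j) : ℝ) • (v (j + 1) - v j) = v (j + 1) - v j := by
    intro j hj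
    have : (j : ℝ) + 1 ≤ i := by exact_mod_cast Finset.mem_range.1 hj
    rw [projIcc_of_right_le _ (by linarith [hu.1]), one_smul]
  have hhigh : ∀ j ∈ Finset.Ico (i + 1) n,
      (projIcc (0 : ℝ) 1 zero_le_one (u - j) : ℝ) • (v (j + 1) - v j) = 0 := by
    intro j hj
    have : (i : ℝ) + 1 ≤ j := by exact_mod_cast (Finset.mem_Ico.1 hj).1
    rw [projIcc_of_le_left _ (by linarith [hu.2]), zero_smul]
  rw [polygonalInterp, ← Finset.sum_range_add_sum_Ico _ hi, Finset.sum_eq_zero hhigh,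
    Finset.sum_range_succ, Finset.sum_congr rfl hlow, Finset.sum_range_sub,
    projIcc_of_mem _ ⟨sub_nonneg.2 hu.1, sub_le_iff_le_add'.2 hu.2⟩,
    AffineMap.lineMap_apply_module']
  abel

theorem exists_lt_mem_Icc_of_mem_Icc {n : ℕ} {u : ℝ} (hu : u ∈ Icc 0 ((n : ℝ) + 1)) :
    ∃ i < n + 1, u ∈ Icc (i : ℝ) (i + 1) := by
  refine ⟨min ⌊u⌋₊ n, by omega, ?_, ?_⟩
  · exact (Nat.cast_le.2 (min_le_left _ _)).trans (Nat.floor_le hu.1)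
  · rcases le_total ⌊u⌋₊ n with h | h
    · rw [min_eq_left h]
      exact (Nat.lt_floor_add_one u).le
    · rw [min_eq_right h]
      exact hu.2

theorem exists_polygonalInterp_mem_segment (v : ℕ → E) {n : ℕ} {u : ℝ}
    (hu : u ∈ Icc 0 ((n : ℝ) + 1)) :
    ∃ i : Fin (n + 1), u ∈ Icc (i : ℝ) (i + 1) ∧
      polygonalInterp v (n + 1) u ∈ segment ℝ (v i) (v ((i : ℕ) + 1)) := by
  obtain ⟨i, hi, hui⟩ := exists_lt_mem_Icc_of_mem_Icc hu
  refine ⟨⟨i, hi⟩, hui, ?_⟩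
  rw [polygonalInterp_eq_lineMap v hi hui]
  exact lineMap_mem_segment ℝ _ _ ⟨sub_nonneg.2 hui.1, sub_le_iff_le_add'.2 hui.2⟩

theorem Path.exists_polygonal_approx {x y : E} (γ : Path x y) {ε : ℝ} (hε : 0 < ε) :
    ∃ (n : ℕ) (v : ℕ → E) (g : Path x y), (∀ t, dist (γ t) (g t) < ε) ∧
      ∀ t, ∃ i : Fin (n + 1), g t ∈ segment ℝ (v i) (v ((i : ℕ) + 1)) := by
  obtain ⟨η, hη, hγη⟩ := Metric.uniformContinuous_iff.1 γ.uniformContinuous_extend ε hε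
  obtain ⟨n, hn⟩ := exists_nat_one_div_lt hη
  have hn0 : (0 : ℝ) < n + 1 := by positivity
  set v : ℕ → E := fun j => γ.extend (j / (n + 1))
  have hvertex (t : I) (j : ℕ) (h1 : (j : ℝ) ≤ (n + 1) * t + 1) (h2 : (n + 1) * (t : ℝ) ≤ j + 1) :
      v j ∈ ball (γ t) ε := by
    rw [mem_ball, ← γ.extend_extends' t]
    refine hγη ?_
    have hdiff : j / (n + 1) - (t : ℝ) = (j - (n + 1) * t) / (n + 1) := by field_simp
    rw [Real.dist_eq, hdiff, abs_div, abs_of_pos hn0]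
    refine lt_of_le_of_lt ?_ hn
    gcongr
    exact abs_le.2 ⟨by linarith, by linarith⟩
  have hpiece (t : I) : ∃ i : Fin (n + 1),
      polygonalInterp v (n + 1) ((n + 1) * t) ∈ segment ℝ (v i) (v ((i : ℕ) + 1)) ∧
      segment ℝ (v i) (v ((i : ℕ) + 1)) ⊆ ball (γ t) ε := by
    obtain ⟨i, hti, hseg⟩ := exists_polygonalInterp_mem_segment v (n := n) (u := (n + 1) * t)
      ⟨by nlinarith [t.2.1], by nlinarith [t.2.2]⟩
    refine ⟨i, hseg, (convex_ball _ ε).segment_subset ?_ ?_⟩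
    · exact hvertex t i (by linarith [hti.1]) (by linarith [hti.2])
    · exact hvertex t (i + 1) (by push_cast; linarith [hti.1]) (by push_cast; linarith [hti.2])
  refine ⟨n, v, ⟨⟨fun t => polygonalInterp v (n + 1) ((n + 1) * t),
    (continuous_polygonalInterp v _).comp (by fun_prop)⟩, ?_, ?_⟩, fun t => ?_, fun t => ?_⟩
  · simp [polygonalInterp_zero, v]
  · simpa [v, hn0.ne'] using polygonalInterp_self v (n + 1)
  · obtain ⟨i, hseg, hball⟩ := hpiece t
    exact mem_ball'.1 (hball hseg)
  · obtain ⟨i, hseg, -⟩ := hpiece t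
    exact ⟨i, hseg⟩

theorem Wbtw.convexHull_subset_segment {x y z : E} (h : Wbtw ℝ x y z) :
    convexHull ℝ {x, y, z} ⊆ segment ℝ x z := by
  refine convexHull_min ?_ (convex_segment x z)
  rintro _ (rfl | rfl | rfl)
  · exact left_mem_segment ℝ _ _
  · exact mem_segment_iff_wbtw.2 h
  · exact right_mem_segment ℝ _ _

theorem Collinear.exists_convexHull_subset_segment {a b c : E}
    (h : Collinear ℝ ({a, b, c} : Set E)) : ∃ p q, convexHull ℝ {a, b, c} ⊆ segment ℝ p q := by
  rcases h.wbtw_or_wbtw_or_wbtw with h | h | h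
  · exact ⟨a, c, h.convexHull_subset_segment⟩
  · refine ⟨b, a, ?_⟩
    rw [insert_comm, pair_comm]
    exact h.convexHull_subset_segment
  · refine ⟨c, b, ?_⟩
    rw [pair_comm, insert_comm]
    exact h.convexHull_subset_segment

theorem exists_affineIndependent_segment_subset_convexHull (hd : 1 < finrank ℝ E) (p q : E) :
    ∃ f : Fin 3 → E, AffineIndependent ℝ f ∧ segment ℝ p q ⊆ convexHull ℝ (range f) := by
  obtain ⟨q', hq', hpq⟩ : ∃ q', q' ≠ p ∧ segment ℝ p q ⊆ segment ℝ p q' := by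
    by_cases hqp : q = p
    · have : Nontrivial E := Module.nontrivial_of_finrank_pos (zero_lt_one.trans hd)
      obtain ⟨u, hu⟩ := exists_ne (0 : E)
      refine ⟨p + u, by simpa using hu, ?_⟩
      rw [hqp, segment_same, singleton_subset_iff]
      exact left_mem_segment ℝ _ _
    · exact ⟨q, hqp, subset_rfl⟩
  obtain ⟨w, hw⟩ := exists_linearIndependent_pair_of_one_lt_finrank hd (sub_ne_zero.2 hq')
  refine ⟨![p, q', w + p], ?_, hpq.trans (segment_subset_convexHull ⟨0, rfl⟩ ⟨1, rfl⟩)⟩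
  refine affineIndependent_of_ne_of_mem_of_mem_of_notMem hq'.symm
    (left_mem_affineSpan_pair ℝ p q') (right_mem_affineSpan_pair ℝ p q') fun hmem => ?_
  obtain ⟨r, hr⟩ := vadd_left_mem_affineSpan_pair.1 hmem
  have := (LinearIndependent.pair_iff.1 hw r (-1) (by rw [vsub_eq_sub] at hr; simp [hr])).2
  norm_num at this

theorem exists_affineIndependent_convexHull_subset (hd : 1 < finrank ℝ E) (a b c : E) :
    ∃ f : Fin 3 → E, AffineIndependent ℝ f ∧
      convexHull ℝ {a, b, c} ⊆ convexHull ℝ (range f) := by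
  by_cases hind : AffineIndependent ℝ ![a, b, c]
  · refine ⟨![a, b, c], hind, convexHull_mono ?_⟩
    rintro _ (rfl | rfl | rfl)
    exacts [⟨0, rfl⟩, ⟨1, rfl⟩, ⟨2, rfl⟩]
  · obtain ⟨p, q, hpq⟩ :=
      (collinear_iff_not_affineIndependent_set.2 hind).exists_convexHull_subset_segment
    obtain ⟨f, hf, hsub⟩ := exists_affineIndependent_segment_subset_convexHull hd p q
    exact ⟨f, hf, hpq.trans hsub⟩

end NormedSpace

section InnerProductSpace

variable {V : Type*} [NormedAddCommGroup V] [InnerProductSpace ℝ V]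

theorem exists_isPLPolyhedron_two_superset (hd : 1 < finrank ℝ V) {n : ℕ}
    (a b c : Fin (n + 1) → V) :
    ∃ P, IsPLPolyhedron 2 P ∧ ∀ i, convexHull ℝ {a i, b i, c i} ⊆ P := by
  choose f hf hsub using fun i => exists_affineIndependent_convexHull_subset hd (a i) (b i) (c i)
  refine ⟨⋃ i, convexHull ℝ (range (f i)), ⟨n, f, hf, rfl⟩, fun i => (hsub i).trans ?_⟩
  exact subset_iUnion (fun i => convexHull ℝ (range (f i))) i

theorem Path.exists_approx_cone_subset_isPLPolyhedron (hd : 1 < finrank ℝ V) {x y : V}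
    (γ : Path x y) (z : V) {ε : ℝ} (hε : 0 < ε) :
    ∃ (g : Path x y) (P : Set V), IsPLPolyhedron 2 P ∧ (∀ t, dist (γ t) (g t) < ε) ∧
      ∀ t, segment ℝ (g t) z ⊆ P := by
  obtain ⟨n, v, g, hγg, hgv⟩ := γ.exists_polygonal_approx hε
  obtain ⟨P, hP, hPv⟩ := exists_isPLPolyhedron_two_superset hd (fun _ => z)
    (fun i : Fin (n + 1) => v i) (fun i => v ((i : ℕ) + 1))
  refine ⟨g, P, hP, hγg, fun t => ?_⟩
  obtain ⟨i, hi⟩ := hgv t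
  refine ((convex_convexHull ℝ _).segment_subset ?_ (subset_convexHull ℝ _ (mem_insert _ _))).trans
    (hPv i)
  exact segment_subset_convexHull (by simp) (by simp) hi

end InnerProductSpace

/-- **Nontrivial fundamental group of the complement forces demension `≥ d − 2`.**
If `S ⊆ H` (`dim H = d < ∞`) is compact and `π₁(H \ S)` is nontrivial, then
`dem S ≥ d − 2`. -/
theorem demGE_of_pi1_nontrivial
    (S : Set H) (hcpt : IsCompact S)
    (h : ∃ (x : H) (hx : x ∈ Sᶜ), Nontrivial (FundamentalGroup (Sᶜ : Set H) ⟨x, hx⟩)) :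
    DemGE S (finrank ℝ H - 2) := by
  obtain ⟨x, hx, hnt⟩ := h
  obtain ⟨γ, hγ⟩ := FundamentalGroup.exists_not_homotopic_refl (x := (⟨x, hx⟩ : (Sᶜ : Set H)))
  rcases le_or_gt (finrank ℝ H) 1 with hd | hd
  · exact absurd (γ.homotopic_refl_of_finrank_le_one hd) hγ
  have hγS : Disjoint (range fun t => (γ t : H)) S :=
    subset_compl_iff_disjoint_right.1 (range_subset_iff.2 fun t => (γ t).2)
  obtain ⟨δ, hδ, hdisj⟩ := hγS.exists_thickenings (isCompact_range (by fun_prop)) hcpt.isClosed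
  obtain ⟨g, P, hP, hγg, hcone⟩ :=
    (γ.map continuous_subtype_val).exists_approx_cone_subset_isPLPolyhedron hd x hδ
  refine ⟨P, δ, hδ, by rwa [Nat.sub_sub_self hd], fun F _ hF _ _ hFfix => ?_⟩
  have h1 : (1 : ℝ) ∈ Icc (0 : ℝ) 1 := right_mem_Icc.2 zero_le_one
  have hfix (y) (hy : y ∉ thickening δ S) : F 1 y = y :=
    hFfix 1 h1 y (notMem_subset (thickening_subset_of_subset δ inter_subset_right) hy)
  by_contra hPS
  refine hγ (γ.homotopic_refl_of_mapsTo_cone hdisj g hγg (F 1) (hF 1 h1).continuous hfix ?_)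
  exact fun t z hz hzS => hPS ⟨F 1 z, ⟨z, hcone t hz, rfl⟩, hzS⟩

end
end

section
/- Let S ⊆ H be a compact set with H^1(S) < ∞ and topological dimension TD(S) = 1. Then S contains a rectifiable curve (i.e., a nondegenerate continuum that is the image of a Lipschitz map from [0,1]). -/
open MeasureTheory Set
open scoped ENNReal NNReal

/-- The covering dimension of `X` is at most `n`: every open cover admits an open shrinking
of order at most `n + 1`. -/
def CovDimLE (X : Type*) [TopologicalSpace X] (n : ℕ) : Prop :=
  ∀ (ι : Type) (U : ι → Set X), (∀ i, IsOpen (U i)) → (⋃ i, U i) = Set.univ →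
    ∃ V : ι → Set X, (∀ i, IsOpen (V i)) ∧ (∀ i, V i ⊆ U i) ∧ (⋃ i, V i) = Set.univ ∧
      ∀ x : X, ({i | x ∈ V i}).encard ≤ (n + 1 : ℕ∞)

/-- The topological (covering) dimension of `X` equals `k`. -/
def CovDimEq (X : Type*) [TopologicalSpace X] (k : ℕ) : Prop :=
  CovDimLE X k ∧ ∀ m : ℕ, CovDimLE X m → k ≤ m


section Aux

open Metric Filter
open scoped Topology

lemma covDimLE_zero (X : Type*) [TopologicalSpace X] [CompactSpace X] [T2Space X]
    [TotallyDisconnectedSpace X] : CovDimLE X 0 := by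
  classical
  intro ι U hUo hUc
  have key : ∀ x : X, ∃ (i : ι) (W : Set X), IsClopen W ∧ x ∈ W ∧ W ⊆ U i := by
    intro x
    have hx : x ∈ ⋃ i, U i := hUc ▸ mem_univ x
    obtain ⟨i, hi⟩ := mem_iUnion.1 hx
    obtain ⟨W, hW, hxW, hWU⟩ := compact_exists_isClopen_in_isOpen (hUo i) hi
    exact ⟨i, W, hW, hxW, hWU⟩
  choose idx W hWclopen hxW hWU using key
  obtain ⟨s, hs⟩ := isCompact_univ.elim_finite_subcover (fun x => W x)
    (fun x => (hWclopen x).2) (fun x _ => mem_iUnion.2 ⟨x, hxW x⟩)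
  set l : List X := s.toList with hl
  set Wn : ℕ → Set X := fun j => if h : j < l.length then W l[j] else ∅ with hWn
  have hWnclopen : ∀ j, IsClopen (Wn j) := by
    intro j
    by_cases h : j < l.length
    · simp only [hWn, dif_pos h]; exact hWclopen _
    · simp only [hWn, dif_neg h]; exact isClopen_empty
  have hWncover : ⋃ j, Wn j = univ := by
    apply eq_univ_of_forall
    intro x
    have := hs (mem_univ x)
    obtain ⟨z, hz, hxz⟩ := by
      simpa only [mem_iUnion, exists_prop] using this
    have hz' : z ∈ l := by simpa [hl] using hz
    obtain ⟨j, hj, hjz⟩ := List.mem_iff_getElem.1 hz'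
    refine mem_iUnion.2 ⟨j, ?_⟩
    simp only [hWn, dif_pos hj, hjz]
    exact hxz
  set D : ℕ → Set X := disjointed Wn with hD
  have hDsub : ∀ j, D j ⊆ Wn j := fun j => disjointed_subset Wn j
  have hDdisj : Pairwise (Function.onFun Disjoint D) := disjoint_disjointed Wn
  have hDcover : ⋃ j, D j = univ := by rw [hD, iUnion_disjointed]; exact hWncover
  have hDopen : ∀ j, IsOpen (D j) := by
    intro j
    have hps : ∀ k, IsClopen ((partialSups Wn) k : Set X) := by
      intro k
      induction k with
      | zero => simpa using hWnclopen 0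
      | succ k ih => rw [partialSups_add_one]; exact ih.union (hWnclopen _)
    rcases j with _ | j
    · rw [hD, disjointed_zero]; exact (hWnclopen 0).2
    · rw [hD, disjointed_add_one]
      exact (hWnclopen _).2.sdiff (hps j).1
  refine ⟨fun i => ⋃ j, ⋃ (h : j < l.length), ⋃ (_ : idx l[j] = i), D j, ?_, ?_, ?_, ?_⟩
  · intro i
    exact isOpen_iUnion fun j => isOpen_iUnion fun h => isOpen_iUnion fun _ => hDopen j
  · rintro i x hx
    simp only [mem_iUnion] at hx
    obtain ⟨j, h, hidx, hxD⟩ := hx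
    have : x ∈ Wn j := hDsub j hxD
    rw [hWn] at this
    simp only [dif_pos h] at this
    exact hidx ▸ hWU _ this
  · apply eq_univ_of_forall
    intro x
    have hx : x ∈ ⋃ j, D j := hDcover ▸ mem_univ x
    obtain ⟨j, hj⟩ := mem_iUnion.1 hx
    have hjlt : j < l.length := by
      by_contra h
      have : Wn j = ∅ := by rw [hWn]; simp [h]
      exact absurd (this ▸ hDsub j hj) (notMem_empty x)
    exact mem_iUnion.2 ⟨idx l[j], mem_iUnion.2 ⟨j, mem_iUnion.2 ⟨hjlt, mem_iUnion.2 ⟨rfl, hj⟩⟩⟩⟩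
  · intro x
    have : ({i | x ∈ ⋃ j, ⋃ (h : j < l.length), ⋃ (_ : idx l[j] = i), D j}).encard ≤ 1 := by
      rw [Set.encard_le_one_iff]
      rintro a b ha hb
      simp only [mem_setOf_eq, mem_iUnion] at ha hb
      obtain ⟨j, hja, hia, hxa⟩ := ha
      obtain ⟨k, hkb, hib, hxb⟩ := hb
      have hjk : j = k := by
        by_contra h
        exact (hDdisj h).le_bot ⟨hxa, hxb⟩
      subst hjk
      rw [← hia, ← hib]
    refine this.trans ?_
    norm_num


/-- In a preconnected set, any two points are joined by a `δ`-chain. -/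
lemma exists_chain {X : Type*} [MetricSpace X] {A : Set X} (hA : IsPreconnected A)
    {x y : X} (hx : x ∈ A) (hy : y ∈ A) {δ : ℝ} (hδ : 0 < δ) :
    ∃ (n : ℕ) (p : ℕ → X), p 0 = x ∧ p n = y ∧ (∀ j, p j ∈ A) ∧
      ∀ j < n, dist (p j) (p (j + 1)) ≤ δ := by
  classical
  set R : Set X := {z | z ∈ A ∧ ∃ (n : ℕ) (p : ℕ → X), p 0 = x ∧ p n = z ∧ (∀ j, p j ∈ A) ∧
      ∀ j < n, dist (p j) (p (j + 1)) ≤ δ} with hR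
  have hxR : x ∈ R := ⟨hx, 0, fun _ => x, rfl, rfl, fun _ => hx, fun j hj => absurd hj (by omega)⟩
  -- extension: a point of A within δ of a reachable point is reachable
  have hext : ∀ z ∈ R, ∀ w ∈ A, dist w z ≤ δ → w ∈ R := by
    rintro z ⟨hzA, n, p, hp0, hpn, hpA, hpd⟩ w hwA hwz
    refine ⟨hwA, n + 1, fun j => if j ≤ n then p j else w, by simp [hp0], by simp, ?_, ?_⟩
    · intro j; by_cases h : j ≤ n <;> simp [h, hpA, hwA]
    · intro j hj
      by_cases h : j < n
      · simp only [if_pos (by omega : j ≤ n), if_pos (by omega : j + 1 ≤ n)]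
        exact hpd j h
      · have hjn : j = n := by omega
        subst hjn
        show dist (if j ≤ j then p j else w) (if j + 1 ≤ j then p (j+1) else w) ≤ δ
        rw [if_pos (le_refl j), if_neg (by omega : ¬ j + 1 ≤ j), hpn, dist_comm]
        exact hwz
  by_contra hcon
  have hyR : y ∉ R := fun h => hcon ⟨h.2.choose, h.2.choose_spec⟩
  set U : Set X := ⋃ z ∈ R, ball z δ with hU
  set V : Set X := ⋃ z ∈ A \ R, ball z δ with hV
  have hUo : IsOpen U := isOpen_biUnion fun _ _ => isOpen_ball
  have hVo : IsOpen V := isOpen_biUnion fun _ _ => isOpen_ball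
  have hcover : A ⊆ U ∪ V := by
    intro z hz
    by_cases h : z ∈ R
    · exact Or.inl (mem_biUnion h (mem_ball_self hδ))
    · exact Or.inr (mem_biUnion ⟨hz, h⟩ (mem_ball_self hδ))
  have h1 : (A ∩ U).Nonempty := ⟨x, hx, mem_biUnion hxR (mem_ball_self hδ)⟩
  have h2 : (A ∩ V).Nonempty := ⟨y, hy, mem_biUnion ⟨hy, hyR⟩ (mem_ball_self hδ)⟩
  obtain ⟨w, hwA, hwU, hwV⟩ := hA U V hUo hVo hcover h1 h2
  obtain ⟨z, hzR, hwz⟩ := mem_iUnion₂.1 hwU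
  obtain ⟨z', hz'AR, hwz'⟩ := mem_iUnion₂.1 hwV
  have hwR : w ∈ R := hext z hzR w hwA (le_of_lt (by simpa [dist_comm] using hwz))
  have hz'R : z' ∈ R := hext w hwR z' hz'AR.1 (le_of_lt (by simpa [dist_comm] using hwz'))
  exact hz'AR.2 hz'R


/-- Any `δ`-chain can be pruned to a `δ`-chain in which points at index distance ≥ 2
are more than `δ` apart. -/
lemma prune_chain {X : Type*} [MetricSpace X] {A : Set X} {δ : ℝ} :
    ∀ (n : ℕ) (p : ℕ → X), (∀ j, p j ∈ A) → (∀ j < n, dist (p j) (p (j + 1)) ≤ δ) →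
    ∃ (m : ℕ) (q : ℕ → X), m ≤ n ∧ q 0 = p 0 ∧ q m = p n ∧ (∀ j, q j ∈ A) ∧
      (∀ j < m, dist (q j) (q (j + 1)) ≤ δ) ∧
      (∀ j k, j + 2 ≤ k → k ≤ m → δ < dist (q j) (q k)) := by
  intro n
  induction n using Nat.strong_induction_on with
  | _ n ih =>
    intro p hpA hpd
    by_cases hex : ∃ j k, j + 2 ≤ k ∧ k ≤ n ∧ dist (p j) (p k) ≤ δ
    · obtain ⟨j, k, hjk, hkn, hd⟩ := hex
      set c : ℕ := k - j - 1 with hc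
      have hc1 : 1 ≤ c := by omega
      set n' : ℕ := n - c with hn'
      have hn'lt : n' < n := by omega
      set p' : ℕ → X := fun i => if i ≤ j then p i else p (i + c) with hp'
      have hp'A : ∀ i, p' i ∈ A := by
        intro i; by_cases h : i ≤ j <;> simp [hp', h, hpA]
      have hp'd : ∀ i < n', dist (p' i) (p' (i + 1)) ≤ δ := by
        intro i hi
        rcases lt_trichotomy i j with h | h | h
        · show dist (if i ≤ j then p i else p (i + c)) (if i + 1 ≤ j then p (i+1) else p (i+1+c)) ≤ δ
          rw [if_pos (by omega : i ≤ j), if_pos (by omega : i + 1 ≤ j)]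
          exact hpd i (by omega)
        · show dist (if i ≤ j then p i else p (i + c)) (if i + 1 ≤ j then p (i+1) else p (i+1+c)) ≤ δ
          rw [if_pos (by omega : i ≤ j), if_neg (by omega : ¬ i + 1 ≤ j), h]
          have : j + 1 + c = k := by omega
          rw [this]
          exact hd
        · show dist (if i ≤ j then p i else p (i + c)) (if i + 1 ≤ j then p (i+1) else p (i+1+c)) ≤ δ
          rw [if_neg (by omega : ¬ i ≤ j), if_neg (by omega : ¬ i + 1 ≤ j)]
          have : i + 1 + c = i + c + 1 := by omega
          rw [this]
          exact hpd (i + c) (by omega)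
      obtain ⟨m, q, hmn, hq0, hqm, hqA, hqd, hqs⟩ := ih n' hn'lt p' hp'A hp'd
      refine ⟨m, q, by omega, ?_, ?_, hqA, hqd, hqs⟩
      · rw [hq0]; show (if 0 ≤ j then p 0 else _) = p 0; rw [if_pos (Nat.zero_le j)]
      · rw [hqm]
        show (if n' ≤ j then p n' else p (n' + c)) = p n
        rw [if_neg (by omega : ¬ n' ≤ j)]
        congr 1
        omega
    · push_neg at hex
      exact ⟨n, p, le_rfl, rfl, rfl, hpA, hpd, fun j k h1 h2 => hex j k h1 h2⟩


variable {H : Type*} [NormedAddCommGroup H] [MeasurableSpace H] [BorelSpace H]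

/-- In a connected set, every radius below `dist a b` is attained and contributes
to Hausdorff measure: `H^1(A ∩ closedBall a r) ≥ r` whenever some point of `A` is at
distance ≥ r from `a`. -/
lemma measure_inter_closedBall_ge {A : Set H} (hA : IsPreconnected A) {a b : H}
    (ha : a ∈ A) (hb : b ∈ A) {r : ℝ} (hrb : r ≤ dist b a) :
    ENNReal.ofReal r ≤ μH[(1 : ℝ)] (A ∩ closedBall a r) := by
  set g : H → ℝ := fun z => dist z a with hg
  have hglip : LipschitzWith 1 g := LipschitzWith.dist_left a
  have himg : Icc (0 : ℝ) r ⊆ g '' (A ∩ closedBall a r) := by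
    intro s hs
    -- the image of A under g is preconnected and contains 0 and dist b a
    have hconn : IsPreconnected (g '' A) := hA.image g (hglip.continuous.continuousOn)
    have h0 : (0 : ℝ) ∈ g '' A := ⟨a, ha, by simp [hg]⟩
    have hd : dist b a ∈ g '' A := ⟨b, hb, rfl⟩
    have : Icc (0 : ℝ) (dist b a) ⊆ g '' A := hconn.ordConnected.out h0 hd
    obtain ⟨z, hzA, hzs⟩ := this ⟨hs.1, hs.2.trans hrb⟩
    exact ⟨z, ⟨hzA, by simp [mem_closedBall, hg] at hzs ⊢; rw [hzs]; exact hs.2⟩, hzs⟩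
  calc ENNReal.ofReal r = volume (Icc (0 : ℝ) r) := by rw [Real.volume_Icc]; simp
    _ = μH[(1 : ℝ)] (Icc (0 : ℝ) r) := by rw [MeasureTheory.hausdorffMeasure_real]
    _ ≤ μH[(1 : ℝ)] (g '' (A ∩ closedBall a r)) := measure_mono himg
    _ ≤ (1 : ℝ≥0) ^ (1 : ℝ) * μH[(1 : ℝ)] (A ∩ closedBall a r) :=
        hglip.hausdorffMeasure_image_le zero_le_one _
    _ = μH[(1 : ℝ)] (A ∩ closedBall a r) := by simp


/-- Counting bound: a `δ`-separated-ish chain in a closed preconnected set of finite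
`H^1` measure has length bound `m * δ ≤ 4 * H^1(C)`. -/
lemma chain_length_bound {C : Set H} (hC : IsPreconnected C) (hCc : IsClosed C)
    (hfin : μH[(1 : ℝ)] C ≠ ⊤) {δ : ℝ} (hδ : 0 < δ) (m : ℕ) (q : ℕ → H)
    (hqA : ∀ j, q j ∈ C) (hsep : ∀ j k, j + 2 ≤ k → k ≤ m → δ < dist (q j) (q k))
    (hxy : δ < dist (q 0) (q m)) :
    (m : ℝ) * δ ≤ 4 * (μH[(1 : ℝ)] C).toReal := by
  classical
  set E : ℕ := m / 2 + 1 with hE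
  set B : ℕ → Set H := fun k => C ∩ closedBall (q (2 * k)) (δ / 2) with hB
  have hmeas : ∀ k, MeasurableSet (B k) :=
    fun k => (hCc.measurableSet).inter measurableSet_closedBall
  have hdisj : ∀ k ∈ Finset.range E, ∀ k' ∈ Finset.range E, k ≠ k' →
      Disjoint (B k) (B k') := by
    intro k hk k' hk' hne
    simp only [Finset.mem_range] at hk hk'
    -- wlog k < k'
    have main : ∀ k k', k < k' → k' < E → Disjoint (B k) (B k') := by
      intro a b hab hbE
      rw [Set.disjoint_left]
      rintro z ⟨-, hza⟩ ⟨-, hzb⟩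
      have hsep' : δ < dist (q (2 * a)) (q (2 * b)) :=
        hsep (2 * a) (2 * b) (by omega) (by omega)
      have : dist (q (2 * a)) (q (2 * b)) ≤ δ := by
        calc dist (q (2 * a)) (q (2 * b)) ≤ dist (q (2 * a)) z + dist z (q (2 * b)) :=
              dist_triangle _ _ _
          _ ≤ δ / 2 + δ / 2 := by
              have h1 := mem_closedBall.1 hza
              have h2 := mem_closedBall.1 hzb
              rw [dist_comm (q (2*a)) z]
              linarith
          _ = δ := by ring
      linarith
    rcases hne.lt_or_gt with h | h
    · exact main k k' h hk'
    · exact (main k' k h hk).symm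
  -- each ball contributes δ/2
  have hlower : ∀ k ∈ Finset.range E, ENNReal.ofReal (δ / 2) ≤ μH[(1 : ℝ)] (B k) := by
    intro k hk
    have : δ / 2 ≤ max (dist (q 0) (q (2 * k))) (dist (q m) (q (2 * k))) := by
      by_contra h
      push_neg at h
      have := dist_triangle (q 0) (q (2 * k)) (q m)
      rw [dist_comm (q (2*k)) (q m)] at this
      have h1 := lt_of_le_of_lt (le_max_left _ _) h
      have h2 := lt_of_le_of_lt (le_max_right _ _) h
      linarith
    rcases le_max_iff.1 this with h | h
    · exact measure_inter_closedBall_ge hC (hqA (2 * k)) (hqA 0) h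
    · exact measure_inter_closedBall_ge hC (hqA (2 * k)) (hqA m) h
  -- sum up
  have hsum : (E : ℝ≥0∞) * ENNReal.ofReal (δ / 2) ≤ μH[(1 : ℝ)] C := by
    calc (E : ℝ≥0∞) * ENNReal.ofReal (δ / 2)
        = ∑ k ∈ Finset.range E, ENNReal.ofReal (δ / 2) := by
          simp [Finset.sum_const, mul_comm]
      _ ≤ ∑ k ∈ Finset.range E, μH[(1 : ℝ)] (B k) := Finset.sum_le_sum hlower
      _ = μH[(1 : ℝ)] (⋃ k ∈ Finset.range E, B k) :=
          (measure_biUnion_finset hdisj fun k _ => hmeas k).symm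
      _ ≤ μH[(1 : ℝ)] C := measure_mono (by
          intro z hz
          simp only [mem_iUnion] at hz
          obtain ⟨k, -, hzk, -⟩ := hz
          exact hzk)
  -- convert to reals
  set L : ℝ := (μH[(1 : ℝ)] C).toReal with hL
  have hreal : (E : ℝ) * (δ / 2) ≤ L := by
    have := ENNReal.toReal_mono hfin hsum
    rwa [ENNReal.toReal_mul, ENNReal.toReal_natCast,
      ENNReal.toReal_ofReal (by linarith : (0:ℝ) ≤ δ / 2)] at this
  have hmE : (m : ℝ) ≤ 2 * E := by
    have : m ≤ 2 * E := by omega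
    exact_mod_cast this
  nlinarith [hreal, hmE, hδ]


variable [NormedSpace ℝ H]

lemma LipschitzOnWith.weaken' {α β : Type*} [PseudoEMetricSpace α] [PseudoEMetricSpace β]
    {K K' : ℝ≥0} {f : α → β} {s : Set α} (h : LipschitzOnWith K f s) (hK : K ≤ K') :
    LipschitzOnWith K' f s := fun x hx y hy =>
  (h hx hy).trans (mul_le_mul_left (ENNReal.coe_le_coe.2 hK) _)


/-- Gluing Lipschitz bounds on adjacent intervals. -/
lemma lipschitzOnWith_join {f : ℝ → H} {K : ℝ≥0} {a b c : ℝ} (hab : a ≤ b) (hbc : b ≤ c)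
    (h1 : LipschitzOnWith K f (Icc a b)) (h2 : LipschitzOnWith K f (Icc b c)) :
    LipschitzOnWith K f (Icc a c) := by
  rw [lipschitzOnWith_iff_dist_le_mul] at h1 h2 ⊢
  have key : ∀ s ∈ Icc a c, ∀ t ∈ Icc a c, s ≤ t → dist (f s) (f t) ≤ K * dist s t := by
    rintro s ⟨has, hsc⟩ t ⟨hat, htc⟩ hst
    rcases le_total t b with h | h
    · exact h1 s ⟨has, hst.trans h⟩ t ⟨hat, h⟩
    · rcases le_total b s with h' | h'
      · exact h2 s ⟨h', hsc⟩ t ⟨h, htc⟩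
      · calc dist (f s) (f t) ≤ dist (f s) (f b) + dist (f b) (f t) := dist_triangle _ _ _
          _ ≤ K * dist s b + K * dist b t :=
              add_le_add (h1 s ⟨has, h'⟩ b ⟨hab, le_rfl⟩) (h2 b ⟨le_rfl, hbc⟩ t ⟨h, htc⟩)
          _ = K * (dist s b + dist b t) := by ring
          _ = K * dist s t := by
              rw [Real.dist_eq, Real.dist_eq, Real.dist_eq,
                abs_of_nonpos (by linarith), abs_of_nonpos (by linarith),
                abs_of_nonpos (by linarith)]
              ring
  intro s hs t ht
  rcases le_total s t with h | h
  · exact key s hs t ht h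
  · rw [dist_comm s t, dist_comm (f s) (f t)]; exact key t ht s hs h

/-- The piecewise-linear interpolation of a chain. -/
noncomputable def plInterp (m : ℕ) (q : ℕ → H) : ℝ → H := fun t =>
  (1 - (t * m - ⌊t * m⌋₊)) • q ⌊t * m⌋₊ + (t * m - ⌊t * m⌋₊) • q (⌊t * m⌋₊ + 1)

lemma plInterp_zero (m : ℕ) (q : ℕ → H) : plInterp m q 0 = q 0 := by
  simp [plInterp]

lemma plInterp_one {m : ℕ} (hm : 1 ≤ m) (q : ℕ → H) : plInterp m q 1 = q m := by
  have h1 : (1 : ℝ) * m = (m : ℝ) := one_mul _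
  have hfl : ⌊(1 : ℝ) * m⌋₊ = m := by rw [h1]; exact Nat.floor_natCast m
  simp [plInterp, hfl, h1]

/-- On `[j/m, (j+1)/m]` the interpolation agrees with the affine segment. -/
lemma plInterp_eq_affine {m : ℕ} (hm : 1 ≤ m) (q : ℕ → H) {j : ℕ} (hj : j < m) {t : ℝ}
    (ht : (j : ℝ) / m ≤ t) (ht' : t ≤ (j + 1 : ℝ) / m) :
    plInterp m q t = q j + (t * m - j) • (q (j + 1) - q j) := by
  have hm0 : (0 : ℝ) < m := by exact_mod_cast hm
  have htm : (j : ℝ) ≤ t * m := by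
    rw [div_le_iff₀ hm0] at ht; linarith
  have htm' : t * m ≤ (j : ℝ) + 1 := by
    rw [le_div_iff₀ hm0] at ht'; linarith
  rcases lt_or_eq_of_le htm' with h | h
  · have hfl : ⌊t * m⌋₊ = j := by
      rw [Nat.floor_eq_iff (le_trans (Nat.cast_nonneg j) htm)]
      exact ⟨htm, by exact_mod_cast h⟩
    rw [plInterp, hfl]
    have : (1 - (t * m - j)) • q j + (t * m - j) • q (j + 1)
        = q j + (t * m - j) • (q (j + 1) - q j) := by
      rw [sub_smul, one_smul, smul_sub]; abel
    rw [← this]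
  · -- t * m = j + 1
    have hfl : ⌊t * m⌋₊ = j + 1 := by
      rw [h]; exact_mod_cast Nat.floor_natCast (j + 1)
    rw [plInterp, hfl]
    have hcast : ((j + 1 : ℕ) : ℝ) = (j : ℝ) + 1 := by push_cast; ring
    rw [hcast, h]
    simp

lemma plInterp_lipschitz {m : ℕ} (hm : 1 ≤ m) (q : ℕ → H) {δ : ℝ} (hδ : 0 ≤ δ)
    (hstep : ∀ j < m, dist (q j) (q (j + 1)) ≤ δ) :
    LipschitzOnWith (Real.toNNReal ((m : ℝ) * δ)) (plInterp m q) (Icc 0 1) := by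
  have hm0 : (0 : ℝ) < m := by exact_mod_cast hm
  -- Lipschitz on each subinterval
  have hseg : ∀ j < m, LipschitzOnWith (Real.toNNReal ((m : ℝ) * δ)) (plInterp m q)
      (Icc ((j : ℝ) / m) ((j + 1 : ℝ) / m)) := by
    intro j hj
    rw [lipschitzOnWith_iff_dist_le_mul]
    intro s hs t ht
    rw [plInterp_eq_affine hm q hj hs.1 hs.2, plInterp_eq_affine hm q hj ht.1 ht.2]
    rw [dist_eq_norm]
    have : q j + (s * m - j) • (q (j + 1) - q j) - (q j + (t * m - j) • (q (j + 1) - q j))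
        = ((s - t) * m) • (q (j + 1) - q j) := by
      module
    rw [this, norm_smul]
    have h1 : ‖(s - t) * (m : ℝ)‖ = dist s t * m := by
      rw [Real.norm_eq_abs, abs_mul, Real.dist_eq, abs_of_nonneg (le_of_lt hm0)]
    rw [h1]
    have h2 : ‖q (j + 1) - q j‖ ≤ δ := by
      rw [← dist_eq_norm, dist_comm]; exact hstep j hj
    have h3 : (Real.toNNReal ((m : ℝ) * δ) : ℝ) = (m : ℝ) * δ :=
      Real.coe_toNNReal _ (by positivity)
    rw [h3]
    calc dist s t * m * ‖q (j + 1) - q j‖ ≤ dist s t * m * δ := by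
          apply mul_le_mul_of_nonneg_left h2 (by positivity)
      _ = (m : ℝ) * δ * dist s t := by ring
  -- glue by induction
  have glue : ∀ n ≤ m, LipschitzOnWith (Real.toNNReal ((m : ℝ) * δ)) (plInterp m q)
      (Icc 0 ((n : ℝ) / m)) := by
    intro n hn
    induction n with
    | zero =>
        rw [lipschitzOnWith_iff_dist_le_mul]
        rintro s hs t ht
        rw [Nat.cast_zero, zero_div, Icc_self, mem_singleton_iff] at hs ht
        subst hs; subst ht
        simp
    | succ k ih =>
      have hk : k ≤ m := by omega
      have h1 := ih hk
      have h2 := hseg k (by omega)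
      have hcast : ((k + 1 : ℕ) : ℝ) = (k : ℝ) + 1 := by push_cast; ring
      rw [hcast]
      exact lipschitzOnWith_join (by positivity) (by gcongr; linarith) h1 h2
  have := glue m le_rfl
  rwa [div_self (ne_of_gt hm0)] at this

lemma plInterp_near {m : ℕ} (hm : 1 ≤ m) (q : ℕ → H) {t : ℝ} (ht : t ∈ Icc (0:ℝ) 1) :
    ∃ j < m, dist (plInterp m q t) (q j) ≤ dist (q j) (q (j + 1)) := by
  have hm0 : (0 : ℝ) < m := by exact_mod_cast hm
  by_cases h1 : t = 1
  · refine ⟨m - 1, by omega, ?_⟩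
    have hmm : m - 1 + 1 = m := by omega
    rw [h1, plInterp_one hm, hmm, dist_comm]
  · -- t < 1, so j := ⌊t*m⌋₊ < m
    have htm : t * m < m := by
      have : t < 1 := lt_of_le_of_ne ht.2 h1
      nlinarith
    have htm0 : 0 ≤ t * m := mul_nonneg ht.1 (le_of_lt hm0)
    set j := ⌊t * m⌋₊ with hj
    have hjm : j < m := by
      have := Nat.floor_le htm0
      have h2 : (j : ℝ) < m := lt_of_le_of_lt this htm
      exact_mod_cast h2
    refine ⟨j, hjm, ?_⟩
    have hfrac0 : 0 ≤ t * m - j := sub_nonneg.2 (Nat.floor_le htm0)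
    have hfrac1 : t * m - j ≤ 1 := by
      have := Nat.lt_floor_add_one (t * m)
      linarith
    have : plInterp m q t - q j = (t * m - j) • (q (j + 1) - q j) := by
      rw [plInterp, ← hj, sub_smul, one_smul, smul_sub]
      abel
    rw [dist_eq_norm, this, norm_smul, Real.norm_eq_abs, abs_of_nonneg hfrac0,
      dist_eq_norm, norm_sub_rev]
    exact mul_le_of_le_one_left (norm_nonneg _) hfrac1


/-- For every `δ < dist x y` there is a uniformly-Lipschitz curve from `x` to `y`
staying within `δ` of `C`. -/
lemma exists_curve_near {C : Set H} (hC : IsPreconnected C) (hCc : IsClosed C)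
    (hfin : μH[(1 : ℝ)] C ≠ ⊤) {x y : H} (hx : x ∈ C) (hy : y ∈ C) {δ : ℝ}
    (hδ0 : 0 < δ) (hδ : δ < dist x y) :
    ∃ f : ℝ → H, LipschitzOnWith (Real.toNNReal (4 * (μH[(1 : ℝ)] C).toReal)) f (Icc 0 1) ∧
      f 0 = x ∧ f 1 = y ∧ ∀ t ∈ Icc 0 1, ∃ z ∈ C, dist (f t) z ≤ δ := by
  obtain ⟨n, p, hp0, hpn, hpA, hpd⟩ := exists_chain hC hx hy hδ0
  obtain ⟨m, q, hmn, hq0, hqm, hqA, hqd, hqs⟩ := prune_chain n p hpA hpd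
  rw [hp0] at hq0
  rw [hpn] at hqm
  have hm : 1 ≤ m := by
    rcases Nat.eq_zero_or_pos m with h | h
    · exfalso
      rw [h] at hqm
      rw [hq0] at hqm
      rw [hqm] at hδ
      simp at hδ
      linarith
    · exact h
  have hxy' : δ < dist (q 0) (q m) := by rw [hq0, hqm]; exact hδ
  have hlen : (m : ℝ) * δ ≤ 4 * (μH[(1 : ℝ)] C).toReal :=
    chain_length_bound hC hCc hfin hδ0 m q hqA hqs hxy'
  refine ⟨plInterp m q, ?_, by rw [plInterp_zero, hq0], by rw [plInterp_one hm, hqm], ?_⟩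
  · exact (plInterp_lipschitz hm q (le_of_lt hδ0) hqd)|>.weaken'
      (Real.toNNReal_le_toNNReal hlen)
  · intro t ht
    obtain ⟨j, hj, hnear⟩ := plInterp_near hm q ht
    exact ⟨q j, hqA j, hnear.trans (hqd j hj)⟩

end Aux

open Metric Filter
open scoped Topology

/-- **Compact sets of finite length and topological dimension 1 contain rectifiable
curves.** If `S ⊆ H` is compact with `H^1(S) < ∞` and `TD(S) = 1`, then `S` contains a
nondegenerate Lipschitz curve: the image of a Lipschitz map `[0,1] → H` with at least two
points. -/
theorem contains_rectifiable_curve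
    {H : Type*} [NormedAddCommGroup H] [InnerProductSpace ℝ H] [CompleteSpace H]
    [SecondCountableTopology H] [MeasurableSpace H] [BorelSpace H]
    (S : Set H) (hcpt : IsCompact S) (hfin : μH[(1 : ℝ)] S < ⊤)
    (hdim : CovDimEq S 1) :
    ∃ (f : ℝ → H) (K : ℝ≥0), LipschitzOnWith K f (Set.Icc 0 1) ∧
      f '' Set.Icc 0 1 ⊆ S ∧ (f '' Set.Icc 0 1).Nontrivial := by
  classical
  haveI : CompactSpace S := isCompact_iff_compactSpace.mp hcpt
  -- Step 1: find two points in the same connected component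
  have hpts : ∃ x y : S, x ≠ y ∧ y ∈ connectedComponent x := by
    by_contra hcon
    push_neg at hcon
    haveI : TotallyDisconnectedSpace S := by
      rw [totallyDisconnectedSpace_iff_connectedComponent_subsingleton]
      intro x a ha b hb
      by_contra hne
      have hba : b ∈ connectedComponent a := by
        rw [← connectedComponent_eq ha]; exact hb
      exact hcon a b hne hba
    have h0 := covDimLE_zero S
    have := hdim.2 0 h0
    omega
  obtain ⟨x, y, hxy, hycc⟩ := hpts
  -- Step 2: the component as a subset of H
  set C : Set H := Subtype.val '' (connectedComponent x : Set S) with hC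
  have hCpre : IsPreconnected C :=
    isPreconnected_connectedComponent.image _ continuous_subtype_val.continuousOn
  have hCcpt : IsCompact C :=
    (isClosed_connectedComponent.isCompact).image continuous_subtype_val
  have hCcl : IsClosed C := hCcpt.isClosed
  have hCS : C ⊆ S := by rintro z ⟨w, -, rfl⟩; exact w.2
  have hfinC : μH[(1 : ℝ)] C ≠ ⊤ := ((measure_mono hCS).trans_lt hfin).ne
  have hx' : (x : H) ∈ C := ⟨x, mem_connectedComponent, rfl⟩
  have hy' : (y : H) ∈ C := ⟨y, hycc, rfl⟩
  have hne : (x : H) ≠ (y : H) := fun h => hxy (Subtype.coe_injective h)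
  set d : ℝ := dist (x : H) (y : H) with hd
  have hd0 : 0 < d := dist_pos.2 hne
  set K : ℝ≥0 := Real.toNNReal (4 * (μH[(1 : ℝ)] C).toReal) with hK
  -- Step 3: curves at scale δ n
  set δ : ℕ → ℝ := fun n => d / (n + 2) with hδdef
  have hδ0 : ∀ n, 0 < δ n := fun n => div_pos hd0 (by positivity)
  have hδd : ∀ n, δ n < d := by
    intro n
    rw [hδdef]
    rw [div_lt_iff₀ (by positivity : (0:ℝ) < (n:ℝ) + 2)]
    nlinarith [Nat.cast_nonneg (α := ℝ) n]
  have hcurve : ∀ n : ℕ, ∃ f : ℝ → H, LipschitzOnWith K f (Icc 0 1) ∧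
      f 0 = (x : H) ∧ f 1 = (y : H) ∧ ∀ t ∈ Icc (0:ℝ) 1, ∃ z ∈ C, dist (f t) z ≤ δ n :=
    fun n => exists_curve_near hCpre hCcl hfinC hx' hy' (hδ0 n) (hδd n)
  choose fs hlip hf0 hf1 hnear using hcurve
  have hδ_tendsto : Tendsto δ atTop (𝓝 0) := by
    rw [hδdef]
    apply Tendsto.div_atTop tendsto_const_nhds
    exact tendsto_atTop_add_const_right _ 2 tendsto_natCast_atTop_atTop
  -- Step 4: total boundedness of the union of curve images
  set T : Set H := ⋃ n, fs n '' Icc (0:ℝ) 1 with hT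
  have hTb : TotallyBounded T := by
    rw [Metric.totallyBounded_iff]
    intro ε hε
    obtain ⟨N, hN⟩ : ∃ N : ℕ, δ N < ε / 2 :=
      (hδ_tendsto.eventually_lt_const (by linarith : (0:ℝ) < ε / 2)).exists
    have hδN : ∀ n, N ≤ n → δ n < ε / 2 := by
      intro n hn
      refine lt_of_le_of_lt ?_ hN
      rw [hδdef]
      apply div_le_div_of_nonneg_left (le_of_lt hd0) (by positivity)
      exact_mod_cast (by omega : N + 2 ≤ n + 2)
    have hA : IsCompact ((⋃ n ∈ Finset.range (N + 1), fs n '' Icc (0:ℝ) 1) ∪ C) := by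
      refine IsCompact.union ?_ hCcpt
      apply (Finset.range (N+1)).isCompact_biUnion
      intro n _
      exact isCompact_Icc.image_of_continuousOn (hlip n).continuousOn
    obtain ⟨t, htfin, htcov⟩ := Metric.totallyBounded_iff.mp hA.totallyBounded (ε/2) (by linarith)
    refine ⟨t, htfin, ?_⟩
    rintro w hw
    rw [hT, mem_iUnion] at hw
    obtain ⟨n, u, hu, rfl⟩ := hw
    by_cases hn : n ≤ N
    · have : fs n u ∈ (⋃ n ∈ Finset.range (N + 1), fs n '' Icc (0:ℝ) 1) ∪ C :=
        Or.inl (mem_biUnion (Finset.mem_range.2 (by omega)) ⟨u, hu, rfl⟩)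
      obtain ⟨c, hc, hwc⟩ := mem_iUnion₂.1 (htcov this)
      exact mem_iUnion₂.2 ⟨c, hc, mem_ball.2 (lt_of_lt_of_le (mem_ball.1 hwc) (by linarith))⟩
    · obtain ⟨z, hzC, hz⟩ := hnear n u hu
      have : z ∈ (⋃ n ∈ Finset.range (N + 1), fs n '' Icc (0:ℝ) 1) ∪ C := Or.inr hzC
      obtain ⟨c, hc, hzc⟩ := mem_iUnion₂.1 (htcov this)
      refine mem_iUnion₂.2 ⟨c, hc, mem_ball.2 ?_⟩
      have h1 : dist (fs n u) z ≤ δ n := hz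
      have h2 : δ n < ε / 2 := hδN n (by omega)
      have h3 : dist z c < ε / 2 := mem_ball.1 hzc
      calc dist (fs n u) c ≤ dist (fs n u) z + dist z c := dist_triangle _ _ _
        _ < ε := by linarith
  -- Step 5: compact closure and ultrafilter limit
  have hTc : IsCompact (closure T) :=
    TotallyBounded.isCompact_of_isClosed hTb.closure isClosed_closure
  set U : Ultrafilter ℕ := Ultrafilter.of atTop with hU
  have hUle : (U : Filter ℕ) ≤ atTop := Ultrafilter.of_le atTop
  have hlim : ∀ t ∈ Icc (0:ℝ) 1, ∃ a, Tendsto (fun n => fs n t) (U : Filter ℕ) (𝓝 a) := by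
    intro t ht
    have hmem : ∀ n, fs n t ∈ closure T :=
      fun n => subset_closure (mem_iUnion.2 ⟨n, ⟨t, ht, rfl⟩⟩)
    obtain ⟨a, -, ha⟩ := hTc.ultrafilter_le_nhds (U.map fun n => fs n t)
      (by rw [le_principal_iff]; exact Filter.mem_map.2 (Filter.univ_mem' hmem))
    exact ⟨a, ha⟩
  set f : ℝ → H := fun t => if h : t ∈ Icc (0:ℝ) 1 then (hlim t h).choose else (x : H)
    with hfdef
  have hf : ∀ t (h : t ∈ Icc (0:ℝ) 1), Tendsto (fun n => fs n t) (U : Filter ℕ) (𝓝 (f t)) := by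
    intro t h
    rw [hfdef]
    simp only [dif_pos h]
    exact (hlim t h).choose_spec
  -- Lipschitz
  have hflip : LipschitzOnWith K f (Icc 0 1) := by
    rw [lipschitzOnWith_iff_dist_le_mul]
    intro s hs t ht
    have htd : Tendsto (fun n => dist (fs n s) (fs n t)) (U : Filter ℕ)
        (𝓝 (dist (f s) (f t))) := (hf s hs).dist (hf t ht)
    refine le_of_tendsto htd (Filter.Eventually.of_forall fun n => ?_)
    exact lipschitzOnWith_iff_dist_le_mul.1 (hlip n) s hs t ht
  -- image in C
  have hfC : ∀ t ∈ Icc (0:ℝ) 1, f t ∈ C := by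
    intro t ht
    have h1 : Tendsto (fun n => infDist (fs n t) C) (U : Filter ℕ)
        (𝓝 (infDist (f t) C)) :=
      ((continuous_infDist_pt C).tendsto _).comp (hf t ht)
    have h2 : Tendsto (fun n => infDist (fs n t) C) (U : Filter ℕ) (𝓝 0) := by
      apply tendsto_of_tendsto_of_tendsto_of_le_of_le (tendsto_const_nhds)
        (hδ_tendsto.mono_left hUle)
      · exact fun n => infDist_nonneg
      · intro n
        obtain ⟨z, hzC, hz⟩ := hnear n t ht
        exact (infDist_le_dist_of_mem hzC).trans hz
    have h3 : infDist (f t) C = 0 := tendsto_nhds_unique h1 h2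
    have hCne : C.Nonempty := ⟨_, hx'⟩
    rwa [← hCcl.mem_iff_infDist_zero hCne] at h3
  -- endpoints
  have hend0 : f 0 = (x : H) := by
    have h1 : Tendsto (fun n => fs n 0) (U : Filter ℕ) (𝓝 (f 0)) :=
      hf 0 ⟨le_rfl, zero_le_one⟩
    have h2 : Tendsto (fun n => fs n 0) (U : Filter ℕ) (𝓝 (x : H)) := by
      simp only [hf0]; exact tendsto_const_nhds
    exact tendsto_nhds_unique h1 h2
  have hend1 : f 1 = (y : H) := by
    have h1 : Tendsto (fun n => fs n 1) (U : Filter ℕ) (𝓝 (f 1)) :=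
      hf 1 ⟨zero_le_one, le_rfl⟩
    have h2 : Tendsto (fun n => fs n 1) (U : Filter ℕ) (𝓝 (y : H)) := by
      simp only [hf1]; exact tendsto_const_nhds
    exact tendsto_nhds_unique h1 h2
  refine ⟨f, K, hflip, ?_, ?_⟩
  · rintro w ⟨u, hu, rfl⟩
    exact hCS (hfC u hu)
  · exact ⟨(x : H), ⟨0, ⟨le_rfl, zero_le_one⟩, hend0⟩,
      (y : H), ⟨1, ⟨zero_le_one, le_rfl⟩, hend1⟩, hne⟩
end
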